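/- arXiv:2503.03605 — 7 statements merged into one kernel-verified Lean document; each statement's English description precedes it below -/
import Mathlib

section
/- Let V be an N-dimensional real Euclidean space and let R ⊆ V \ {0} satisfy: (i) R spans V, and (ii) for any α, β ∈ R, the quantity 2⟨α,β⟩/‖α‖² is an integer. Then R is a finite set. -/
open scoped RealInnerProductSpace

theorem stmt0 {V : Type*} [NormedAddCommGroup V] [InnerProductSpace ℝ V]
    [FiniteDimensional ℝ V]
    (R : Set V) (h0 : (0 : V) ∉ R)
    (hspan : Submodule.span ℝ R = ⊤)
    (hint : ∀ α ∈ R, ∀ β ∈ R, ∃ k : ℤ, 2 * ⟪α, β⟫ = (k : ℝ) * ‖α‖ ^ 2) :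
    R.Finite := by
  classical
  have hle : ⊤ ≤ Submodule.span ℝ R := hspan.ge
  set b := Module.Basis.ofSpan hle with hb
  haveI := FiniteDimensional.fintypeBasisIndex b
  have hbR : ∀ i, (b i : V) ∈ R := fun i => Module.Basis.ofSpan_subset hle ⟨i, rfl⟩
  have hbne : ∀ i, (b i : V) ≠ 0 := fun i h => h0 (h ▸ hbR i)
  have hnorm : ∀ i, (‖(b i : V)‖ : ℝ) ^ 2 ≠ 0 := fun i =>
    pow_ne_zero 2 (norm_ne_zero_iff.mpr (hbne i))
  -- the integer coordinates map
  set f : V → _ → ℤ := fun β i => round (2 * ⟪(b i : V), β⟫ / ‖(b i : V)‖ ^ 2) with hf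
  have hfk : ∀ β ∈ R, ∀ i, 2 * ⟪(b i : V), β⟫ = (f β i : ℝ) * ‖(b i : V)‖ ^ 2 := by
    intro β hβ i
    obtain ⟨k, hk⟩ := hint _ (hbR i) β hβ
    have hdiv : 2 * ⟪(b i : V), β⟫ / ‖(b i : V)‖ ^ 2 = (k : ℝ) := by
      rw [hk, mul_div_assoc, div_self (hnorm i), mul_one]
    have : f β i = k := by
      simp [hf, hdiv]
    rw [this, ← hk]
  -- injectivity on R
  have hinj : Set.InjOn f R := by
    intro β hβ β' hβ' heq
    apply ext_inner_left ℝ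
    intro v
    have hv := b.sum_repr v
    rw [← hv]
    simp only [sum_inner, real_inner_smul_left]
    refine Finset.sum_congr rfl fun i _ => ?_
    have h1 := hfk β hβ i
    have h2 := hfk β' hβ' i
    rw [heq] at h1
    have : ⟪(b i : V), β⟫ = ⟪(b i : V), β'⟫ := by linarith [h1, h2]
    rw [this]
  -- boundedness
  have hbound : ∀ β ∈ R, ∀ i, f β i ∈ Set.Icc (-4 : ℤ) 4 := by
    intro β hβ i
    obtain ⟨m, hm⟩ := hint β hβ _ (hbR i)
    have hk := hfk β hβ i
    set k := f β i with hkdef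
    set α := (b i : V)
    have hcomm : ⟪β, α⟫ = ⟪α, β⟫ := real_inner_comm _ _
    have hmul : (k : ℝ) * (m : ℝ) * (‖α‖ ^ 2 * ‖β‖ ^ 2) = 4 * ⟪α, β⟫ ^ 2 := by
      have h2 := hm
      rw [hcomm] at h2
      linear_combination (-(↑m * ‖β‖ ^ 2)) * hk - 2 * ⟪α, β⟫ * h2
    have hβne : β ≠ 0 := fun h => h0 (h ▸ hβ)
    have hα2 : (0:ℝ) < ‖α‖ ^ 2 := pow_pos (norm_pos_iff.mpr (hbne i)) 2
    have hβ2 : (0:ℝ) < ‖β‖ ^ 2 := pow_pos (norm_pos_iff.mpr hβne) 2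
    have hcs : ⟪α, β⟫ ^ 2 ≤ ‖α‖ ^ 2 * ‖β‖ ^ 2 := by
      have := abs_real_inner_le_norm α β
      nlinarith [abs_nonneg ⟪α, β⟫, le_abs_self ⟪α, β⟫, neg_abs_le ⟪α, β⟫]
    have hAB : (0:ℝ) < ‖α‖ ^ 2 * ‖β‖ ^ 2 := mul_pos hα2 hβ2
    have hkm_le : (k : ℝ) * (m : ℝ) ≤ 4 := by
      have h1 : (k : ℝ) * (m : ℝ) * (‖α‖ ^ 2 * ‖β‖ ^ 2) ≤ 4 * (‖α‖ ^ 2 * ‖β‖ ^ 2) := by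
        rw [hmul]; linarith
      exact le_of_mul_le_mul_right h1 hAB
    have hkm_nonneg : (0:ℝ) ≤ (k : ℝ) * (m : ℝ) := by
      have h1 : (0:ℝ) * (‖α‖ ^ 2 * ‖β‖ ^ 2) ≤ (k : ℝ) * (m : ℝ) * (‖α‖ ^ 2 * ‖β‖ ^ 2) := by
        rw [hmul, zero_mul]; positivity
      exact le_of_mul_le_mul_right h1 hAB
    have hkmZ_le : k * m ≤ 4 := by exact_mod_cast hkm_le
    have hkmZ_nonneg : 0 ≤ k * m := by exact_mod_cast hkm_nonneg
    have habs : |k| ≤ 4 := by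
      rcases eq_or_ne k 0 with h | h
      · simp [h]
      · have hmne : m ≠ 0 := by
          intro hm0
          have : ⟪α, β⟫ = 0 := by
            rw [hm0] at hm
            rw [hcomm] at hm
            push_cast at hm
            nlinarith
          apply h
          have : (k : ℝ) * ‖α‖ ^ 2 = 0 := by rw [← hk, this]; ring
          have : (k : ℝ) = 0 := by
            rcases mul_eq_zero.mp this with h' | h'
            · exact h'
            · exact absurd h' (ne_of_gt hα2)
          exact_mod_cast this
        have h1 : 1 ≤ |m| := Int.one_le_abs (by exact hmne)
        have h2 : 1 ≤ |k| := Int.one_le_abs (by exact h)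
        calc |k| = |k| * 1 := by ring
          _ ≤ |k| * |m| := by exact mul_le_mul_of_nonneg_left h1 (abs_nonneg k)
          _ = |k * m| := (abs_mul k m).symm
          _ = k * m := abs_of_nonneg hkmZ_nonneg
          _ ≤ 4 := hkmZ_le
    exact ⟨neg_le_of_abs_le habs, le_of_abs_le habs⟩
  -- conclude
  have hfin : (f '' R).Finite := by
    apply Set.Finite.subset (Set.Finite.pi fun _ => Set.finite_Icc (-4 : ℤ) 4)
    rintro _ ⟨β, hβ, rfl⟩
    intro i _
    exact hbound β hβ i
  exact Set.Finite.of_finite_image hfin hinj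
end

section
/- Let V be an N-dimensional Euclidean space and m : V → ℕ with m(0) = 0, nonempty finite support S(m) spanning V. Suppose the support Λ(m) of F(m) = Π_{s∈S(m)}(1 − e^s)^{m(s)} lies on a sphere: there exist c ∈ V and r > 0 with ‖λ − c‖ = r for all λ ∈ Λ(m). Then for every a ∈ S(m): ℝa ∩ S(m) = {a} and m(a) = 1. -/
open scoped RealInnerProductSpace

set_option linter.unusedSectionVars false
namespace Stmt6Aux

open AddMonoidAlgebra

variable {V : Type*} [AddCommGroup V] [Module ℝ V]

/-- `p` has unique `ξ`-minimal support element `μ`, with nonzero coefficient. -/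
def MinAt (ξ : V →ₗ[ℝ] ℝ) (p : AddMonoidAlgebra ℤ V) (μ : V) : Prop :=
  p.coeff μ ≠ 0 ∧ ∀ v ∈ p.coeff.support, ξ μ ≤ ξ v ∧ (ξ v = ξ μ → v = μ)

theorem coeff_mul_of_unique {p q : AddMonoidAlgebra ℤ V} {μ ν : V}
    (h : ∀ u ∈ p.coeff.support, ∀ x ∈ q.coeff.support, u + x = μ + ν → x = ν)
    (hμ : p.coeff μ ≠ 0) :
    (p * q).coeff (μ + ν) = p.coeff μ * q.coeff ν := by
  classical
  rw [AddMonoidAlgebra.mul_apply]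
  rw [Finsupp.sum]
  have hμs : μ ∈ p.coeff.support := Finsupp.mem_support_iff.mpr hμ
  rw [Finset.sum_eq_single_of_mem μ hμs]
  · rw [Finsupp.sum]
    by_cases hν : ν ∈ q.coeff.support
    · rw [Finset.sum_eq_single_of_mem ν hν]
      · simp
      · intro x hx hxν
        rw [if_neg]
        intro hcon
        exact hxν (add_left_cancel hcon)
    · have hqν : q.coeff ν = 0 := Finsupp.notMem_support_iff.mp hν
      rw [hqν, mul_zero]
      apply Finset.sum_eq_zero
      intro x hx
      rw [if_neg]
      intro hcon
      exact hν ((add_left_cancel hcon) ▸ hx)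
  · intro u hu hune
    rw [Finsupp.sum]
    apply Finset.sum_eq_zero
    intro x hx
    rw [if_neg]
    intro hcon
    have hxν := h u hu x hx hcon
    subst hxν
    exact hune (add_right_cancel hcon)

theorem MinAt.mul {ξ : V →ₗ[ℝ] ℝ} {p q : AddMonoidAlgebra ℤ V} {μ ν : V}
    (hp : MinAt ξ p μ) (hq : MinAt ξ q ν) :
    MinAt ξ (p * q) (μ + ν) ∧ (p * q).coeff (μ + ν) = p.coeff μ * q.coeff ν := by
  classical
  obtain ⟨hp0, hpmin⟩ := hp
  obtain ⟨hq0, hqmin⟩ := hq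
  have huniq : ∀ u ∈ p.coeff.support, ∀ x ∈ q.coeff.support, u + x = μ + ν → x = ν := by
    intro u hu x hx hsum
    have h1 := hpmin u hu
    have h2 := hqmin x hx
    have hsums : ξ u + ξ x = ξ μ + ξ ν := by
      rw [← map_add, ← map_add, hsum]
    exact h2.2 (by linarith [h1.1, h2.1])
  have hco : (p * q).coeff (μ + ν) = p.coeff μ * q.coeff ν := coeff_mul_of_unique huniq hp0
  refine ⟨⟨by rw [hco]; exact mul_ne_zero hp0 hq0, ?_⟩, hco⟩
  intro v hv
  obtain ⟨u, hu, x, hx, rfl⟩ := Finset.mem_add.mp (AddMonoidAlgebra.support_coeff_mul_subset p q hv)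
  have h1 := hpmin u hu
  have h2 := hqmin x hx
  constructor
  · rw [map_add, map_add]; exact add_le_add h1.1 h2.1
  · intro heq
    rw [map_add, map_add] at heq
    have hxν : ξ x = ξ ν := by linarith [h1.1, h2.1]
    have huμ : ξ u = ξ μ := by linarith
    rw [h1.2 huμ, h2.2 hxν]

theorem minAt_one (ξ : V →ₗ[ℝ] ℝ) : MinAt ξ (1 : AddMonoidAlgebra ℤ V) 0 := by
  constructor
  · simp [AddMonoidAlgebra.one_def]
  · intro v hv
    have hv' : v ∈ (Finsupp.single (0 : V) (1 : ℤ)).support := by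
      rwa [AddMonoidAlgebra.one_def, AddMonoidAlgebra.coeff_single] at hv
    have : v = 0 := Finset.mem_singleton.mp (Finsupp.support_single_subset hv')
    subst this
    simp

theorem support_binom (s : V) :
    ∀ v ∈ ((1 : AddMonoidAlgebra ℤ V) - AddMonoidAlgebra.single s 1).coeff.support,
      v = 0 ∨ v = s := by
  classical
  intro v hv
  by_contra hcon
  push_neg at hcon
  apply Finsupp.mem_support_iff.mp hv
  show ((1 : AddMonoidAlgebra ℤ V) - AddMonoidAlgebra.single s 1 : AddMonoidAlgebra ℤ V).coeff v = 0
  rw [AddMonoidAlgebra.coeff_sub, Finsupp.sub_apply, AddMonoidAlgebra.one_def, AddMonoidAlgebra.coeff_single, AddMonoidAlgebra.coeff_single]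
  rw [Finsupp.single_apply, Finsupp.single_apply, if_neg (fun h => hcon.1 h.symm),
    if_neg (fun h => hcon.2 h.symm)]
  ring

theorem coeff_binom_zero {s : V} (hs : s ≠ 0) :
    ((1 : AddMonoidAlgebra ℤ V) - AddMonoidAlgebra.single s 1 : AddMonoidAlgebra ℤ V).coeff 0 = 1 := by
  classical
  rw [AddMonoidAlgebra.coeff_sub, Finsupp.sub_apply, AddMonoidAlgebra.one_def, AddMonoidAlgebra.coeff_single, AddMonoidAlgebra.coeff_single, Finsupp.single_apply, Finsupp.single_apply,
    if_pos rfl, if_neg hs]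
  ring

theorem coeff_binom_s (s : V) (hs : s ≠ 0) :
    ((1 : AddMonoidAlgebra ℤ V) - AddMonoidAlgebra.single s 1 : AddMonoidAlgebra ℤ V).coeff s = -1 := by
  classical
  rw [AddMonoidAlgebra.coeff_sub, Finsupp.sub_apply, AddMonoidAlgebra.one_def, AddMonoidAlgebra.coeff_single, AddMonoidAlgebra.coeff_single, Finsupp.single_apply, Finsupp.single_apply,
    if_neg (fun h => hs h.symm), if_pos rfl]
  ring

theorem minAt_binom {ξ : V →ₗ[ℝ] ℝ} {s : V} (hs : ξ s ≠ 0) :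
    ∃ μ, MinAt ξ ((1 : AddMonoidAlgebra ℤ V) - AddMonoidAlgebra.single s 1) μ ∧
      ξ μ = min (ξ s) 0 := by
  have hs0 : s ≠ 0 := by rintro rfl; simp at hs
  rcases lt_or_gt_of_ne hs with hneg | hpos
  · refine ⟨s, ⟨by rw [coeff_binom_s s hs0]; norm_num, ?_⟩, by rw [min_eq_left hneg.le]⟩
    intro v hv
    rcases support_binom s v hv with rfl | rfl
    · exact ⟨by simpa using hneg.le, fun h => absurd h.symm (by simpa using hs)⟩
    · exact ⟨le_refl _, fun _ => rfl⟩
  · refine ⟨0, ⟨by rw [coeff_binom_zero hs0]; norm_num, ?_⟩, by rw [min_eq_right hpos.le, map_zero]⟩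
    intro v hv
    rcases support_binom s v hv with rfl | rfl
    · exact ⟨le_refl _, fun _ => rfl⟩
    · refine ⟨by simpa using hpos.le, fun h => absurd h (by simpa using ne_of_gt hpos)⟩

theorem MinAt.pow {ξ : V →ₗ[ℝ] ℝ} {p : AddMonoidAlgebra ℤ V} {μ : V} (hp : MinAt ξ p μ) :
    ∀ k : ℕ, MinAt ξ (p ^ k) (k • μ)
  | 0 => by simpa using minAt_one ξ
  | (k + 1) => by
      have h := (MinAt.mul (MinAt.pow hp k) hp).1
      rw [← pow_succ] at h
      rwa [succ_nsmul]

theorem minAt_prod (ξ : V →ₗ[ℝ] ℝ) (T : Finset V) (n : V → ℕ)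
    (hT : ∀ s ∈ T, ξ s ≠ 0) :
    ∃ μ, MinAt ξ (∏ s ∈ T, ((1 : AddMonoidAlgebra ℤ V) - AddMonoidAlgebra.single s 1) ^ n s) μ ∧
      ξ μ = ∑ s ∈ T, (n s : ℝ) * min (ξ s) 0 := by
  classical
  induction T using Finset.induction_on with
  | empty => exact ⟨0, by simpa using minAt_one ξ, by simp⟩
  | @insert s T hsT ih =>
    obtain ⟨μT, hminT, hvalT⟩ := ih (fun t ht => hT t (Finset.mem_insert_of_mem ht))
    obtain ⟨μs, hmins, hvals⟩ := minAt_binom (hT s (Finset.mem_insert_self s T))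
    refine ⟨n s • μs + μT, ?_, ?_⟩
    · rw [Finset.prod_insert hsT]
      exact (MinAt.mul (hmins.pow (n s)) hminT).1
    · rw [Finset.sum_insert hsT, map_add, ← hvalT, ← hvals]
      congr 1
      rw [map_nsmul]
      simp [nsmul_eq_mul]

theorem support_subset_submodule (T : Finset V) (n : V → ℕ) (M : Submodule ℝ V)
    (hT : ∀ s ∈ T, s ∈ M) :
    ∀ v ∈ (∏ s ∈ T,
        ((1 : AddMonoidAlgebra ℤ V) - AddMonoidAlgebra.single s 1) ^ n s).coeff.support, v ∈ M := by
  classical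
  have hmul : ∀ p q : AddMonoidAlgebra ℤ V, (∀ v ∈ p.coeff.support, v ∈ M) →
      (∀ v ∈ q.coeff.support, v ∈ M) → ∀ v ∈ (p * q).coeff.support, v ∈ M := by
    intro p q hp hq v hv
    obtain ⟨u, hu, x, hx, rfl⟩ := Finset.mem_add.mp (AddMonoidAlgebra.support_coeff_mul_subset p q hv)
    exact M.add_mem (hp u hu) (hq x hx)
  have hone : ∀ v ∈ (1 : AddMonoidAlgebra ℤ V).coeff.support, v ∈ M := by
    intro v hv
    have hv' : v ∈ (Finsupp.single (0 : V) (1 : ℤ)).support := by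
      rwa [AddMonoidAlgebra.one_def, AddMonoidAlgebra.coeff_single] at hv
    have : v = 0 := Finset.mem_singleton.mp (Finsupp.support_single_subset hv')
    subst this; exact M.zero_mem
  induction T using Finset.induction_on with
  | empty => simpa using hone
  | @insert s T hsT ih =>
    rw [Finset.prod_insert hsT]
    apply hmul
    · have hsM := hT s (Finset.mem_insert_self s T)
      have hbase : ∀ v ∈ ((1 : AddMonoidAlgebra ℤ V) -
          AddMonoidAlgebra.single s 1).coeff.support, v ∈ M := by
        intro v hv
        rcases support_binom s v hv with rfl | rfl
        · exact M.zero_mem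
        · exact hsM
      induction n s with
      | zero => simpa using hone
      | succ k ihk =>
        rw [pow_succ]
        exact hmul _ _ ihk hbase
    · exact ih (fun t ht => hT t (Finset.mem_insert_of_mem ht))

theorem quad_three {A B C t₁ t₂ t₃ : ℝ} (hA : A ≠ 0)
    (h₁ : A * t₁ ^ 2 + B * t₁ + C = 0) (h₂ : A * t₂ ^ 2 + B * t₂ + C = 0)
    (h₃ : A * t₃ ^ 2 + B * t₃ + C = 0)
    (h12 : t₁ ≠ t₂) (h13 : t₁ ≠ t₃) : t₂ = t₃ := by
  have e12 : A * (t₁ + t₂) + B = 0 := by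
    have h : (t₁ - t₂) * (A * (t₁ + t₂) + B) = 0 := by linear_combination h₁ - h₂
    exact (mul_eq_zero.mp h).resolve_left (sub_ne_zero.mpr h12)
  have e13 : A * (t₁ + t₃) + B = 0 := by
    have h : (t₁ - t₃) * (A * (t₁ + t₃) + B) = 0 := by linear_combination h₁ - h₃
    exact (mul_eq_zero.mp h).resolve_left (sub_ne_zero.mpr h13)
  have h : A * (t₂ - t₃) = 0 := by linear_combination e12 - e13
  have := (mul_eq_zero.mp h).resolve_left hA
  linarith [sub_eq_zero.mp this]


theorem exists_perp {V : Type*} [NormedAddCommGroup V] [InnerProductSpace ℝ V]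
    {a : V} (ha : a ≠ 0) (T : Finset V) (hT : ∀ s ∈ T, s ∉ Submodule.span ℝ {a}) :
    ∃ w : V, ⟪a, w⟫ = 0 ∧ ∀ s ∈ T, ⟪s, w⟫ ≠ 0 := by
  classical
  induction T using Finset.induction_on with
  | empty => exact ⟨0, inner_zero_right a, by simp⟩
  | @insert s₀ T hs₀T ih =>
    obtain ⟨w, hw1, hw2⟩ := ih (fun s hs => hT s (Finset.mem_insert_of_mem hs))
    set w' : V := s₀ - (⟪a, s₀⟫ / ⟪a, a⟫) • a with hw'def
    have haa : ⟪a, a⟫ ≠ 0 := inner_self_ne_zero.mpr ha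
    have hw'a : ⟪a, w'⟫ = 0 := by
      rw [hw'def, inner_sub_right, real_inner_smul_right]
      field_simp
      ring
    have hw'0 : w' ≠ 0 := by
      intro h
      apply hT s₀ (Finset.mem_insert_self s₀ T)
      rw [Submodule.mem_span_singleton]
      exact ⟨⟪a, s₀⟫ / ⟪a, a⟫, by rw [eq_comm, ← sub_eq_zero]; exact h⟩
    have hs₀w' : ⟪s₀, w'⟫ ≠ 0 := by
      have hdecomp : s₀ = w' + (⟪a, s₀⟫ / ⟪a, a⟫) • a := by
        rw [hw'def]; abel
      have hval : ⟪s₀, w'⟫ = ⟪w', w'⟫ := by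
        nth_rewrite 1 [hdecomp]
        rw [inner_add_left, real_inner_smul_left, hw'a]
        ring
      rw [hval]
      exact inner_self_ne_zero.mpr hw'0
    obtain ⟨ε, hε⟩ := Infinite.exists_notMem_finset
      ((insert s₀ T).image fun s => -(⟪s, w⟫ / ⟪s, w'⟫))
    refine ⟨w + ε • w', by rw [inner_add_right, real_inner_smul_right, hw1, hw'a]; ring, ?_⟩
    intro s hs
    rw [inner_add_right, real_inner_smul_right]
    by_cases hsw' : ⟪s, w'⟫ = 0
    · have hsT : s ∈ T := by
        rcases Finset.mem_insert.mp hs with rfl | h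
        · exact absurd hsw' hs₀w'
        · exact h
      rw [hsw', mul_zero, add_zero]
      exact hw2 s hsT
    · intro hcon
      apply hε
      refine Finset.mem_image.mpr ⟨s, hs, ?_⟩
      field_simp
      linarith [hcon]


/-- The monoid hom `V → (ℝ[ε])ˣ`-ish: `v ↦ 1 + η v • ε`. -/
noncomputable def Phi {V : Type*} [AddCommGroup V] [Module ℝ V] (η : V →ₗ[ℝ] ℝ) :
    Multiplicative V →* DualNumber ℝ where
  toFun v := TrivSqZeroExt.inl 1 + TrivSqZeroExt.inr (η (Multiplicative.toAdd v))
  map_one' := by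
    simp
  map_mul' x y := by
    apply TrivSqZeroExt.ext <;>
      simp [op_smul_eq_smul, add_comm]

@[simp] theorem Phi_fst {V : Type*} [AddCommGroup V] [Module ℝ V] (η : V →ₗ[ℝ] ℝ)
    (v : Multiplicative V) : TrivSqZeroExt.fst (Phi η v) = 1 := by
  simp [Phi]

@[simp] theorem Phi_snd {V : Type*} [AddCommGroup V] [Module ℝ V] (η : V →ₗ[ℝ] ℝ)
    (v : Multiplicative V) : TrivSqZeroExt.snd (Phi η v) = η (Multiplicative.toAdd v) := by
  simp [Phi]

end Stmt6Aux

/-- `F(m) = ∏_{s ∈ S(m)} (1 - e^s)^{m(s)}` in the group ring `ℤ[V]`. -/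
noncomputable def Fm {V : Type*} [AddCommGroup V] (m : V → ℕ)
    (hfin : (Function.support m).Finite) : AddMonoidAlgebra ℤ V :=
  ∏ s ∈ hfin.toFinset, ((1 : AddMonoidAlgebra ℤ V) - AddMonoidAlgebra.single s 1) ^ m s

set_option maxHeartbeats 1000000 in
theorem stmt6 {V : Type*} [NormedAddCommGroup V] [InnerProductSpace ℝ V]
    [FiniteDimensional ℝ V]
    (m : V → ℕ) (h0 : m 0 = 0) (hfin : (Function.support m).Finite)
    (hne : (Function.support m).Nonempty)
    (hspan : Submodule.span ℝ (Function.support m) = ⊤)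
    (hsphere : ∃ c : V, ∃ r : ℝ, 0 < r ∧ ∀ l ∈ (Fm m hfin).coeff.support, ‖l - c‖ = r) :
    ∀ a ∈ Function.support m,
      ({v | ∃ t : ℝ, v = t • a} ∩ Function.support m = {a}) ∧ m a = 1 := by
  classical
  obtain ⟨c, r, hr, hsph⟩ := hsphere
  intro a ha
  have hma0 : m a ≠ 0 := ha
  have ha0 : a ≠ 0 := by rintro rfl; exact hma0 h0
  set L : Submodule ℝ V := Submodule.span ℝ {a} with hLdef
  have haL : a ∈ L := Submodule.mem_span_singleton_self a
  set S : Finset V := hfin.toFinset with hSdef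
  have haS : a ∈ S := hfin.mem_toFinset.mpr ha
  set S0 : Finset V := S.filter (fun s => s ∈ L) with hS0def
  set S1 : Finset V := S.filter (fun s => s ∉ L) with hS1def
  set P : AddMonoidAlgebra ℤ V :=
    ∏ s ∈ S0, ((1 : AddMonoidAlgebra ℤ V) - AddMonoidAlgebra.single s 1) ^ m s with hPdef
  set Q : AddMonoidAlgebra ℤ V :=
    ∏ s ∈ S1, ((1 : AddMonoidAlgebra ℤ V) - AddMonoidAlgebra.single s 1) ^ m s with hQdef
  have hFPQ : Fm m hfin = P * Q := by
    rw [Fm, hPdef, hQdef]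
    exact (Finset.prod_filter_mul_prod_filter_not S (fun s => s ∈ L) _).symm
  have haS0 : a ∈ S0 := Finset.mem_filter.mpr ⟨haS, haL⟩
  have hS0supp : ∀ s ∈ S0, m s ≠ 0 := fun s hs =>
    hfin.mem_toFinset.mp (Finset.mem_filter.mp hs).1
  have hS0ne0 : ∀ s ∈ S0, s ≠ 0 := by
    intro s hs h; exact hS0supp s hs (h ▸ h0)
  set η : V →ₗ[ℝ] ℝ := innerₗ V a with hηdef
  have hηa : (0 : ℝ) < η a := by
    have h9 : η a = ‖a‖ ^ 2 := real_inner_self_eq_norm_sq a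
    rw [h9]
    exact pow_pos (norm_pos_iff.mpr ha0) 2
  have hS0η : ∀ s ∈ S0, η s ≠ 0 := by
    intro s hs
    obtain ⟨t, ht⟩ := Submodule.mem_span_singleton.mp (Finset.mem_filter.mp hs).2
    have ht0 : t ≠ 0 := by rintro rfl; rw [zero_smul] at ht; exact hS0ne0 s hs ht.symm
    have hst : η s = t * η a := by rw [← ht, map_smul]; simp
    rw [hst]
    exact mul_ne_zero ht0 (ne_of_gt hηa)
  obtain ⟨μ₁, hmin1, hval1⟩ := Stmt6Aux.minAt_prod η S0 m hS0η
  obtain ⟨μ₂, hmin2, hval2⟩ := Stmt6Aux.minAt_prod (-η) S0 m (fun s hs => by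
    simpa using hS0η s hs)
  have hημ : η μ₁ < η μ₂ := by
    have h3 : -(η μ₂) = ∑ s ∈ S0, (m s : ℝ) * min (-(η s)) 0 := by
      simpa using hval2
    have h2 : η μ₂ = ∑ s ∈ S0, (m s : ℝ) * max (η s) 0 := by
      have h4 : ∀ s : V, min (-(η s)) (0 : ℝ) = -(max (η s) 0) := by
        intro s
        rw [← neg_zero, min_neg_neg, neg_zero]
      calc η μ₂ = -∑ s ∈ S0, (m s : ℝ) * min (-(η s)) 0 := by rw [← h3]; ring
        _ = ∑ s ∈ S0, (m s : ℝ) * max (η s) 0 := by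
            rw [← Finset.sum_neg_distrib]
            apply Finset.sum_congr rfl
            intro s _
            rw [h4 s]; ring
    rw [hval1, h2]
    apply Finset.sum_lt_sum
    · intro s _
      exact mul_le_mul_of_nonneg_left min_le_max (Nat.cast_nonneg _)
    · refine ⟨a, haS0, ?_⟩
      rw [min_eq_right hηa.le, max_eq_left hηa.le, mul_zero]
      have h1m : (1 : ℝ) ≤ (m a : ℝ) := by exact_mod_cast Nat.one_le_iff_ne_zero.mpr hma0
      exact mul_pos (by linarith) hηa
  have hμ12 : μ₁ ≠ μ₂ := by rintro rfl; exact lt_irrefl _ hημ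
  obtain ⟨w, hwa, hwS1⟩ := Stmt6Aux.exists_perp ha0 S1
    (fun s hs => (Finset.mem_filter.mp hs).2)
  set ξ : V →ₗ[ℝ] ℝ := innerₗ V w with hξdef
  have hξL : ∀ v ∈ L, ξ v = 0 := by
    intro v hv
    obtain ⟨t, ht⟩ := Submodule.mem_span_singleton.mp hv
    have hwa' : ξ a = 0 := by
      show ⟪w, a⟫ = 0
      rw [real_inner_comm]; exact hwa
    rw [← ht, map_smul]
    simp [hwa']
  have hS1ξ : ∀ s ∈ S1, ξ s ≠ 0 := by
    intro s hs h
    apply hwS1 s hs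
    rw [real_inner_comm]; exact h
  obtain ⟨ν, hQmin, -⟩ := Stmt6Aux.minAt_prod ξ S1 m hS1ξ
  have hPsuppL : ∀ v ∈ P.coeff.support, v ∈ L :=
    Stmt6Aux.support_subset_submodule S0 m L (fun s hs => (Finset.mem_filter.mp hs).2)
  have hkey : ∀ v ∈ P.coeff.support, v + ν ∈ (Fm m hfin).coeff.support := by
    intro v hv
    have hco : (P * Q).coeff (v + ν) = P.coeff v * Q.coeff ν := by
      apply Stmt6Aux.coeff_mul_of_unique
      · intro u hu x hx hsum
        have hξu : ξ u = 0 := hξL u (hPsuppL u hu)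
        have hξv : ξ v = 0 := hξL v (hPsuppL v hv)
        have hsums : ξ u + ξ x = ξ v + ξ ν := by rw [← map_add, ← map_add, hsum]
        have h2 := hQmin.2 x hx
        exact h2.2 (by linarith [h2.1])
      · exact Finsupp.mem_support_iff.mp hv
    rw [hFPQ]
    apply Finsupp.mem_support_iff.mpr
    rw [hco]
    exact mul_ne_zero (Finsupp.mem_support_iff.mp hv) hQmin.1
  have hquad : ∀ v ∈ P.coeff.support, ∀ t : ℝ, t • a = v →
      ‖a‖ ^ 2 * t ^ 2 + (2 * ⟪a, ν - c⟫) * t + (‖ν - c‖ ^ 2 - r ^ 2) = 0 := by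
    intro v hv t hvt
    have hs := hsph _ (hkey v hv)
    have heq : ‖t • a + (ν - c)‖ = r := by
      have h5 : v + ν - c = t • a + (ν - c) := by rw [← hvt]; abel
      rw [← h5]; exact hs
    have hsq : ‖t • a + (ν - c)‖ ^ 2 = r ^ 2 := by rw [heq]
    rw [norm_add_sq_real, norm_smul, real_inner_smul_left, mul_pow, Real.norm_eq_abs, sq_abs] at hsq
    linear_combination hsq
  have hA : ‖a‖ ^ 2 ≠ 0 := pow_ne_zero 2 (norm_ne_zero_iff.mpr ha0)
  have hμ₁P : μ₁ ∈ P.coeff.support := Finsupp.mem_support_iff.mpr hmin1.1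
  have hμ₂P : μ₂ ∈ P.coeff.support := Finsupp.mem_support_iff.mpr hmin2.1
  obtain ⟨t₁, ht₁⟩ := Submodule.mem_span_singleton.mp (hPsuppL μ₁ hμ₁P)
  obtain ⟨t₂, ht₂⟩ := Submodule.mem_span_singleton.mp (hPsuppL μ₂ hμ₂P)
  have ht12 : t₁ ≠ t₂ := by rintro rfl; exact hμ12 (by rw [← ht₁, ← ht₂])
  have hsupp2 : ∀ v ∈ P.coeff.support, v = μ₁ ∨ v = μ₂ := by
    intro v hv
    obtain ⟨t, ht⟩ := Submodule.mem_span_singleton.mp (hPsuppL v hv)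
    by_contra hcon
    push_neg at hcon
    have htn1 : t ≠ t₁ := by rintro rfl; exact hcon.1 (by rw [← ht, ht₁])
    have htn2 : t ≠ t₂ := by rintro rfl; exact hcon.2 (by rw [← ht, ht₂])
    exact ht12 (Stmt6Aux.quad_three hA (hquad v hv t ht) (hquad μ₁ hμ₁P t₁ ht₁)
      (hquad μ₂ hμ₂P t₂ ht₂) htn1 htn2)
  set Mt : ℕ := ∑ s ∈ S0, m s with hMtdef
  have hmaM : m a ≤ Mt := Finset.single_le_sum (f := m) (fun i _ => Nat.zero_le _) haS0
  have hMt1 : Mt ≤ 1 := by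
    by_contra hM2
    push_neg at hM2
    set Ψ := AddMonoidAlgebra.lift ℤ (DualNumber ℝ) V (Stmt6Aux.Phi η) with hΨdef
    have hbin : ∀ s : V, Ψ ((1 : AddMonoidAlgebra ℤ V) - AddMonoidAlgebra.single s 1)
        = TrivSqZeroExt.inr (-(η s)) := by
      intro s
      rw [map_sub, map_one, AddMonoidAlgebra.lift_single]
      apply TrivSqZeroExt.ext <;> simp [Stmt6Aux.Phi]
    obtain ⟨k, hk⟩ : ∃ k, m a = k + 1 :=
      ⟨m a - 1, (Nat.succ_pred_eq_of_pos (Nat.pos_of_ne_zero hma0)).symm⟩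
    set P' : AddMonoidAlgebra ℤ V :=
      ((1 : AddMonoidAlgebra ℤ V) - AddMonoidAlgebra.single a 1) ^ k *
        ∏ s ∈ S0.erase a, ((1 : AddMonoidAlgebra ℤ V) - AddMonoidAlgebra.single s 1) ^ m s
      with hP'def
    have hPfac : P = ((1 : AddMonoidAlgebra ℤ V) - AddMonoidAlgebra.single a 1) * P' := by
      rw [hPdef, hP'def, ← Finset.mul_prod_erase S0 _ haS0, hk, pow_succ]
      ring
    set ρ : AddMonoidAlgebra ℤ V →+* ℝ :=
      ((TrivSqZeroExt.fstHom ℝ ℝ ℝ).toRingHom.comp Ψ.toRingHom) with hρdef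
    have hρb : ∀ s : V, ρ ((1 : AddMonoidAlgebra ℤ V) - AddMonoidAlgebra.single s 1) = 0 := by
      intro s
      show TrivSqZeroExt.fst (Ψ ((1 : AddMonoidAlgebra ℤ V) - AddMonoidAlgebra.single s 1)) = 0
      rw [hbin s, TrivSqZeroExt.fst_inr]
    have hρP' : ρ P' = 0 := by
      rw [hP'def, map_mul, map_pow, map_prod, hρb a]
      by_cases hk0 : k = 0
      · subst hk0
        rw [pow_zero, one_mul]
        have hsum : ∑ s ∈ S0.erase a, m s ≠ 0 := by
          have := Finset.add_sum_erase S0 m haS0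
          omega
        obtain ⟨s', hs', hms'⟩ : ∃ s' ∈ S0.erase a, m s' ≠ 0 := by
          by_contra hno
          push_neg at hno
          exact hsum (Finset.sum_eq_zero hno)
        apply Finset.prod_eq_zero hs'
        rw [map_pow, hρb s', zero_pow hms']
      · rw [zero_pow hk0, zero_mul]
    have hΨP'eq : Ψ P' = TrivSqZeroExt.inr (TrivSqZeroExt.snd (Ψ P')) := by
      have h5 : TrivSqZeroExt.fst (Ψ P') = 0 := hρP'
      conv_lhs => rw [← TrivSqZeroExt.inl_fst_add_inr_snd_eq (Ψ P')]
      rw [h5, TrivSqZeroExt.inl_zero, zero_add]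
    have hΨP : Ψ P = 0 := by
      rw [hPfac, map_mul, hbin a, hΨP'eq, TrivSqZeroExt.inr_mul_inr]
    obtain ⟨c₁, hc₁⟩ : ∃ z : ℤ, P.coeff μ₁ = z := ⟨_, rfl⟩
    obtain ⟨c₂, hc₂⟩ : ∃ z : ℤ, P.coeff μ₂ = z := ⟨_, rfl⟩
    have hPsum : P = AddMonoidAlgebra.single μ₁ c₁ + AddMonoidAlgebra.single μ₂ c₂ := by
      ext v
      rw [AddMonoidAlgebra.coeff_add, Finsupp.add_apply, AddMonoidAlgebra.coeff_single, AddMonoidAlgebra.coeff_single,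
        Finsupp.single_apply, Finsupp.single_apply]
      by_cases h1 : μ₁ = v
      · subst h1
        rw [if_pos rfl, if_neg (fun h => hμ12 h.symm), add_zero, ← hc₁]
      · by_cases h2 : μ₂ = v
        · subst h2
          rw [if_pos rfl, if_neg h1, zero_add, ← hc₂]
        · rw [if_neg h1, if_neg h2, add_zero]
          by_contra hP0
          rcases hsupp2 v (Finsupp.mem_support_iff.mpr hP0) with rfl | rfl
          · exact h1 rfl
          · exact h2 rfl
    have h0' : (0 : DualNumber ℝ) =
        c₁ • Stmt6Aux.Phi η (Multiplicative.ofAdd μ₁) +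
          c₂ • Stmt6Aux.Phi η (Multiplicative.ofAdd μ₂) := by
      rw [← hΨP, hPsum, map_add, AddMonoidAlgebra.lift_single, AddMonoidAlgebra.lift_single]
    have hfst0 : ((c₁ : ℤ) : ℝ) + ((c₂ : ℤ) : ℝ) = 0 := by
      have h6 := congrArg (TrivSqZeroExt.fst (R := ℝ) (M := ℝ)) h0'
      simpa [TrivSqZeroExt.fst_smul, zsmul_eq_mul] using h6.symm
    have hsnd0 : ((c₁ : ℤ) : ℝ) * η μ₁ + ((c₂ : ℤ) : ℝ) * η μ₂ = 0 := by
      have h6 := congrArg (TrivSqZeroExt.snd (R := ℝ) (M := ℝ)) h0'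
      simpa [TrivSqZeroExt.snd_smul, zsmul_eq_mul] using h6.symm
    have hc1 : ((c₁ : ℤ) : ℝ) ≠ 0 := Int.cast_ne_zero.mpr (hc₁ ▸ hmin1.1)
    have hηeq : η μ₁ = η μ₂ := by
      have hc2 : ((c₂ : ℤ) : ℝ) = -((c₁ : ℤ) : ℝ) := by linarith
      rw [hc2] at hsnd0
      have h7 : ((c₁ : ℤ) : ℝ) * (η μ₁ - η μ₂) = 0 := by ring_nf; ring_nf at hsnd0; linarith [hsnd0]
      have := (mul_eq_zero.mp h7).resolve_left hc1
      linarith [sub_eq_zero.mp this]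
    exact absurd hηeq (ne_of_lt hημ)
  have hMt : Mt = 1 := le_antisymm hMt1 (le_trans (Nat.one_le_iff_ne_zero.mpr hma0) hmaM)
  have hma1 : m a = 1 := le_antisymm (hMt ▸ hmaM) (Nat.one_le_iff_ne_zero.mpr hma0)
  have hS0a : ∀ s ∈ S0, s = a := by
    intro s hs
    by_contra hne
    have h1 : ∑ x ∈ S0.erase a, m x = 0 := by
      have := Finset.add_sum_erase S0 m haS0
      omega
    have hserase : s ∈ S0.erase a := Finset.mem_erase.mpr ⟨hne, hs⟩
    have hms : m s = 0 := by
      have h8 := Finset.single_le_sum (f := m) (fun i _ => Nat.zero_le _) hserase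
      omega
    exact hS0supp s hs hms
  refine ⟨?_, hma1⟩
  ext x
  simp only [Set.mem_inter_iff, Set.mem_setOf_eq, Set.mem_singleton_iff]
  constructor
  · rintro ⟨⟨t, rfl⟩, hxm⟩
    apply hS0a
    refine Finset.mem_filter.mpr ⟨hfin.mem_toFinset.mpr hxm, ?_⟩
    exact Submodule.mem_span_singleton.mpr ⟨t, rfl⟩
  · intro hx
    subst hx
    exact ⟨⟨1, (one_smul ℝ _).symm⟩, ha⟩
end

section
/- Let V be an N-dimensional Euclidean space and m : V → ℕ with m(0) = 0, nonempty finite support S(m) spanning V. Suppose Λ(m), the support of F(m) = Π_{s∈S(m)}(1 − e^s)^{m(s)}, lies on a sphere. Then for all a, b ∈ S(m), the number 2⟨a,b⟩/‖a‖² is an integer. -/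
open scoped RealInnerProductSpace
open Filter


lemma aux_exists_inner_ne_zero {V : Type*} [NormedAddCommGroup V] [InnerProductSpace ℝ V]
    (T : Finset V) (hT : ∀ v ∈ T, v ≠ 0) :
    ∃ u : V, ∀ v ∈ T, ⟪v, u⟫ ≠ 0 := by
  classical
  induction T using Finset.induction_on with
  | empty => exact ⟨0, by simp⟩
  | insert a s hni ih =>
    obtain ⟨u, hu⟩ := ih (fun v hv => hT v (Finset.mem_insert_of_mem hv))
    obtain ⟨ε, hε⟩ := Infinite.exists_notMem_finset
      ((insert a s).image fun γ => -⟪γ, u⟫ / ⟪γ, a⟫)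
    refine ⟨u + ε • a, fun v hv => ?_⟩
    rw [inner_add_right, real_inner_smul_right]
    rcases eq_or_ne (⟪v, a⟫ : ℝ) 0 with h | h
    · rcases Finset.mem_insert.1 hv with rfl | hv'
      · exact absurd (inner_self_eq_zero.mp h) (hT v hv)
      · simp only [h, mul_zero, add_zero]; exact hu v hv'
    · intro hc
      apply hε
      refine Finset.mem_image.2 ⟨v, hv, ?_⟩
      field_simp
      linarith


lemma exp_indep (c : ℝ → ℝ) :
    ∀ Y : Finset ℝ, (∀ τ : ℝ, ∑ y ∈ Y, c y * Real.exp (τ * y) = 0) → ∀ y ∈ Y, c y = 0 := by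
  classical
  intro Y
  induction Y using Finset.strongInduction with
  | _ Y ih =>
    intro h
    rcases Y.eq_empty_or_nonempty with rfl | hne
    · simp
    set y₀ := Y.max' hne with hy₀def
    have hy₀mem : y₀ ∈ Y := Y.max'_mem hne
    have hzero : ∀ τ : ℝ, ∑ y ∈ Y, c y * Real.exp (τ * (y - y₀)) = 0 := by
      intro τ
      have : ∀ y ∈ Y, c y * Real.exp (τ * (y - y₀))
          = (c y * Real.exp (τ * y)) * Real.exp (-(τ * y₀)) := by
        intro y hy
        rw [mul_assoc, ← Real.exp_add]
        ring_nf
      rw [Finset.sum_congr rfl this, ← Finset.sum_mul, h τ, zero_mul]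
    have hlim : Tendsto (fun τ : ℝ => ∑ y ∈ Y, c y * Real.exp (τ * (y - y₀)))
        atTop (nhds (∑ y ∈ Y, if y = y₀ then c y₀ else 0)) := by
      refine tendsto_finset_sum _ (fun y hy => ?_)
      rcases eq_or_ne y y₀ with rfl | hne'
      · simpa using tendsto_const_nhds
      · simp only [if_neg hne']
        rw [show (0:ℝ) = c y * 0 by ring]
        refine Tendsto.const_mul _ ?_
        refine Real.tendsto_exp_atBot.comp ?_
        have hlt : y - y₀ < 0 := sub_neg.2 (lt_of_le_of_ne (Y.le_max' y hy) hne')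
        exact Tendsto.atTop_mul_const_of_neg hlt tendsto_id
    have h0 : c y₀ = 0 := by
      have h1 : (∑ y ∈ Y, if y = y₀ then c y₀ else 0) = c y₀ := by
        rw [Finset.sum_ite_eq' Y y₀ (fun _ => c y₀), if_pos hy₀mem]
      have h2 : Tendsto (fun _ : ℝ => (0:ℝ)) atTop (nhds (∑ y ∈ Y, if y = y₀ then c y₀ else 0)) := by
        refine Tendsto.congr hzero hlim
      have := tendsto_nhds_unique h2 tendsto_const_nhds
      rw [h1] at this
      exact this
    intro y hy
    rcases eq_or_ne y y₀ with rfl | hne'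
    · exact h0
    refine ih (Y.erase y₀) (Finset.erase_ssubset hy₀mem) ?_ y (Finset.mem_erase.2 ⟨hne', hy⟩)
    intro τ
    have := h τ
    rw [← Finset.add_sum_erase Y _ hy₀mem, h0, zero_mul, zero_add] at this
    exact this


noncomputable def expCharR {W : Type*} [AddCommGroup W] (ℓ : W →+ ℝ) : Multiplicative W →* ℝ where
  toFun v := Real.exp (ℓ v.toAdd)
  map_one' := by simp
  map_mul' x y := by simp [Real.exp_add]

noncomputable def evalR {W : Type*} [AddCommGroup W] (ℓ : W →+ ℝ) :
    AddMonoidAlgebra ℤ W →ₐ[ℤ] ℝ :=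
  AddMonoidAlgebra.lift ℤ ℝ W (expCharR ℓ)

lemma evalR_single {W : Type*} [AddCommGroup W] (ℓ : W →+ ℝ) (a : W) :
    evalR ℓ (AddMonoidAlgebra.single a (1:ℤ)) = Real.exp (ℓ a) := by
  simp [evalR, expCharR]

lemma evalR_apply {W : Type*} [AddCommGroup W] (ℓ : W →+ ℝ) (f : AddMonoidAlgebra ℤ W) :
    evalR ℓ f = ∑ lam ∈ f.coeff.support, (f.coeff lam : ℝ) * Real.exp (ℓ lam) := by
  rw [evalR, AddMonoidAlgebra.lift_apply, Finsupp.sum]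
  refine Finset.sum_congr rfl fun a ha => ?_
  simp [expCharR, zsmul_eq_mul]

noncomputable def expCharC {W : Type*} [AddCommGroup W] (ℓ : W →+ ℂ) : Multiplicative W →* ℂ where
  toFun v := Complex.exp (ℓ v.toAdd)
  map_one' := by simp
  map_mul' x y := by simp [Complex.exp_add]

noncomputable def evalC {W : Type*} [AddCommGroup W] (ℓ : W →+ ℂ) :
    AddMonoidAlgebra ℤ W →ₐ[ℤ] ℂ :=
  AddMonoidAlgebra.lift ℤ ℂ W (expCharC ℓ)

lemma evalC_single {W : Type*} [AddCommGroup W] (ℓ : W →+ ℂ) (a : W) :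
    evalC ℓ (AddMonoidAlgebra.single a (1:ℤ)) = Complex.exp (ℓ a) := by
  simp [evalC, expCharC]

lemma evalC_apply {W : Type*} [AddCommGroup W] (ℓ : W →+ ℂ) (f : AddMonoidAlgebra ℤ W) :
    evalC ℓ f = ∑ lam ∈ f.coeff.support, (f.coeff lam : ℂ) * Complex.exp (ℓ lam) := by
  rw [evalC, AddMonoidAlgebra.lift_apply, Finsupp.sum]
  refine Finset.sum_congr rfl fun a ha => ?_
  simp [expCharC, zsmul_eq_mul]

lemma evalR_Fm {V : Type*} [AddCommGroup V] {m : V → ℕ} {hfin : (Function.support m).Finite}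
    (ℓ : V →+ ℝ) :
    evalR ℓ (Fm m hfin) = ∏ s ∈ hfin.toFinset, (1 - Real.exp (ℓ s)) ^ m s := by
  rw [Fm, map_prod]
  refine Finset.prod_congr rfl fun s hs => ?_
  rw [map_pow, map_sub, map_one, evalR_single]

lemma evalC_Fm {V : Type*} [AddCommGroup V] {m : V → ℕ} {hfin : (Function.support m).Finite}
    (ℓ : V →+ ℂ) :
    evalC ℓ (Fm m hfin) = ∏ s ∈ hfin.toFinset, (1 - Complex.exp (ℓ s)) ^ m s := by
  rw [Fm, map_prod]
  refine Finset.prod_congr rfl fun s hs => ?_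
  rw [map_pow, map_sub, map_one, evalC_single]

noncomputable def innerHom {V : Type*} [NormedAddCommGroup V] [InnerProductSpace ℝ V] (x : V) :
    V →+ ℝ :=
  ((innerSL ℝ x).toLinearMap).toAddMonoidHom

@[simp] lemma innerHom_apply {V : Type*} [NormedAddCommGroup V] [InnerProductSpace ℝ V]
    (x v : V) : innerHom x v = ⟪x, v⟫ := rfl


lemma Fm_ne_zero {V : Type*} [NormedAddCommGroup V] [InnerProductSpace ℝ V]
    {m : V → ℕ} (hfin : (Function.support m).Finite) (h0 : m 0 = 0) :
    Fm m hfin ≠ 0 := by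
  obtain ⟨u, hu⟩ := aux_exists_inner_ne_zero hfin.toFinset
    (fun v hv => by
      intro hv0
      subst hv0
      exact (hfin.mem_toFinset.mp hv) h0)
  intro hF
  have h1 : evalR (innerHom u) (Fm m hfin) = 0 := by rw [hF, map_zero]
  rw [evalR_Fm] at h1
  have h2 : ∀ s ∈ hfin.toFinset, (1 - Real.exp ((innerHom u) s)) ^ m s ≠ 0 := by
    intro s hs
    apply pow_ne_zero
    intro h3
    have h4 : Real.exp ⟪u, s⟫ = 1 := by
      have h6 := sub_eq_zero.mp h3
      simpa using h6.symm
    have h5 : (⟪u, s⟫ : ℝ) = 0 := Real.exp_eq_one_iff ⟪u, s⟫ |>.mp h4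
    exact hu s hs (by rw [real_inner_comm]; exact h5)
  exact Finset.prod_ne_zero_iff.mpr h2 h1

/-- the two-parameter linear additive character -/
noncomputable def lin2 {V : Type*} [NormedAddCommGroup V] [InnerProductSpace ℝ V]
    (x y : V) (t τ : ℝ) : V →+ ℝ where
  toFun v := t * ⟪x, v⟫ + τ * ⟪y, v⟫
  map_zero' := by simp
  map_add' v w := by simp [inner_add_right]; ring

@[simp] lemma lin2_apply {V : Type*} [NormedAddCommGroup V] [InnerProductSpace ℝ V]
    (x y : V) (t τ : ℝ) (v : V) :
    lin2 x y t τ v = t * ⟪x, v⟫ + τ * ⟪y, v⟫ := rfl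




lemma pairing {V : Type*} [NormedAddCommGroup V] [InnerProductSpace ℝ V]
    {m : V → ℕ} (hfin : (Function.support m).Finite)
    {b : V} (hb : b ∈ Function.support m) (hb0 : b ≠ 0)
    {c₀ : V} {r : ℝ}
    (hsph : ∀ l ∈ (Fm m hfin).coeff.support, ‖l - c₀‖ = r)
    {lam : V} (hlam : lam ∈ (Fm m hfin).coeff.support) :
    ∃ k : ℤ, k ≠ 0 ∧ (Fm m hfin).coeff (lam + (k:ℝ) • b) = - (Fm m hfin).coeff lam ∧
      2 * ⟪lam - c₀, b⟫ = -(k:ℝ) * ‖b‖^2 ∧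
      ∀ t : ℝ, t ≠ 0 → t ≠ (k:ℝ) → lam + t • b ∉ (Fm m hfin).coeff.support := by
  classical
  set F := Fm m hfin with hFdef
  have hb2 : (0:ℝ) < ‖b‖^2 := pow_pos (norm_pos_iff.mpr hb0) 2
  -- divisibility
  obtain ⟨p, hp⟩ : ∃ p, m b = p + 1 :=
    ⟨m b - 1, (Nat.succ_pred_eq_of_pos (Nat.pos_of_ne_zero hb)).symm⟩
  have hbT : b ∈ hfin.toFinset := hfin.mem_toFinset.mpr hb
  obtain ⟨G, hG⟩ : ∃ G, F = ((1 : AddMonoidAlgebra ℤ V) - AddMonoidAlgebra.single b 1) * G := by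
    refine ⟨((1 : AddMonoidAlgebra ℤ V) - AddMonoidAlgebra.single b 1) ^ p *
      ∏ s ∈ hfin.toFinset.erase b, ((1 : AddMonoidAlgebra ℤ V) - AddMonoidAlgebra.single s 1) ^ m s, ?_⟩
    rw [hFdef, Fm, ← Finset.mul_prod_erase _ _ hbT, hp, pow_succ]
    ring
  -- coefficient recurrence
  have hco : ∀ μ : V, F.coeff μ = G.coeff μ - G.coeff (μ - b) := by
    intro μ
    have h1 : F = G - AddMonoidAlgebra.single b 1 * G := by rw [hG]; ring
    rw [h1, AddMonoidAlgebra.coeff_sub, Finsupp.sub_apply, AddMonoidAlgebra.coeff_single_mul_apply, one_mul]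
    congr 2
    abel
  -- injectivity
  have hinj : Function.Injective (fun t : ℝ => lam + t • b) := by
    intro t t' h
    simp only [add_right_inj] at h
    exact smul_left_injective ℝ hb0 h
  set ff : ℤ → ℤ := fun j => F.coeff (lam + (j:ℝ) • b) with hffdef
  set gg : ℤ → ℤ := fun j => G.coeff (lam + (j:ℝ) • b) with hggdef
  have hrec : ∀ j : ℤ, ff j = gg j - gg (j - 1) := by
    intro j
    have h2 : lam + (j:ℝ) • b - b = lam + ((j - 1 : ℤ):ℝ) • b := by
      push_cast
      rw [sub_smul, one_smul]
      abel
    simp only [hffdef, hggdef]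
    rw [hco, h2]
  -- finiteness bound
  have hfinset : ({j : ℤ | gg j ≠ 0} ∪ {j : ℤ | ff j ≠ 0}).Finite := by
    have hinjZ : Function.Injective (fun j : ℤ => lam + (j:ℝ) • b) := by
      intro j j' h
      exact_mod_cast hinj h
    refine Set.Finite.union ?_ ?_
    · refine Set.Finite.subset (Set.Finite.preimage hinjZ.injOn (G.coeff.support.finite_toSet)) ?_
      intro j hj
      simpa [Finsupp.mem_support_iff] using hj
    · refine Set.Finite.subset (Set.Finite.preimage hinjZ.injOn (F.coeff.support.finite_toSet)) ?_
      intro j hj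
      simpa [Finsupp.mem_support_iff] using hj
  set K : ℕ := hfinset.toFinset.sup fun j => j.natAbs with hKdef
  have hbig : ∀ j : ℤ, K < j.natAbs → gg j = 0 ∧ ff j = 0 := by
    intro j hj
    by_contra hcon
    have hmem : j ∈ hfinset.toFinset := by
      rw [Set.Finite.mem_toFinset]
      rw [not_and_or] at hcon
      rcases hcon with h | h
      · exact Or.inl (by simpa using h)
      · exact Or.inr (by simpa using h)
    have h5 : j.natAbs ≤ K := Finset.le_sup (f := fun j : ℤ => j.natAbs) hmem
    omega
  -- telescoping
  set A : ℤ := -(K+1 : ℤ) with hA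
  have htel : ∀ n : ℕ, ∑ j ∈ Finset.Icc A (A + n), ff j = gg (A + n) - gg (A - 1) := by
    intro n
    induction n with
    | zero => simp [hrec A]
    | succ n ihn =>
      have hins : Finset.Icc A (A + (n+1 : ℕ)) = insert (A + n + 1) (Finset.Icc A (A + n)) := by
        ext j
        simp only [Finset.mem_Icc, Finset.mem_insert]
        omega
      rw [hins, Finset.sum_insert (by simp only [Finset.mem_Icc]; omega), ihn, hrec (A + n + 1)]
      have h2 : (A : ℤ) + ((n:ℕ)+1 : ℕ) = A + n + 1 := by push_cast; ring
      have h3 : A + n + 1 - 1 = A + n := by ring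
      rw [h2, h3]
      ring
  have hsum : ∑ j ∈ Finset.Icc A (K+1 : ℤ), ff j = 0 := by
    have h3 : (A : ℤ) + (2*K+2 : ℕ) = (K+1 : ℤ) := by rw [hA]; push_cast; ring
    have := htel (2*K+2)
    rw [h3] at this
    rw [this]
    rw [(hbig (K+1:ℤ) (by omega)).1, (hbig (A - 1) (by rw [hA]; omega)).1]
    ring
  -- existence of k
  have h0mem : (0:ℤ) ∈ Finset.Icc A (K+1:ℤ) := by rw [hA]; simp only [Finset.mem_Icc]; omega
  have hff0 : ff 0 ≠ 0 := by
    have : lam + ((0:ℤ):ℝ) • b = lam := by simp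
    simpa [hffdef, this] using Finsupp.mem_support_iff.mp hlam
  obtain ⟨k, hkmem, hk0, hffk⟩ : ∃ j ∈ Finset.Icc A (K+1:ℤ), j ≠ 0 ∧ ff j ≠ 0 := by
    by_contra hcon
    push_neg at hcon
    have := Finset.sum_eq_single_of_mem (0:ℤ) h0mem (fun j hj hne => hcon j hj hne)
    rw [this] at hsum
    exact hff0 hsum
  -- sphere quadratic
  have hq : ∀ t : ℝ, lam + t • b ∈ F.coeff.support → t = 0 ∨ t = -(2 * ⟪lam - c₀, b⟫) / ‖b‖^2 := by
    intro t ht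
    have h4 : ‖lam + t • b - c₀‖ = r := hsph _ ht
    have h5 : ‖lam - c₀‖ = r := hsph _ hlam
    have h6 : lam + t • b - c₀ = (lam - c₀) + t • b := by abel
    have h7 : ‖(lam - c₀) + t • b‖^2 = ‖lam - c₀‖^2 + 2 * (t * ⟪lam - c₀, b⟫) + t^2 * ‖b‖^2 := by
      rw [norm_add_sq_real, real_inner_smul_right, norm_smul, mul_pow,
        Real.norm_eq_abs, sq_abs]
      try ring
    rw [h6] at h4
    have h8 : 2 * (t * ⟪lam - c₀, b⟫) + t^2 * ‖b‖^2 = 0 := by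
      have := congrArg (fun x : ℝ => x^2) h4
      rw [h7, h5] at this
      nlinarith [this]
    have h9 : t * (2 * ⟪lam - c₀, b⟫ + t * ‖b‖^2) = 0 := by ring_nf; nlinarith [h8]
    rcases mul_eq_zero.mp h9 with h | h
    · exact Or.inl h
    · right
      field_simp
      linarith
  have hksupp : lam + (k:ℝ) • b ∈ F.coeff.support := Finsupp.mem_support_iff.mpr hffk
  have hkval : (k:ℝ) = -(2 * ⟪lam - c₀, b⟫) / ‖b‖^2 := by
    rcases hq (k:ℝ) hksupp with h | h
    · exact absurd (by exact_mod_cast h) hk0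
    · exact h
  have hipform : 2 * ⟪lam - c₀, b⟫ = -(k:ℝ) * ‖b‖^2 := by
    rw [hkval]
    field_simp
  have huniq : ∀ t : ℝ, t ≠ 0 → t ≠ (k:ℝ) → lam + t • b ∉ F.coeff.support := by
    intro t ht0 htk hmem
    rcases hq t hmem with h | h
    · exact ht0 h
    · exact htk (h.trans hkval.symm)
  -- coefficient opposite
  have hpair : ff k = - ff 0 := by
    have hsum2 : ∑ j ∈ Finset.Icc A (K+1:ℤ), ff j = ff 0 + ff k := by
      refine Finset.sum_eq_add_of_mem 0 k h0mem hkmem (Ne.symm hk0) ?_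
      intro j hj hjne
      have hj0 : (j:ℝ) ≠ 0 := by exact_mod_cast hjne.1
      have hjk : (j:ℝ) ≠ (k:ℝ) := by exact_mod_cast hjne.2
      exact Finsupp.notMem_support_iff.mp (huniq (j:ℝ) hj0 hjk)
    rw [hsum] at hsum2
    omega
  refine ⟨k, hk0, ?_, hipform, huniq⟩
  have : ff 0 = F.coeff lam := by simp [hffdef]
  rw [← this]
  exact hpair

lemma no_parallel {V : Type*} [NormedAddCommGroup V] [InnerProductSpace ℝ V]
    {m : V → ℕ} (hfin : (Function.support m).Finite) (h0 : m 0 = 0)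
    {c₀ : V} {r : ℝ}
    (hsph : ∀ l ∈ (Fm m hfin).coeff.support, ‖l - c₀‖ = r)
    {b s : V} (hb : b ∈ Function.support m) (hs : s ∈ Function.support m)
    (hsb : s ≠ b) {t₀ : ℝ} (hpar : s = t₀ • b) : False := by
  classical
  set F := Fm m hfin with hFdef
  have hb0 : b ≠ 0 := by
    intro h
    rw [Function.mem_support, h] at hb
    exact hb h0
  have hb2 : (0:ℝ) < ‖b‖^2 := pow_pos (norm_pos_iff.mpr hb0) 2
  have hF0 : F ≠ 0 := Fm_ne_zero hfin h0
  obtain ⟨lam0, hlam0⟩ := (Finsupp.support_nonempty_iff (f := F.coeff)).mpr (by simpa using hF0)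
  obtain ⟨k, hk0, hFk, hip, huniq⟩ := pairing hfin hb hb0 hsph hlam0
  -- projection away from b
  set Pr : V → V := fun δ => δ - (⟪b, δ⟫ / ‖b‖^2) • b with hPrdef
  have hPrb : ∀ δ, ⟪b, Pr δ⟫ = 0 := by
    intro δ
    simp only [hPrdef, inner_sub_right, real_inner_smul_right, real_inner_self_eq_norm_sq]
    field_simp
    ring
  have hPrsym : ∀ δ w, ⟪δ, Pr w⟫ = ⟪Pr δ, w⟫ := by
    intro δ w
    simp only [hPrdef, inner_sub_right, inner_sub_left, real_inner_smul_right,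
      real_inner_smul_left]
    rw [real_inner_comm δ b]
    ring
  have hPrpar : ∀ δ : V, Pr δ = 0 → ∃ t : ℝ, δ = t • b := by
    intro δ h
    refine ⟨⟪b, δ⟫ / ‖b‖^2, ?_⟩
    rw [hPrdef] at h
    simpa [sub_eq_zero] using h
  -- separating vector u
  set D : Finset V := ((F.coeff.support ×ˢ F.coeff.support).image fun p => Pr (p.1 - p.2)).filter (· ≠ 0)
    with hDdef
  obtain ⟨u0, hu0⟩ := aux_exists_inner_ne_zero D (fun v hv => (Finset.mem_filter.mp hv).2)
  set u : V := Pr u0 with hudef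
  have hub : ⟪b, u⟫ = 0 := hPrb u0
  have hub' : ⟪u, b⟫ = 0 := by rw [real_inner_comm]; exact hub
  have hus : ⟪u, s⟫ = 0 := by rw [hpar, real_inner_smul_right, hub', mul_zero]
  have husep : ∀ lam ∈ F.coeff.support, ∀ lam' ∈ F.coeff.support, ⟪u, lam - lam'⟫ = 0 →
      ∃ t : ℝ, lam - lam' = t • b := by
    intro lam h1 lam' h2 hinner
    by_contra hcon
    push_neg at hcon
    have hPrne : Pr (lam - lam') ≠ 0 := by
      intro h
      obtain ⟨t, ht⟩ := hPrpar _ h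
      exact hcon t ht
    have hmem : Pr (lam - lam') ∈ D := Finset.mem_filter.mpr
      ⟨Finset.mem_image.mpr ⟨(lam, lam'), Finset.mem_product.mpr ⟨h1, h2⟩, rfl⟩, hPrne⟩
    apply hu0 _ hmem
    rw [← hPrsym]
    rw [real_inner_comm] at hinner
    exact hinner
  -- extract H
  obtain ⟨pb, hpb⟩ : ∃ p, m b = p + 1 :=
    ⟨m b - 1, (Nat.succ_pred_eq_of_pos (Nat.pos_of_ne_zero hb)).symm⟩
  obtain ⟨ps, hps⟩ : ∃ p, m s = p + 1 :=
    ⟨m s - 1, (Nat.succ_pred_eq_of_pos (Nat.pos_of_ne_zero hs)).symm⟩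
  have hbT : b ∈ hfin.toFinset := hfin.mem_toFinset.mpr hb
  have hsT : s ∈ hfin.toFinset.erase b :=
    Finset.mem_erase.mpr ⟨hsb, hfin.mem_toFinset.mpr hs⟩
  obtain ⟨H, hH⟩ : ∃ H, F = ((1 : AddMonoidAlgebra ℤ V) - AddMonoidAlgebra.single b 1) *
      (((1 : AddMonoidAlgebra ℤ V) - AddMonoidAlgebra.single s 1) * H) := by
    refine ⟨((1 : AddMonoidAlgebra ℤ V) - AddMonoidAlgebra.single b 1) ^ pb *
      (((1 : AddMonoidAlgebra ℤ V) - AddMonoidAlgebra.single s 1) ^ ps *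
      ∏ s' ∈ (hfin.toFinset.erase b).erase s,
        ((1 : AddMonoidAlgebra ℤ V) - AddMonoidAlgebra.single s' 1) ^ m s'), ?_⟩
    rw [hFdef, Fm, ← Finset.mul_prod_erase _ _ hbT, ← Finset.mul_prod_erase _ _ hsT,
      hpb, hps, pow_succ, pow_succ]
    ring
  -- key vanishing
  have key : ∀ τ : ℝ, ∑ lam ∈ F.coeff.support, (F.coeff lam : ℝ) * ⟪b, lam⟫ * Real.exp (τ * ⟪u, lam⟫) = 0 := by
    intro τ
    have hLR : ∀ t : ℝ,
        (∑ lam ∈ F.coeff.support, (F.coeff lam : ℝ) * Real.exp (t * ⟪b, lam⟫ + τ * ⟪u, lam⟫)) =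
        (1 - Real.exp (t * ‖b‖^2)) * ((1 - Real.exp (t * (t₀ * ‖b‖^2))) *
          (∑ mu ∈ H.coeff.support, (H.coeff mu : ℝ) * Real.exp (t * ⟪b, mu⟫ + τ * ⟪u, mu⟫))) := by
      intro t
      have e1 : evalR (lin2 b u t τ) F =
          ∑ lam ∈ F.coeff.support, (F.coeff lam : ℝ) * Real.exp (t * ⟪b, lam⟫ + τ * ⟪u, lam⟫) := by
        rw [evalR_apply]
        simp only [lin2_apply]
      have e2 : evalR (lin2 b u t τ) F =
          (1 - Real.exp (t * ‖b‖^2)) * ((1 - Real.exp (t * (t₀ * ‖b‖^2))) *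
          (∑ mu ∈ H.coeff.support, (H.coeff mu : ℝ) * Real.exp (t * ⟪b, mu⟫ + τ * ⟪u, mu⟫))) := by
        have hbv : (lin2 b u t τ) b = t * ‖b‖^2 := by
          simp [real_inner_self_eq_norm_sq, hub']
        have hsv : (lin2 b u t τ) s = t * (t₀ * ‖b‖^2) := by
          have h1 : ⟪b, s⟫ = t₀ * ‖b‖^2 := by
            rw [hpar, real_inner_smul_right, real_inner_self_eq_norm_sq]
          simp only [lin2_apply, h1, hus, mul_zero, add_zero]
          try ring
        rw [hH, map_mul, map_mul, map_sub, map_sub, map_one, evalR_single, evalR_single,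
          evalR_apply, hbv, hsv]
        simp only [lin2_apply]
      rw [← e1, e2]
    -- derivative of LHS at 0
    have hL' : HasDerivAt
        (fun t : ℝ => ∑ lam ∈ F.coeff.support, (F.coeff lam : ℝ) * Real.exp (t * ⟪b, lam⟫ + τ * ⟪u, lam⟫))
        (∑ lam ∈ F.coeff.support,
          (F.coeff lam : ℝ) * (Real.exp ((0:ℝ) * ⟪b, lam⟫ + τ * ⟪u, lam⟫) * ⟪b, lam⟫)) 0 := by
      apply HasDerivAt.fun_sum
      intro lam _
      exact (((hasDerivAt_mul_const _).add_const _).exp).const_mul _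
    -- derivative of RHS at 0
    have hRh' : HasDerivAt
        (fun t : ℝ => ∑ mu ∈ H.coeff.support, (H.coeff mu : ℝ) * Real.exp (t * ⟪b, mu⟫ + τ * ⟪u, mu⟫))
        (∑ mu ∈ H.coeff.support,
          (H.coeff mu : ℝ) * (Real.exp ((0:ℝ) * ⟪b, mu⟫ + τ * ⟪u, mu⟫) * ⟪b, mu⟫)) 0 := by
      apply HasDerivAt.fun_sum
      intro mu _
      exact (((hasDerivAt_mul_const _).add_const _).exp).const_mul _
    have h1' : HasDerivAt (fun t : ℝ => 1 - Real.exp (t * ‖b‖^2))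
        (-(Real.exp ((0:ℝ) * ‖b‖^2) * ‖b‖^2)) 0 :=
      ((hasDerivAt_mul_const _).exp).const_sub 1
    have h2' : HasDerivAt (fun t : ℝ => 1 - Real.exp (t * (t₀ * ‖b‖^2)))
        (-(Real.exp ((0:ℝ) * (t₀ * ‖b‖^2)) * (t₀ * ‖b‖^2))) 0 :=
      ((hasDerivAt_mul_const _).exp).const_sub 1
    have hR' := h1'.mul (h2'.mul hRh')
    have hzero : HasDerivAt
        (fun t : ℝ => ∑ lam ∈ F.coeff.support, (F.coeff lam : ℝ) * Real.exp (t * ⟪b, lam⟫ + τ * ⟪u, lam⟫))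
        0 0 := by
      have heq : (fun t : ℝ => ∑ lam ∈ F.coeff.support, (F.coeff lam : ℝ) *
          Real.exp (t * ⟪b, lam⟫ + τ * ⟪u, lam⟫)) =
          (fun t : ℝ => (1 - Real.exp (t * ‖b‖^2)) * ((1 - Real.exp (t * (t₀ * ‖b‖^2))) *
          (∑ mu ∈ H.coeff.support, (H.coeff mu : ℝ) * Real.exp (t * ⟪b, mu⟫ + τ * ⟪u, mu⟫)))) :=
        funext hLR
      rw [heq]
      refine hR'.congr_deriv ?_
      simp
    have h9 : ∑ lam ∈ F.coeff.support,
        (F.coeff lam : ℝ) * (Real.exp ((0:ℝ) * ⟪b, lam⟫ + τ * ⟪u, lam⟫) * ⟪b, lam⟫)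
        = ∑ lam ∈ F.coeff.support, (F.coeff lam : ℝ) * ⟪b, lam⟫ * Real.exp (τ * ⟪u, lam⟫) := by
      refine Finset.sum_congr rfl fun lam _ => ?_
      rw [zero_mul, zero_add]
      ring
    rw [← h9]
    exact (hzero.unique hL').symm
  -- fiberwise decomposition
  set Y : Finset ℝ := F.coeff.support.image fun lam => ⟪u, lam⟫ with hYdef
  set c : ℝ → ℝ := fun y => ∑ lam ∈ F.coeff.support.filter (fun lam => ⟪u, lam⟫ = y),
    (F.coeff lam : ℝ) * ⟪b, lam⟫ with hcdef
  have hcz : ∀ y ∈ Y, c y = 0 := by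
    refine exp_indep c Y (fun τ => ?_)
    have hfib := Finset.sum_fiberwise_of_maps_to
      (g := fun lam => (⟪u, lam⟫ : ℝ)) (t := Y)
      (fun x hx => Finset.mem_image_of_mem _ hx)
      (fun lam => (F.coeff lam : ℝ) * ⟪b, lam⟫ * Real.exp (τ * ⟪u, lam⟫))
    have hstep : ∑ y ∈ Y, c y * Real.exp (τ * y)
        = ∑ y ∈ Y, ∑ lam ∈ F.coeff.support.filter (fun lam => ⟪u, lam⟫ = y),
            (F.coeff lam : ℝ) * ⟪b, lam⟫ * Real.exp (τ * ⟪u, lam⟫) := by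
      refine Finset.sum_congr rfl fun y hy => ?_
      rw [hcdef, Finset.sum_mul]
      refine Finset.sum_congr rfl fun lam hlam => ?_
      rw [(Finset.mem_filter.mp hlam).2]
    rw [hstep, hfib]
    exact key τ
  -- identify the fiber of lam0
  set lam1 : V := lam0 + (k:ℝ) • b with hlam1def
  have hFlam1 : F.coeff lam1 = - F.coeff lam0 := hFk
  have hlam1 : lam1 ∈ F.coeff.support := by
    rw [Finsupp.mem_support_iff, hFlam1, neg_ne_zero]
    exact Finsupp.mem_support_iff.mp hlam0
  have hne01 : lam0 ≠ lam1 := by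
    rw [hlam1def]
    intro h
    have h1 : (k:ℝ) • b = 0 := by
      have := congrArg (fun z => z - lam0) h
      simpa using this.symm
    rcases smul_eq_zero.mp h1 with h' | h'
    · exact hk0 (by exact_mod_cast h')
    · exact hb0 h'
  have hfil : F.coeff.support.filter (fun lam => ⟪u, lam⟫ = ⟪u, lam0⟫) = {lam0, lam1} := by
    ext lam
    simp only [Finset.mem_filter, Finset.mem_insert, Finset.mem_singleton]
    constructor
    · rintro ⟨hmem, hinner⟩
      have h1 : ⟪u, lam - lam0⟫ = 0 := by rw [inner_sub_right, hinner]; ring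
      obtain ⟨t, ht⟩ := husep lam hmem lam0 hlam0 h1
      have hlameq : lam = lam0 + t • b := by rw [← ht]; abel
      rcases eq_or_ne t 0 with rfl | ht0
      · left; rw [hlameq]; simp
      rcases eq_or_ne t (k:ℝ) with rfl | htk
      · right; rw [hlameq, hlam1def]
      · exact absurd (hlameq ▸ hmem) (huniq t ht0 htk)
    · rintro (rfl | rfl)
      · exact ⟨hlam0, rfl⟩
      · refine ⟨hlam1, ?_⟩
        rw [hlam1def, inner_add_right, real_inner_smul_right, hub']
        ring
  have hcy0 := hcz ⟪u, lam0⟫ (Finset.mem_image_of_mem _ hlam0)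
  rw [hcdef] at hcy0
  simp only at hcy0
  rw [hfil, Finset.sum_pair hne01] at hcy0
  have hbl1 : ⟪b, lam1⟫ = ⟪b, lam0⟫ + (k:ℝ) * ‖b‖^2 := by
    rw [hlam1def, inner_add_right, real_inner_smul_right, real_inner_self_eq_norm_sq]
  have hFlam1' : ((F.coeff lam1 : ℤ) : ℝ) = -((F.coeff lam0 : ℤ) : ℝ) := by
    rw [hFlam1]; push_cast; ring
  rw [hbl1, hFlam1'] at hcy0
  have hF0' : ((F.coeff lam0 : ℤ) : ℝ) ≠ 0 := Int.cast_ne_zero.mpr (Finsupp.mem_support_iff.mp hlam0)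
  have hk0' : (k:ℝ) ≠ 0 := Int.cast_ne_zero.mpr hk0
  have hfin2 : ((F.coeff lam0 : ℤ) : ℝ) * ((k:ℝ) * ‖b‖^2) = 0 := by linarith [hcy0]
  rcases mul_eq_zero.mp hfin2 with h | h
  · exact hF0' h
  · rcases mul_eq_zero.mp h with h' | h'
    · exact hk0' h'
    · exact (ne_of_gt hb2) h'


/-- complex linear character -/
noncomputable def clin {V : Type*} [NormedAddCommGroup V] [InnerProductSpace ℝ V]
    (x y : V) : V →+ ℂ where
  toFun v := ((⟪x, v⟫ : ℝ) : ℂ) + ((⟪y, v⟫ : ℝ) : ℂ) * Complex.I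
  map_zero' := by simp
  map_add' v w := by
    simp only [inner_add_right]
    push_cast
    ring

@[simp] lemma clin_apply {V : Type*} [NormedAddCommGroup V] [InnerProductSpace ℝ V]
    (x y v : V) : clin x y v = ((⟪x, v⟫ : ℝ) : ℂ) + ((⟪y, v⟫ : ℝ) : ℂ) * Complex.I := rfl

theorem stmt7 {V : Type*} [NormedAddCommGroup V] [InnerProductSpace ℝ V]
    [FiniteDimensional ℝ V]
    (m : V → ℕ) (h0 : m 0 = 0) (hfin : (Function.support m).Finite)
    (hne : (Function.support m).Nonempty)
    (hspan : Submodule.span ℝ (Function.support m) = ⊤)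
    (hsphere : ∃ c : V, ∃ r : ℝ, 0 < r ∧ ∀ l ∈ (Fm m hfin).coeff.support, ‖l - c‖ = r) :
    ∀ a ∈ Function.support m, ∀ b ∈ Function.support m,
      ∃ k : ℤ, 2 * ⟪a, b⟫ = (k : ℝ) * ‖a‖ ^ 2 := by
  classical
  obtain ⟨c₀, r, hr, hsph⟩ := hsphere
  intro a ha b hb
  by_contra hcon
  push_neg at hcon
  have ha0 : a ≠ 0 := by intro h; rw [Function.mem_support, h] at ha; exact ha h0
  have hb0 : b ≠ 0 := by intro h; rw [Function.mem_support, h] at hb; exact hb h0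
  have ha2 : (0:ℝ) < ‖a‖^2 := pow_pos (norm_pos_iff.mpr ha0) 2
  have hb2 : (0:ℝ) < ‖b‖^2 := pow_pos (norm_pos_iff.mpr hb0) 2
  set F := Fm m hfin with hFdef
  have hF0 : F ≠ 0 := Fm_ne_zero hfin h0
  obtain ⟨lam0, hlam0⟩ := (Finsupp.support_nonempty_iff (f := F.coeff)).mpr (by simpa using hF0)
  -- the basic rationality relation
  have hrel : ∀ lam ∈ F.coeff.support, ∀ kk : ℤ, lam + (kk:ℝ) • b ∈ F.coeff.support →
      ∃ w : ℤ, (kk:ℝ) * (2 * ⟪b, a⟫) = (w:ℝ) * ‖a‖^2 := by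
    intro lam hmem kk hmem2
    obtain ⟨j1, _, _, hj1, _⟩ := pairing hfin ha ha0 hsph hmem
    obtain ⟨j2, _, _, hj2, _⟩ := pairing hfin ha ha0 hsph hmem2
    refine ⟨j1 - j2, ?_⟩
    have hdiff : 2 * ⟪lam + (kk:ℝ) • b - c₀, a⟫ - 2 * ⟪lam - c₀, a⟫
        = (kk:ℝ) * (2 * ⟪b, a⟫) := by
      have h5 : lam + (kk:ℝ) • b - c₀ = (lam - c₀) + (kk:ℝ) • b := by abel
      rw [h5, inner_add_left, real_inner_smul_left]
      ring
    rw [hj1, hj2] at hdiff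
    push_cast
    linarith [hdiff]
  -- partner data in direction b
  have hP : ∀ lam ∈ F.coeff.support, ∃ k : ℤ, k ≠ 0 ∧ F.coeff (lam + (k:ℝ) • b) = - F.coeff lam ∧
      2 * ⟪lam - c₀, b⟫ = -(k:ℝ) * ‖b‖^2 ∧
      ∀ t : ℝ, t ≠ 0 → t ≠ (k:ℝ) → lam + t • b ∉ F.coeff.support :=
    fun lam h => pairing hfin hb hb0 hsph h
  obtain ⟨k0, hk00, hk0co, -, -⟩ := hP lam0 hlam0
  have hk0mem : lam0 + (k0:ℝ) • b ∈ F.coeff.support := by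
    rw [Finsupp.mem_support_iff, hk0co, neg_ne_zero]
    exact Finsupp.mem_support_iff.mp hlam0
  obtain ⟨w0, hw0⟩ := hrel lam0 hlam0 k0 hk0mem
  -- gcd normalization
  set g : ℕ := Int.gcd k0 w0 with hgdef
  have hgpos : 0 < g := Int.gcd_pos_of_ne_zero_left w0 hk00
  set n : ℤ := k0 / (g:ℤ) with hndef
  set π' : ℤ := w0 / (g:ℤ) with hpidef
  have hkgn : (g:ℤ) * n = k0 := Int.mul_ediv_cancel' (Int.gcd_dvd_left k0 w0)
  have hwgp : (g:ℤ) * π' = w0 := Int.mul_ediv_cancel' (Int.gcd_dvd_right k0 w0)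
  have hn0 : n ≠ 0 := by
    intro h
    rw [h, mul_zero] at hkgn
    exact hk00 hkgn.symm
  have hcop : Int.gcd n π' = 1 := Int.gcd_div_gcd_div_gcd (by exact_mod_cast hgpos)
  have hnpi : (n:ℝ) * (2 * ⟪b, a⟫) = (π':ℝ) * ‖a‖^2 := by
    have hg0 : (g:ℝ) ≠ 0 := Nat.cast_ne_zero.mpr (hgpos).ne'
    refine mul_left_cancel₀ hg0 ?_
    have e1 : (g:ℝ) * ((n:ℝ) * (2 * ⟪b, a⟫)) = (k0:ℝ) * (2 * ⟪b, a⟫) := by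
      rw [← mul_assoc]
      congr 1
      exact_mod_cast congrArg (fun z : ℤ => (z:ℝ)) hkgn
    have e2 : (g:ℝ) * ((π':ℝ) * ‖a‖^2) = (w0:ℝ) * ‖a‖^2 := by
      rw [← mul_assoc]
      congr 1
      exact_mod_cast congrArg (fun z : ℤ => (z:ℝ)) hwgp
    rw [e1, e2, hw0]
  -- rule out n = ±1
  have hNnot1 : n.natAbs ≠ 1 := by
    intro hN1
    rcases Int.natAbs_eq_iff.mp hN1 with h | h
    · apply hcon π'
      rw [real_inner_comm]
      rw [h] at hnpi
      push_cast at hnpi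
      linarith [hnpi]
    · apply hcon (-π')
      rw [real_inner_comm]
      rw [h] at hnpi
      push_cast at hnpi ⊢
      linarith [hnpi]
  set N : ℕ := n.natAbs with hNdef
  have hN2 : 2 ≤ N := by
    have h6 : N ≠ 0 := Int.natAbs_ne_zero.mpr hn0
    omega
  have hNR : (0:ℝ) < (N:ℝ) := by
    have : (0:ℕ) < N := by omega
    exact_mod_cast this
  -- divisibility of all partner steps
  have hdvd : ∀ (lam : V) (h : lam ∈ F.coeff.support), (N:ℤ) ∣ (hP lam h).choose := by
    intro lam h
    obtain ⟨hk0', hmem', hip', huniq'⟩ := (hP lam h).choose_spec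
    set k := (hP lam h).choose with hkdef
    have hkmem : lam + (k:ℝ) • b ∈ F.coeff.support := by
      rw [Finsupp.mem_support_iff, hmem', neg_ne_zero]
      exact Finsupp.mem_support_iff.mp h
    obtain ⟨w, hw⟩ := hrel lam h k hkmem
    have hreal : (k:ℝ) * (π':ℝ) * ‖a‖^2 = (n:ℝ) * (w:ℝ) * ‖a‖^2 := by
      linear_combination (n:ℝ) * hw - (k:ℝ) * hnpi
    have hint : k * π' = n * w := by
      have h7 := mul_right_cancel₀ (ne_of_gt ha2) hreal
      exact_mod_cast h7
    have hdvd1 : n ∣ k * π' := hint ▸ Dvd.intro w rfl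
    have hdvd2 : n ∣ k := Int.dvd_of_dvd_mul_left_of_gcd_one hdvd1 hcop
    exact Int.natAbs_dvd.mpr hdvd2
  -- no non-trivial parallels
  have hnopar : ∀ s ∈ Function.support m, (∀ t : ℝ, s = t • b → s = b) := by
    intro s hs t ht
    by_contra hne
    exact no_parallel hfin h0 hsph hb hs hne ht
  -- construct the separating data
  set y0 : V := (2 * Real.pi / (N * ‖b‖^2)) • b with hy0def
  have hy0b : ⟪y0, b⟫ = 2 * Real.pi / N := by
    have hN0 : (N:ℝ) ≠ 0 := ne_of_gt hNR
    rw [hy0def, real_inner_smul_left, real_inner_self_eq_norm_sq]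
    field_simp
  set S₀ : Finset V := hfin.toFinset.filter
    (fun s => ∃ z : ℤ, ⟪y0, s⟫ = z * (2 * Real.pi)) with hS₀def
  set Pr : V → V := fun δ => δ - (⟪b, δ⟫ / ‖b‖^2) • b with hPrdef
  have hPrb : ∀ δ, ⟪b, Pr δ⟫ = 0 := by
    intro δ
    simp only [hPrdef, inner_sub_right, real_inner_smul_right, real_inner_self_eq_norm_sq]
    field_simp
    ring
  have hPrsym : ∀ δ w, ⟪δ, Pr w⟫ = ⟪Pr δ, w⟫ := by
    intro δ w
    simp only [hPrdef, inner_sub_right, inner_sub_left, real_inner_smul_right,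
      real_inner_smul_left]
    rw [real_inner_comm δ b]
    ring
  have hPrpar : ∀ δ : V, Pr δ = 0 → ∃ t : ℝ, δ = t • b := by
    intro δ h
    refine ⟨⟪b, δ⟫ / ‖b‖^2, ?_⟩
    rw [hPrdef] at h
    simpa [sub_eq_zero] using h
  have hS₀Pr : ∀ s ∈ S₀, Pr s ≠ 0 := by
    intro s hsS h
    obtain ⟨t, ht⟩ := hPrpar s h
    have hsS' : s ∈ Function.support m := hfin.mem_toFinset.mp (Finset.mem_filter.mp hsS).1
    have hsb : s = b := hnopar s hsS' t ht
    obtain ⟨z, hz⟩ := (Finset.mem_filter.mp hsS).2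
    rw [hsb, hy0b] at hz
    have hπ : (0:ℝ) < Real.pi := Real.pi_pos
    have hN0 : (N:ℝ) ≠ 0 := by
      have : (0:ℕ) < N := by omega
      exact Nat.cast_ne_zero.mpr (by omega)
    have h8 : (1:ℝ) = z * N := by
      field_simp at hz
      nlinarith [hz]
    have h9 : (1:ℤ) = z * N := by exact_mod_cast h8
    have h10 : (N:ℤ) ∣ 1 := Dvd.intro_left z h9.symm
    have h11 := Int.le_of_dvd one_pos h10
    omega
  obtain ⟨u0, hu0⟩ := aux_exists_inner_ne_zero (S₀.image Pr) (by
    intro v hv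
    obtain ⟨s, hsS, rfl⟩ := Finset.mem_image.mp hv
    exact hS₀Pr s hsS)
  set x : V := Pr u0 with hxdef
  have hxb : ⟪x, b⟫ = 0 := by rw [real_inner_comm]; exact hPrb u0
  have hxS₀ : ∀ s ∈ S₀, ⟪x, s⟫ ≠ 0 := by
    intro s hsS
    rw [real_inner_comm, hxdef, hPrsym]
    exact hu0 _ (Finset.mem_image_of_mem _ hsS)
  -- the character does not vanish on Fm
  have hχ1 : evalC (clin x y0) F ≠ 0 := by
    rw [hFdef, evalC_Fm]
    apply Finset.prod_ne_zero_iff.mpr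
    intro s hsT
    apply pow_ne_zero
    intro hfac
    have hexp : Complex.exp (clin x y0 s) = 1 := by
      have h12 := sub_eq_zero.mp hfac
      simpa using h12.symm
    obtain ⟨z, hz⟩ := Complex.exp_eq_one_iff.mp hexp
    have hre : (⟪x, s⟫ : ℝ) = 0 := by
      have h13 := congrArg Complex.re hz
      simpa using h13
    have him : (⟪y0, s⟫ : ℝ) = z * (2 * Real.pi) := by
      have h14 := congrArg Complex.im hz
      simpa using h14
    exact hxS₀ s (Finset.mem_filter.mpr ⟨hsT, ⟨z, him⟩⟩) hre
  -- but the character vanishes by the pairing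
  have hχ0 : evalC (clin x y0) F = 0 := by
    rw [evalC_apply]
    refine Finset.sum_involution
      (fun lam h => lam + (((hP lam h).choose : ℤ) : ℝ) • b) ?_ ?_ ?_ ?_
    · -- pairs sum to zero
      intro lam h
      obtain ⟨hk0', hmem', hip', huniq'⟩ := (hP lam h).choose_spec
      set k := (hP lam h).choose with hkdef
      obtain ⟨e, he⟩ := hdvd lam h
      rw [← hkdef] at he
      have hclin : clin x y0 (lam + (k:ℝ) • b)
          = clin x y0 lam + (k:ℂ) * (((2 * Real.pi / N : ℝ) : ℂ) * Complex.I) := by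
        rw [map_add]
        congr 1
        rw [show ((k:ℝ) • b) = (k : ℤ) • b from (Int.cast_smul_eq_zsmul ℝ k b)]
        rw [map_zsmul, zsmul_eq_mul]
        congr 1
        simp [hxb, hy0b]
      have hexp1 : Complex.exp ((k:ℂ) * (((2 * Real.pi / N : ℝ) : ℂ) * Complex.I)) = 1 := by
        have hNC : ((N:ℕ):ℂ) ≠ 0 := Nat.cast_ne_zero.mpr (by omega)
        have harg : (k:ℂ) * (((2 * Real.pi / N : ℝ) : ℂ) * Complex.I)
            = (e:ℂ) * (2 * (Real.pi:ℂ) * Complex.I) := by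
          rw [he]
          push_cast
          field_simp
        rw [harg]
        exact Complex.exp_int_mul_two_pi_mul_I e
      have hFneg : ((F.coeff (lam + (k:ℝ) • b) : ℤ) : ℂ) = -((F.coeff lam : ℤ) : ℂ) := by
        rw [hmem']
        push_cast
        ring
      rw [hclin, Complex.exp_add, hexp1, mul_one, hFneg]
      ring
    · -- nontrivial
      intro lam h hne0
      obtain ⟨hk0', -, -, -⟩ := (hP lam h).choose_spec
      intro hcontra
      have h15 : (((hP lam h).choose : ℤ) : ℝ) • b = 0 := by
        have h16 := congrArg (fun z => z - lam) hcontra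
        simpa using h16
      rcases smul_eq_zero.mp h15 with h' | h'
      · exact hk0' (by exact_mod_cast h')
      · exact hb0 h'
    · -- membership
      intro lam h
      obtain ⟨hk0', hmem', -, -⟩ := (hP lam h).choose_spec
      rw [Finsupp.mem_support_iff, hmem', neg_ne_zero]
      exact Finsupp.mem_support_iff.mp h
    · -- involution
      intro lam h
      obtain ⟨hk0', hmem', hip', huniq'⟩ := (hP lam h).choose_spec
      set k := (hP lam h).choose with hkdef
      have hgmem : lam + (k:ℝ) • b ∈ F.coeff.support := by
        rw [Finsupp.mem_support_iff, hmem', neg_ne_zero]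
        exact Finsupp.mem_support_iff.mp h
      obtain ⟨hk0'', hmem'', hip'', huniq''⟩ := (hP (lam + (k:ℝ) • b) hgmem).choose_spec
      set k' := (hP (lam + (k:ℝ) • b) hgmem).choose with hk'def
      have hkk' : (k' : ℝ) = -(k : ℝ) := by
        by_contra hne
        have h17 : lam + (k:ℝ) • b + (-(k:ℝ)) • b ∉ F.coeff.support := by
          apply huniq'' (-(k:ℝ))
          · simpa using (fun hk => hk0' (by exact_mod_cast hk : k = 0))
          · intro heq
            exact hne heq.symm
        apply h17
        have h18 : lam + (k:ℝ) • b + (-(k:ℝ)) • b = lam := by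
          rw [add_assoc, ← add_smul]
          simp
        rw [h18]
        exact h
      show lam + (k:ℝ) • b + (k':ℝ) • b = lam
      rw [hkk', add_assoc, ← add_smul]
      simp
  exact hχ1 hχ0
end

section
/- Let V be an N-dimensional Euclidean space and m : V → ℕ with m(0) = 0, nonempty finite support S(m) spanning V. Suppose Λ(m), the support of F(m) = Π_{s∈S(m)}(1 − e^s)^{m(s)}, lies on a sphere. Then for all a, b ∈ S(m), the reflection w_a(b) = b − (2⟨a,b⟩/‖a‖²)a belongs to S(m) ∪ (−S(m)). -/
set_option linter.unusedSectionVars false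
set_option maxHeartbeats 1000000
set_option synthInstance.maxHeartbeats 400000

namespace Stmt8Aux


/-- Block lemma: if the difference function of a finitely supported `h : ℝ → ℤ`
has its "support points" pairwise summing to 1, then `h` is symmetric. -/
theorem block_symm (h : ℝ → ℤ) (hfin : {μ : ℝ | h μ ≠ 0}.Finite)
    (hyp : ∀ μ₁ μ₂ : ℝ, h μ₁ - h (μ₁ - 1) ≠ 0 → h μ₂ - h (μ₂ - 1) ≠ 0 → μ₁ ≠ μ₂ →
      μ₁ + μ₂ = 1) :
    ∀ μ : ℝ, h μ = h (-μ) := by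
  classical
  by_cases hz : ∀ μ, h μ = 0
  · intro μ; rw [hz, hz]
  push_neg at hz
  set S : Finset ℝ := hfin.toFinset with hS
  have hSne : S.Nonempty := by
    obtain ⟨μ, hμ⟩ := hz
    exact ⟨μ, by simp [hS, hμ]⟩
  have hmemS : ∀ μ : ℝ, μ ∈ S ↔ h μ ≠ 0 := by intro μ; simp [hS]
  set α := S.min' hSne with hα
  set A := S.max' hSne with hA
  have hαS : α ∈ S := S.min'_mem hSne
  have hAS : A ∈ S := S.max'_mem hSne
  have hαA : α ≤ A := S.min'_le A hAS
  have hmin : ∀ μ : ℝ, h μ ≠ 0 → α ≤ μ := fun μ hμ => S.min'_le μ ((hmemS μ).2 hμ)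
  have hmax : ∀ μ : ℝ, h μ ≠ 0 → μ ≤ A := fun μ hμ => S.le_max' μ ((hmemS μ).2 hμ)
  have hout : ∀ μ : ℝ, (μ < α ∨ A < μ) → h μ = 0 := by
    intro μ hμ
    by_contra hc
    rcases hμ with h1 | h1
    · exact absurd (hmin μ hc) (not_le.2 h1)
    · exact absurd (hmax μ hc) (not_le.2 h1)
  have hhα : h α ≠ 0 := (hmemS α).1 hαS
  have hhA : h A ≠ 0 := (hmemS A).1 hAS
  have hHα : h α - h (α - 1) ≠ 0 := by
    rw [hout (α - 1) (Or.inl (by linarith)), sub_zero]; exact hhα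
  have hHA : h (A + 1) - h (A + 1 - 1) ≠ 0 := by
    rw [hout (A + 1) (Or.inr (by linarith))]
    simp only [zero_sub, ne_eq, neg_eq_zero]
    simpa using hhA
  have hsum : α + (A + 1) = 1 := hyp α (A + 1) hHα hHA (by linarith)
  have hAeq : A = -α := by linarith
  -- any point where the difference is nonzero is α or A+1
  have hstep : ∀ μ : ℝ, μ ≠ α → μ ≠ A + 1 → h μ = h (μ - 1) := by
    intro μ h1 h2
    by_contra hc
    have := hyp μ α (sub_ne_zero.2 hc) hHα h1
    have : μ = A + 1 := by linarith
    exact h2 this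
  -- descent
  have hdesc : ∀ n : ℕ, ∀ μ : ℝ, (∀ j : ℕ, j ≤ n → μ - j ≠ α ∧ μ - j ≠ A + 1) →
      h μ = h (μ - (n + 1)) := by
    intro n
    induction n with
    | zero =>
      intro μ hj
      obtain ⟨h1, h2⟩ := hj 0 le_rfl
      simpa using hstep μ (by simpa using h1) (by simpa using h2)
    | succ n ih =>
      intro μ hj
      have e1 : h μ = h (μ - (n + 1)) := ih μ (fun j hjn => hj j (le_trans hjn (Nat.le_succ n)))
      obtain ⟨h1, h2⟩ := hj (n + 1) le_rfl
      have e2 : h (μ - (n + 1)) = h (μ - (n + 1) - 1) := by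
        apply hstep _ (by push_cast at h1 ⊢; exact h1) (by push_cast at h2 ⊢; exact h2)
      rw [e1, e2]; congr 1; push_cast; ring
  -- every support point lies in α + ℕ
  have hcoset : ∀ μ : ℝ, h μ ≠ 0 → ∃ j : ℕ, μ = α + j := by
    intro μ hμ
    by_contra hc
    push_neg at hc
    have hne : ∀ j : ℕ, μ - j ≠ α ∧ μ - j ≠ A + 1 := by
      intro j
      constructor
      · intro he; exact hc j (by linarith)
      · intro he
        -- μ - j = A + 1 > A contradicts μ ≤ A and j ≥ 0
        have hμA : μ ≤ A := hmax μ hμ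
        have : (j : ℝ) ≥ 0 := Nat.cast_nonneg j
        linarith
    set n : ℕ := ⌈μ - α⌉₊ with hn
    have : h μ = h (μ - (n + 1)) := hdesc n μ (fun j _ => hne j)
    have hne2 : h (μ - (n + 1)) ≠ 0 := by rw [← this]; exact hμ
    have : α ≤ μ - (n + 1) := hmin _ hne2
    have hge : μ - α ≤ n := Nat.le_ceil (μ - α)
    linarith
  obtain ⟨N, hN⟩ := hcoset A hhA
  -- h is constant on the block
  have hconst : ∀ j : ℕ, j ≤ N → h (α + j) = h α := by
    intro j
    induction j with
    | zero => intro _; norm_num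
    | succ j ih =>
      intro hjN
      have e : h (α + (j + 1)) = h (α + (j + 1) - 1) := by
        apply hstep
        · intro he
          have : ((j : ℝ) + 1) = 0 := by linarith
          have : (j : ℝ) + 1 > 0 := by positivity
          linarith
        · intro he
          rw [hN] at he
          have : (j : ℝ) + 1 = (N : ℝ) + 1 := by linarith
          have : (j : ℝ) = N := by linarith
          have : j = N := by exact_mod_cast this
          omega
      have e2 : h (α + (j + 1) - 1) = h (α + j) := by ring_nf
      push_cast at e ⊢
      rw [e, e2, ih (by omega)]
  -- characterization
  have hchar : ∀ μ : ℝ, h μ = if ∃ j : ℕ, j ≤ N ∧ μ = α + j then h α else 0 := by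
    intro μ
    split_ifs with hif
    · obtain ⟨j, hj1, hj2⟩ := hif
      rw [hj2]; exact hconst j hj1
    · by_contra hc
      have hμ : h μ ≠ 0 := by
        intro h0; rw [h0] at hc; exact hc rfl
      obtain ⟨j, hj⟩ := hcoset μ hμ
      have hμA : μ ≤ A := hmax μ hμ
      have hjN : j ≤ N := by
        rw [hj, hN] at hμA
        have : (j : ℝ) ≤ N := by linarith
        exact_mod_cast this
      exact hif ⟨j, hjN, hj⟩
  -- symmetry
  intro μ
  rw [hchar μ, hchar (-μ)]
  have hiff : (∃ j : ℕ, j ≤ N ∧ μ = α + j) ↔ (∃ j : ℕ, j ≤ N ∧ -μ = α + j) := by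
    constructor
    · rintro ⟨j, hj1, hj2⟩
      refine ⟨N - j, by omega, ?_⟩
      have : ((N - j : ℕ) : ℝ) = (N : ℝ) - j := by
        push_cast [Nat.cast_sub hj1]; ring
      rw [this, hj2]
      have : A = α + N := hN
      rw [hAeq] at this
      linarith
    · rintro ⟨j, hj1, hj2⟩
      refine ⟨N - j, by omega, ?_⟩
      have hc : ((N - j : ℕ) : ℝ) = (N : ℝ) - j := by
        push_cast [Nat.cast_sub hj1]; ring
      rw [hc]
      have : A = α + N := hN
      rw [hAeq] at this
      linarith
  split_ifs with h1 h2 h2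
  · rfl
  · exact absurd (hiff.1 h1) h2
  · exact absurd (hiff.2 h2) h1
  · rfl




open AddMonoidAlgebra

variable {V : Type*} [AddCommGroup V]

/-- exponential monomial in `ℤ[V × ℝ]`. -/
noncomputable def ee (q : V × ℝ) : AddMonoidAlgebra ℤ (V × ℝ) :=
  AddMonoidAlgebra.single q 1

section W
variable (w : V →+ ℝ)

/-- all support elements have positive weight -/
def IsPos (f : AddMonoidAlgebra ℤ (V × ℝ)) : Prop :=
  ∀ q ∈ f.coeff.support, 0 < w q.1

lemma IsPos.add {f g : AddMonoidAlgebra ℤ (V × ℝ)} (hf : IsPos w f) (hg : IsPos w g) :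
    IsPos w (f + g) := by
  classical
  intro q hq
  rcases Finset.mem_union.1 (Finsupp.support_add hq) with h | h
  · exact hf q h
  · exact hg q h

lemma IsPos.mul {f g : AddMonoidAlgebra ℤ (V × ℝ)} (hf : IsPos w f) (hg : IsPos w g) :
    IsPos w (f * g) := by
  classical
  intro q hq
  have := AddMonoidAlgebra.support_coeff_mul_subset f g hq
  rcases Finset.mem_add.1 this with ⟨q₁, h₁, q₂, h₂, hq12⟩
  have := add_pos (hf q₁ h₁) (hg q₂ h₂)
  rw [← hq12]
  simpa [map_add] using this

lemma IsPos.zero : IsPos w (0 : AddMonoidAlgebra ℤ (V × ℝ)) := by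
  intro q hq; simp at hq

def Good (f : AddMonoidAlgebra ℤ (V × ℝ)) : Prop :=
  ∃ g, f = 1 + g ∧ IsPos w g

lemma Good.mul {a b : AddMonoidAlgebra ℤ (V × ℝ)} (ha : Good w a) (hb : Good w b) :
    Good w (a * b) := by
  obtain ⟨g₁, rfl, h₁⟩ := ha
  obtain ⟨g₂, rfl, h₂⟩ := hb
  exact ⟨g₁ + g₂ + g₁ * g₂, by ring, IsPos.add w (IsPos.add w h₁ h₂) (IsPos.mul w h₁ h₂)⟩

lemma Good.one : Good w (1 : AddMonoidAlgebra ℤ (V × ℝ)) := ⟨0, by simp, IsPos.zero w⟩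

lemma Good.factor {p : V × ℝ} (hp : 0 < w p.1) : Good w (1 - ee p) := by
  refine ⟨-ee p, by ring, ?_⟩
  intro q hq
  rw [AddMonoidAlgebra.coeff_neg, Finsupp.support_neg] at hq
  have := Finsupp.support_single_subset hq
  rw [Finset.mem_singleton] at this
  subst this
  exact hp

lemma Good.pow {p : V × ℝ} (hp : 0 < w p.1) (k : ℕ) : Good w ((1 - ee p) ^ k) := by
  induction k with
  | zero => simpa using Good.one w
  | succ k ih => rw [pow_succ]; exact Good.mul w ih (Good.factor w hp)

/-- product of factors `(1 - e^p)^(n p)` with positive weights is `1 +` (positively supported) -/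
lemma goodpos_prod (E : Finset (V × ℝ)) (n : V × ℝ → ℕ) (hE : ∀ p ∈ E, 0 < w p.1) :
    Good w (∏ p ∈ E, (1 - ee p) ^ n p) := by
  classical
  refine Finset.prod_induction _ _ (fun a b => Good.mul w) (Good.one w) ?_
  intro p hp
  exact Good.pow w (hE p hp) (n p)

lemma supp_sum_single (E : Finset (V × ℝ)) (c : V × ℝ → ℤ) :
    ∀ q ∈ (∑ p ∈ E, AddMonoidAlgebra.single p (c p)).coeff.support, q ∈ E := by
  classical
  induction E using Finset.induction_on with
  | empty => intro q hq; simp at hq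
  | @insert p E' hp ih =>
    intro q hq
    rw [Finset.sum_insert hp] at hq
    rcases Finset.mem_union.1 (Finsupp.support_add hq) with h | h
    · have := Finsupp.support_single_subset h
      rw [Finset.mem_singleton] at this
      subst this; exact Finset.mem_insert_self _ _
    · exact Finset.mem_insert_of_mem (ih q h)

lemma slice_pow (r : ℝ) (hr : 0 < r) (p : V × ℝ) (hp : r ≤ w p.1) (k : ℕ) :
    ∃ g, (1 - ee p) ^ k = 1 - AddMonoidAlgebra.single p (k : ℤ) + g ∧
      ∀ q ∈ g.coeff.support, r < w q.1 := by
  classical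
  induction k with
  | zero => exact ⟨0, by simp, by intro q hq; simp at hq⟩
  | succ k ih =>
    obtain ⟨g, hgeq, hg⟩ := ih
    refine ⟨AddMonoidAlgebra.single (p + p) (k : ℤ) + g - g * ee p, ?_, ?_⟩
    · rw [pow_succ, hgeq]
      have h2 : AddMonoidAlgebra.single p (k : ℤ) * ee p
          = AddMonoidAlgebra.single (p + p) (k : ℤ) := by
        rw [ee, AddMonoidAlgebra.single_mul_single, mul_one]
      have h1 : AddMonoidAlgebra.single p ((k : ℤ) + 1)
          = AddMonoidAlgebra.single p (k : ℤ) + AddMonoidAlgebra.single p 1 := by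
        rw [← AddMonoidAlgebra.single_add]
      have hee : ee p = AddMonoidAlgebra.single p 1 := rfl
      rw [hee] at h2 ⊢
      push_cast
      rw [h1]
      linear_combination h2
    · intro q hq
      have h3 : q ∈ (AddMonoidAlgebra.single (p + p) (k : ℤ) + g).coeff.support
          ∪ (g * ee p).coeff.support := by
        have h4 : q ∈ ((AddMonoidAlgebra.single (p + p) (k : ℤ) + g) + -(g * ee p)).coeff.support := by
          simpa [sub_eq_add_neg] using hq
        rcases Finset.mem_union.1 (Finsupp.support_add h4) with h | h
        · exact Finset.mem_union_left _ h
        · change q ∈ (-(g * ee p).coeff).support at h; rw [Finsupp.support_neg] at h; exact Finset.mem_union_right _ h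
      rcases Finset.mem_union.1 h3 with h | h
      · rcases Finset.mem_union.1 (Finsupp.support_add h) with h' | h'
        · have := Finsupp.support_single_subset h'
          rw [Finset.mem_singleton] at this
          subst this
          have he : w (p + p).1 = w p.1 + w p.1 := by simp [map_add]
          rw [he]; linarith
        · exact hg q h'
      · have h5 := AddMonoidAlgebra.support_coeff_mul_subset g (ee p) h
        rcases Finset.mem_add.1 h5 with ⟨q₁, h₁, q₂, h₂, hq12⟩
        have hq1 := hg q₁ h₁
        have hq2 : q₂ = p := by
          have := Finsupp.support_single_subset h₂
          rwa [Finset.mem_singleton] at this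
        rw [hq2] at hq12
        rw [← hq12]
        have he : w (q₁ + p).1 = w q₁.1 + w p.1 := by simp [map_add]
        rw [he]; linarith

lemma slice_prod (r : ℝ) (hr : 0 < r) (E : Finset (V × ℝ)) (n : V × ℝ → ℕ)
    (hE : ∀ p ∈ E, r ≤ w p.1) :
    ∃ g, (∏ p ∈ E, (1 - ee p) ^ n p)
        = 1 - (∑ p ∈ E, AddMonoidAlgebra.single p (n p : ℤ)) + g ∧
      ∀ q ∈ g.coeff.support, r < w q.1 := by
  classical
  revert hE
  induction E using Finset.induction_on with
  | empty => intro hE; exact ⟨0, by simp, by intro q hq; simp at hq⟩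
  | @insert p E' hp ih =>
    intro hE
    obtain ⟨g, hgeq, hg⟩ := ih (fun p' hp' => hE p' (Finset.mem_insert_of_mem hp'))
    obtain ⟨gp, hgpeq, hgp⟩ := slice_pow w r hr p (hE p (Finset.mem_insert_self p E')) (n p)
    set S : AddMonoidAlgebra ℤ (V × ℝ) := ∑ p' ∈ E', AddMonoidAlgebra.single p' ((n p' : ℤ))
      with hSdef
    set Sp : AddMonoidAlgebra ℤ (V × ℝ) := AddMonoidAlgebra.single p ((n p : ℤ)) with hSpdef
    have hSsupp : ∀ q ∈ S.coeff.support, r ≤ w q.1 := by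
      intro q hq
      have := supp_sum_single E' _ q hq
      exact hE q (Finset.mem_insert_of_mem this)
    have hSpsupp : ∀ q ∈ Sp.coeff.support, r ≤ w q.1 := by
      intro q hq
      have := Finsupp.support_single_subset hq
      rw [Finset.mem_singleton] at this
      rw [this]
      exact hE p (Finset.mem_insert_self p E')
    refine ⟨Sp * S - Sp * g - gp * S + gp * g + gp + g - ?_ , ?_, ?_⟩
    · exact 0
    · rw [Finset.prod_insert hp, hgpeq, hgeq, Finset.sum_insert hp]
      ring
    · intro q hq
      rw [sub_zero] at hq
      -- break into pieces
      have key : ∀ (u v : AddMonoidAlgebra ℤ (V × ℝ)),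
          (∀ x ∈ u.coeff.support, r ≤ w x.1) → (∀ x ∈ v.coeff.support, 0 < w x.1) →
          ∀ x ∈ (u * v).coeff.support, r < w x.1 := by
        intro u v hu hv x hx
        rcases Finset.mem_add.1 (AddMonoidAlgebra.support_coeff_mul_subset u v hx) with ⟨x₁, h₁, x₂, h₂, hx12⟩
        have := hu x₁ h₁
        have := hv x₂ h₂
        rw [← hx12]
        have he : w (x₁ + x₂).1 = w x₁.1 + w x₂.1 := by simp [map_add]
        rw [he]; linarith
      have hgpos : ∀ x ∈ g.coeff.support, 0 < w x.1 := fun x hx => lt_trans hr (hg x hx)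
      have hgppos : ∀ x ∈ gp.coeff.support, 0 < w x.1 := fun x hx => lt_trans hr (hgp x hx)
      have hSpos : ∀ x ∈ S.coeff.support, 0 < w x.1 := fun x hx => lt_of_lt_of_le hr (hSsupp x hx)
      have h1 : ∀ x ∈ (Sp * S).coeff.support, r < w x.1 := key Sp S hSpsupp hSpos
      have h2 : ∀ x ∈ (Sp * g).coeff.support, r < w x.1 := key Sp g hSpsupp hgpos
      have h3 : ∀ x ∈ (gp * S).coeff.support, r < w x.1 := by
        intro x hx
        rcases Finset.mem_add.1 (AddMonoidAlgebra.support_coeff_mul_subset gp S hx) with ⟨x₁, h₁, x₂, h₂, hx12⟩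
        have := hgp x₁ h₁
        have := hSpos x₂ h₂
        rw [← hx12]
        have he : w (x₁ + x₂).1 = w x₁.1 + w x₂.1 := by simp [map_add]
        rw [he]; linarith
      have h4 : ∀ x ∈ (gp * g).coeff.support, r < w x.1 := by
        intro x hx
        rcases Finset.mem_add.1 (AddMonoidAlgebra.support_coeff_mul_subset gp g hx) with ⟨x₁, h₁, x₂, h₂, hx12⟩
        have := hgp x₁ h₁
        have := hgpos x₂ h₂
        rw [← hx12]
        have he : w (x₁ + x₂).1 = w x₁.1 + w x₂.1 := by simp [map_add]
        rw [he]; linarith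
      -- now support of the sum
      have hsub : (Sp * S - Sp * g - gp * S + gp * g + gp + g).coeff.support ⊆
          (Sp * S).coeff.support ∪ (Sp * g).coeff.support ∪ (gp * S).coeff.support ∪ (gp * g).coeff.support
          ∪ gp.coeff.support ∪ g.coeff.support := by
        intro x hx
        have e1 : Sp * S - Sp * g - gp * S + gp * g + gp + g
            = (Sp * S) + (-(Sp * g)) + (-(gp * S)) + (gp * g) + gp + g := by ring
        rw [e1] at hx
        have := Finsupp.support_add hx
        rcases Finset.mem_union.1 this with h | h
        swap
        · exact Finset.mem_union_right _ h
        have := Finsupp.support_add h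
        rcases Finset.mem_union.1 this with h' | h'
        swap
        · exact Finset.mem_union_left _ (Finset.mem_union_right _ h')
        have := Finsupp.support_add h'
        rcases Finset.mem_union.1 this with h'' | h''
        swap
        · exact Finset.mem_union_left _ (Finset.mem_union_left _ (Finset.mem_union_right _ h''))
        have := Finsupp.support_add h''
        rcases Finset.mem_union.1 this with h3' | h3'
        swap
        · change x ∈ (-(gp * S).coeff).support at h3'
          rw [Finsupp.support_neg] at h3'
          exact Finset.mem_union_left _ (Finset.mem_union_left _ (Finset.mem_union_left _
            (Finset.mem_union_right _ h3')))
        have := Finsupp.support_add h3'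
        rcases Finset.mem_union.1 this with h4' | h4'
        · exact Finset.mem_union_left _ (Finset.mem_union_left _ (Finset.mem_union_left _
            (Finset.mem_union_left _ (Finset.mem_union_left _ h4'))))
        · change x ∈ (-(Sp * g).coeff).support at h4'
          rw [Finsupp.support_neg] at h4'
          exact Finset.mem_union_left _ (Finset.mem_union_left _ (Finset.mem_union_left _
            (Finset.mem_union_left _ (Finset.mem_union_right _ h4'))))
      have := hsub hq
      simp only [Finset.mem_union] at this
      rcases this with ((((h' | h') | h') | h') | h') | h'
      · exact h1 q h'
      · exact h2 q h'
      · exact h3 q h'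
      · exact h4 q h'
      · exact hgp q h'
      · exact hg q h'

end W

end Stmt8Aux

namespace Stmt8Aux

open AddMonoidAlgebra

/-- the character `λ ↦ 1 + λ ε` into dual numbers -/
noncomputable def dchar : Multiplicative ℝ →* DualNumber ℝ where
  toFun m := 1 + (Multiplicative.toAdd m) • DualNumber.eps
  map_one' := by simp
  map_mul' a b := by
    have h0 : ((Multiplicative.toAdd a) • (DualNumber.eps : DualNumber ℝ))
        * ((Multiplicative.toAdd b) • (DualNumber.eps : DualNumber ℝ)) = 0 := by
      rw [smul_mul_smul_comm, DualNumber.eps_mul_eps, smul_zero]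
    show 1 + (Multiplicative.toAdd (a * b)) • (DualNumber.eps : DualNumber ℝ)
      = (1 + (Multiplicative.toAdd a) • DualNumber.eps)
        * (1 + (Multiplicative.toAdd b) • DualNumber.eps)
    rw [toAdd_mul, add_smul, mul_add, mul_one, add_mul, one_mul, h0, add_zero, add_assoc]

lemma dchar_apply (x : ℝ) :
    dchar (Multiplicative.ofAdd x) = 1 + x • DualNumber.eps := rfl

/-- a product of multiples of ε with total multiplicity ≥ 2 vanishes -/
lemma dual_prod_zero {ι : Type*} (E : Finset ι) (c : ι → ℝ) (n : ι → ℕ)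
    (h2 : 2 ≤ ∑ i ∈ E, n i) :
    ∏ i ∈ E, ((c i) • (DualNumber.eps : DualNumber ℝ)) ^ (n i) = 0 := by
  classical
  have hsq : ∀ (x y : ℝ), (x • (DualNumber.eps : DualNumber ℝ)) * (y • (DualNumber.eps : DualNumber ℝ)) = 0 := by
    intro x y; rw [smul_mul_smul_comm, DualNumber.eps_mul_eps, smul_zero]
  by_cases hcase : ∃ i ∈ E, 2 ≤ n i
  · obtain ⟨i, hiE, hi2⟩ := hcase
    apply Finset.prod_eq_zero hiE
    have he : (c i • (DualNumber.eps : DualNumber ℝ)) ^ n i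
        = (c i • (DualNumber.eps : DualNumber ℝ)) ^ (n i - 2)
          * ((c i • (DualNumber.eps : DualNumber ℝ)) * (c i • (DualNumber.eps : DualNumber ℝ))) := by
      rw [← pow_two, ← pow_add]
      congr 1
      omega
    rw [he, hsq, mul_zero]
  · push_neg at hcase
    have hE1 : ∀ i ∈ E, n i ≤ 1 := fun i hi => by have := hcase i hi; omega
    set E1 := E.filter (fun i => n i = 1) with hE1def
    have hsum : ∑ i ∈ E, n i = E1.card := by
      rw [hE1def, Finset.card_eq_sum_ones, Finset.sum_filter]
      apply Finset.sum_congr rfl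
      intro i hi
      have := hE1 i hi
      interval_cases h : n i <;> simp
    rw [hsum] at h2
    obtain ⟨a, ha, b, hb, hab⟩ := Finset.one_lt_card.1 (show 1 < E1.card by omega)
    have haE : a ∈ E := Finset.mem_of_mem_filter a ha
    have hbE : b ∈ E := Finset.mem_of_mem_filter b hb
    rw [← Finset.mul_prod_erase E _ haE,
      ← Finset.mul_prod_erase (E.erase a) _ (Finset.mem_erase.2 ⟨hab.symm, hbE⟩)]
    have hna : n a = 1 := (Finset.mem_filter.1 ha).2
    have hnb : n b = 1 := (Finset.mem_filter.1 hb).2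
    rw [hna, hnb, pow_one, pow_one, ← mul_assoc, hsq, zero_mul]

variable {V : Type*} [AddCommGroup V]

open scoped Classical in
/-- multiplicity count -/
noncomputable def NN (E : Finset (V × ℝ)) (n : V × ℝ → ℕ) (q : V × ℝ) : ℕ :=
  if q ∈ E then n q else 0

lemma NN_mem {E : Finset (V × ℝ)} {n : V × ℝ → ℕ} {q : V × ℝ} (hq : q ∈ E) :
    NN E n q = n q := by simp [NN, hq]

lemma NN_not_mem {E : Finset (V × ℝ)} {n : V × ℝ → ℕ} {q : V × ℝ} (hq : q ∉ E) :
    NN E n q = 0 := by simp [NN, hq]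

theorem core (w : V →+ ℝ) (E : Finset (V × ℝ)) (n : V × ℝ → ℕ)
    (hn : ∀ p ∈ E, 1 ≤ n p)
    (hbase : ((0 : V), (1 : ℝ)) ∈ E)
    (hwt : ∀ p ∈ E, 0 < w p.1 ∨ (p.1 = 0 ∧ p.2 ≠ 0))
    (hsph : ∃ B : ℝ, ∀ (v : V) (μ₁ μ₂ : ℝ),
      (v, μ₁) ∈ (∏ p ∈ E, (1 - ee p) ^ n p).coeff.support →
      (v, μ₂) ∈ (∏ p ∈ E, (1 - ee p) ^ n p).coeff.support → μ₁ ≠ μ₂ → μ₁ + μ₂ = B) :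
    (∀ p ∈ E, p.1 = 0 → p = ((0 : V), (1 : ℝ)) ∧ n p = 1) ∧
    (∀ (v : V) (μ : ℝ), 0 < w v → NN E n (v, μ) = NN E n (v, -μ)) := by
  classical
  obtain ⟨B, hB⟩ := hsph
  set F : AddMonoidAlgebra ℤ (V × ℝ) := ∏ p ∈ E, (1 - ee p) ^ n p with hFdef
  -- ======== STEP 1 : the class p.1 = 0 is exactly {(0,1)} with multiplicity 1
  set E₀ := E.filter (fun p => p.1 = 0) with hE₀def
  set Epos := E.filter (fun p => ¬ p.1 = 0) with hEposdef
  have hEpospos : ∀ p ∈ Epos, 0 < w p.1 := by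
    intro p hp
    rw [hEposdef, Finset.mem_filter] at hp
    rcases hwt p hp.1 with h | h
    · exact h
    · exact absurd h.1 hp.2
  have hsplit : F = (∏ p ∈ E₀, (1 - ee p) ^ n p) * (∏ p ∈ Epos, (1 - ee p) ^ n p) := by
    rw [hFdef, hE₀def, hEposdef, Finset.prod_filter_mul_prod_filter_not]
  obtain ⟨gp, hgpeq, hgp⟩ := goodpos_prod w Epos n hEpospos
  set ι : ℝ →+ V × ℝ := AddMonoidHom.mk' (fun μ => ((0 : V), μ)) (by
    intro a b; simp [Prod.ext_iff]) with hιdef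
  have hιinj : Function.Injective ι := by
    intro a b h
    simpa [hιdef, Prod.ext_iff] using h
  have hιapp : ∀ x : ℝ, ι x = ((0 : V), x) := fun x => rfl
  set Φ : AddMonoidAlgebra ℤ ℝ →+* AddMonoidAlgebra ℤ (V × ℝ) :=
    AddMonoidAlgebra.mapDomainRingHom ℤ ι with hΦdef
  have hΦeq : ∀ f : AddMonoidAlgebra ℤ ℝ, Φ f = AddMonoidAlgebra.mapDomain ι f := fun f => rfl
  have hΦsingle : ∀ (x : ℝ) (b : ℤ),
      Φ (AddMonoidAlgebra.single x b) = AddMonoidAlgebra.single (ι x) b := by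
    intro x b
    rw [hΦeq]
    exact AddMonoidAlgebra.mapDomain_single
  set Pt : AddMonoidAlgebra ℤ ℝ := ∏ p ∈ E₀, (1 - AddMonoidAlgebra.single p.2 1) ^ n p
    with hPtdef
  have hbase0 : ((0 : V), (1 : ℝ)) ∈ E₀ := by
    rw [hE₀def, Finset.mem_filter]; exact ⟨hbase, rfl⟩
  have hp2ne : ∀ p ∈ E₀, p.2 ≠ (0 : ℝ) := by
    intro p hp
    rw [hE₀def, Finset.mem_filter] at hp
    rcases hwt p hp.1 with h | h
    · rw [hp.2] at h; simp at h
    · exact h.2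
  have hΦPt : Φ Pt = ∏ p ∈ E₀, (1 - ee p) ^ n p := by
    rw [hPtdef, map_prod]
    apply Finset.prod_congr rfl
    intro p hp
    rw [map_pow, map_sub, map_one, hΦsingle]
    have hp1 : p.1 = 0 := by
      rw [hE₀def, Finset.mem_filter] at hp; exact hp.2
    have hpi : ι p.2 = p := by
      rw [hιapp]
      exact Prod.ext hp1.symm rfl
    rw [hpi, ee]
  have key0 : ∀ μ : ℝ, F.coeff ((0 : V), μ) = Pt.coeff μ := by
    intro μ
    rw [hsplit, ← hΦPt, hgpeq, mul_add, mul_one, AddMonoidAlgebra.coeff_add, Finsupp.add_apply]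
    have h1 : (Φ Pt).coeff ((0 : V), μ) = Pt.coeff μ := by
      have he : ((0 : V), μ) = ι μ := (hιapp μ).symm
      rw [he, hΦeq, AddMonoidAlgebra.coeff_mapDomain]
      exact Finsupp.mapDomain_apply hιinj Pt.coeff μ
    have h2 : (Φ Pt * gp).coeff ((0 : V), μ) = 0 := by
      rw [← Finsupp.notMem_support_iff]
      intro hmem
      rcases Finset.mem_add.1 (AddMonoidAlgebra.support_coeff_mul_subset _ _ hmem) with
        ⟨q₁, hq₁, q₂, hq₂, hq12⟩
      have hq₁w : w q₁.1 = 0 := by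
        rw [hΦeq, AddMonoidAlgebra.coeff_mapDomain] at hq₁
        rcases Finset.mem_image.1 (Finsupp.mapDomain_support hq₁) with ⟨x, _, hx⟩
        rw [← hx, hιapp]
        simp
      have hq₂w : 0 < w q₂.1 := hgp q₂ hq₂
      have hsum : w (((0 : V), μ)).1 = w q₁.1 + w q₂.1 := by
        rw [← hq12]; simp [map_add]
      simp only [map_zero] at hsum
      rw [hq₁w] at hsum
      linarith
    rw [h1, h2, add_zero]
  have hPtne : Pt ≠ 0 := by
    rw [hPtdef, Finset.prod_ne_zero_iff]
    intro p hp
    apply pow_ne_zero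
    intro hc
    have hz : ((1 : AddMonoidAlgebra ℤ ℝ) - AddMonoidAlgebra.single p.2 (1 : ℤ)).coeff 0 = 0 := by
      rw [hc]; rfl
    rw [AddMonoidAlgebra.coeff_sub, Finsupp.sub_apply, AddMonoidAlgebra.one_def, AddMonoidAlgebra.coeff_single_apply,
      AddMonoidAlgebra.coeff_single_apply, if_pos rfl, if_neg (hp2ne p hp)] at hz
    norm_num at hz
  set εh : AddMonoidAlgebra ℤ ℝ →ₐ[ℤ] ℤ := (AddMonoidAlgebra.lift ℤ ℤ ℝ) 1 with hεdef
  have hεfactor : ∀ x : ℝ,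
      εh ((1 : AddMonoidAlgebra ℤ ℝ) - AddMonoidAlgebra.single x (1 : ℤ)) = 0 := by
    intro x
    rw [map_sub, map_one, hεdef, AddMonoidAlgebra.lift_single]
    simp
  have haug : εh Pt = 0 := by
    rw [hPtdef, map_prod]
    apply Finset.prod_eq_zero hbase0
    rw [map_pow, hεfactor]
    exact zero_pow (by have := hn _ hbase; omega)
  have hBP : ∀ μ₁ μ₂ : ℝ, μ₁ ∈ Pt.coeff.support → μ₂ ∈ Pt.coeff.support → μ₁ ≠ μ₂ → μ₁ + μ₂ = B := by
    intro μ₁ μ₂ h1 h2 hne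
    apply hB 0 μ₁ μ₂ _ _ hne
    · rw [Finsupp.mem_support_iff] at h1 ⊢
      rw [key0]; exact h1
    · rw [Finsupp.mem_support_iff] at h2 ⊢
      rw [key0]; exact h2
  obtain ⟨α, hα⟩ := Finsupp.support_nonempty_iff.2 (AddMonoidAlgebra.coeff_eq_zero.not.2 hPtne)
  have hεsingle : ∀ (x : ℝ) (c : ℤ), εh (AddMonoidAlgebra.single x (c : ℤ)) = c := by
    intro x c
    rw [hεdef, AddMonoidAlgebra.lift_single]
    simp
  have hcase2 : ∃ β ∈ Pt.coeff.support, β ≠ α := by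
    by_contra hc
    push_neg at hc
    have hsupp : Pt.coeff.support = {α} := Finset.eq_singleton_iff_unique_mem.2 ⟨hα, hc⟩
    obtain ⟨hne, hform⟩ := Finsupp.support_eq_singleton.1 hsupp
    have hform' : Pt = AddMonoidAlgebra.single α (Pt.coeff α) := AddMonoidAlgebra.coeff_injective hform
    rw [hform', hεsingle] at haug
    exact hne haug
  obtain ⟨β, hβ, hβα⟩ := hcase2
  have hαβ : α ≠ β := fun h => hβα h.symm
  have hsuppab : Pt.coeff.support = {α, β} := by
    apply Finset.Subset.antisymm
    · intro γ hγ
      rw [Finset.mem_insert, Finset.mem_singleton]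
      by_contra hc
      push_neg at hc
      have e1 := hBP γ α hγ hα hc.1
      have e2 := hBP β α hβ hα hβα
      exact hc.2 (by linarith)
    · intro γ hγ
      rcases Finset.mem_insert.1 hγ with h | h
      · rwa [h]
      · rw [Finset.mem_singleton] at h; rwa [h]
  have hεPt : εh Pt = Pt.coeff α + Pt.coeff β := by
    rw [hεdef, AddMonoidAlgebra.lift_apply, Finsupp.sum, hsuppab, Finset.sum_pair hαβ]
    simp
  have hcoef : Pt.coeff β = - Pt.coeff α := by
    rw [haug] at hεPt
    omega
  have hPtαne : Pt.coeff α ≠ 0 := Finsupp.mem_support_iff.1 hα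
  have hSig1 : ∑ p ∈ E₀, n p = 1 := by
    by_contra hne1
    have hge2 : 2 ≤ ∑ p ∈ E₀, n p := by
      have h1 : 1 ≤ ∑ p ∈ E₀, n p :=
        le_trans (hn _ hbase) (Finset.single_le_sum (fun i _ => Nat.zero_le _) hbase0)
      omega
    set Ξh : AddMonoidAlgebra ℤ ℝ →ₐ[ℤ] DualNumber ℝ :=
      (AddMonoidAlgebra.lift ℤ (DualNumber ℝ) ℝ) dchar with hΞdef
    have hΞfactor : ∀ x : ℝ,
        Ξh ((1 : AddMonoidAlgebra ℤ ℝ) - AddMonoidAlgebra.single x (1 : ℤ))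
          = (-x) • (DualNumber.eps : DualNumber ℝ) := by
      intro x
      rw [map_sub, map_one, hΞdef, AddMonoidAlgebra.lift_single, one_smul, dchar_apply,
        neg_smul]
      abel
    have hΞPt0 : Ξh Pt = 0 := by
      rw [hPtdef, map_prod]
      have hc : ∀ p ∈ E₀, Ξh ((1 - AddMonoidAlgebra.single p.2 1) ^ n p)
          = ((-p.2) • (DualNumber.eps : DualNumber ℝ)) ^ n p := by
        intro p hp
        rw [map_pow, hΞfactor]
      rw [Finset.prod_congr rfl hc]
      exact dual_prod_zero E₀ (fun p => -p.2) n hge2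
    have hΞPt : Ξh Pt = ((Pt.coeff α : ℝ) * (α - β)) • (DualNumber.eps : DualNumber ℝ) := by
      rw [hΞdef, AddMonoidAlgebra.lift_apply, Finsupp.sum, hsuppab, Finset.sum_pair hαβ]
      show (Pt.coeff α) • dchar (Multiplicative.ofAdd α) + (Pt.coeff β) • dchar (Multiplicative.ofAdd β) = _
      rw [hcoef, dchar_apply, dchar_apply, neg_smul, ← sub_eq_add_neg, ← smul_sub]
      have hzs : (Pt.coeff α) • ((1 + α • (DualNumber.eps : DualNumber ℝ)) - (1 + β • DualNumber.eps))
          = ((Pt.coeff α : ℝ)) • ((1 + α • (DualNumber.eps : DualNumber ℝ)) - (1 + β • DualNumber.eps)) := by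
        rw [Int.cast_smul_eq_zsmul]
      rw [hzs]
      have he2 : (1 + α • (DualNumber.eps : DualNumber ℝ)) - (1 + β • DualNumber.eps)
          = (α - β) • (DualNumber.eps : DualNumber ℝ) := by
        rw [sub_smul]
        abel
      rw [he2, smul_smul]
    rw [hΞPt0] at hΞPt
    have hsnd := congrArg TrivSqZeroExt.snd hΞPt
    rw [TrivSqZeroExt.snd_zero, TrivSqZeroExt.snd_smul] at hsnd
    have hepssnd : TrivSqZeroExt.snd (DualNumber.eps : DualNumber ℝ) = 1 :=
      TrivSqZeroExt.snd_inr ℝ 1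
    rw [hepssnd, smul_eq_mul, mul_one] at hsnd
    rcases mul_eq_zero.1 hsnd.symm with h | h
    · exact hPtαne (by exact_mod_cast h)
    · exact hαβ (by linarith [sub_eq_zero.1 h])
  have hclass : ∀ p ∈ E, p.1 = 0 → p = ((0 : V), (1 : ℝ)) ∧ n p = 1 := by
    intro p hp hp1
    have hpE₀ : p ∈ E₀ := by rw [hE₀def, Finset.mem_filter]; exact ⟨hp, hp1⟩
    have hpeq : p = ((0 : V), (1 : ℝ)) := by
      by_contra hne
      have hsub : ({p, ((0 : V), (1 : ℝ))} : Finset (V × ℝ)) ⊆ E₀ := by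
        intro q hq
        rcases Finset.mem_insert.1 hq with h | h
        · rw [h]; exact hpE₀
        · rw [Finset.mem_singleton] at h; rw [h]; exact hbase0
      have hle : n p + n ((0 : V), (1 : ℝ)) ≤ ∑ p ∈ E₀, n p := by
        rw [← Finset.sum_pair hne]
        exact Finset.sum_le_sum_of_subset hsub
      have h1 := hn p hp
      have h2 := hn _ hbase
      omega
    refine ⟨hpeq, ?_⟩
    have hle : n p ≤ ∑ p ∈ E₀, n p :=
      Finset.single_le_sum (fun i _ => Nat.zero_le _) hpE₀
    have h1 := hn p hp
    omega
  have hE₀eq : E₀ = {((0 : V), (1 : ℝ))} := by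
    apply Finset.eq_singleton_iff_unique_mem.2 ⟨hbase0, ?_⟩
    intro q hq
    rw [hE₀def, Finset.mem_filter] at hq
    exact (hclass q hq.1 hq.2).1
  have hn01 : n ((0 : V), (1 : ℝ)) = 1 := (hclass _ hbase rfl).2
  have hPtx : Pt = 1 - AddMonoidAlgebra.single (1 : ℝ) (1 : ℤ) := by
    rw [hPtdef, hE₀eq, Finset.prod_singleton, hn01, pow_one]
  have h0mem : ((0 : V), (0 : ℝ)) ∈ F.coeff.support := by
    rw [Finsupp.mem_support_iff, key0, hPtx, AddMonoidAlgebra.coeff_sub, Finsupp.sub_apply, AddMonoidAlgebra.one_def,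
      AddMonoidAlgebra.coeff_single_apply, AddMonoidAlgebra.coeff_single_apply]
    norm_num
  have h1mem : ((0 : V), (1 : ℝ)) ∈ F.coeff.support := by
    rw [Finsupp.mem_support_iff, key0, hPtx, AddMonoidAlgebra.coeff_sub, Finsupp.sub_apply, AddMonoidAlgebra.one_def,
      AddMonoidAlgebra.coeff_single_apply, AddMonoidAlgebra.coeff_single_apply]
    norm_num
  have hB1 : B = 1 := by
    have := hB 0 0 1 h0mem h1mem (by norm_num)
    linarith
  -- ======== STEP 2 : the level induction
  set E' := E.erase ((0 : V), (1 : ℝ)) with hE'def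
  have hE'pos : ∀ p ∈ E', 0 < w p.1 := by
    intro p hp
    rw [hE'def, Finset.mem_erase] at hp
    rcases hwt p hp.2 with h | h
    · exact h
    · exact absurd (hclass p hp.2 h.1).1 hp.1
  set Gh : AddMonoidAlgebra ℤ (V × ℝ) := ∏ p ∈ E', (1 - ee p) ^ n p with hGhdef
  have hFG : F = (1 - ee ((0 : V), (1 : ℝ))) * Gh := by
    rw [hFdef, hGhdef, hE'def, ← Finset.mul_prod_erase E _ hbase, hn01, pow_one]
  have coeffF : ∀ (v : V) (μ : ℝ), F.coeff (v, μ) = Gh.coeff (v, μ) - Gh.coeff (v, μ - 1) := by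
    intro v μ
    rw [hFG, sub_mul, one_mul, AddMonoidAlgebra.coeff_sub, Finsupp.sub_apply]
    congr 1
    rw [ee, AddMonoidAlgebra.coeff_single_mul_apply, one_mul]
    congr 1
    rw [Prod.ext_iff]
    constructor
    · show -0 + v = v
      rw [neg_zero, zero_add]
    · show -1 + μ = μ - 1
      ring
  set L := E'.image (fun p => w p.1) with hLdef
  set τ : (V × ℝ) ≃+ (V × ℝ) := AddEquiv.prodCongr (AddEquiv.refl V) (AddEquiv.neg ℝ)
    with hτdef
  have hτapp : ∀ q : V × ℝ, τ q = (q.1, -q.2) := fun q => rfl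
  have hτinj : Function.Injective (τ : V × ℝ → V × ℝ) := τ.injective
  -- main induction step
  have step : ∀ r : ℝ, 0 < r →
      (∀ r' : ℝ, 0 < r' → r' ∈ L → r' < r →
        ∀ (v : V) (μ : ℝ), w v = r' → NN E n (v, μ) = NN E n (v, -μ)) →
      ∀ (v : V) (μ : ℝ), w v = r → NN E n (v, μ) = NN E n (v, -μ) := by
    intro r hr IH v μ hv
    set Eltr := E'.filter (fun p => w p.1 < r) with hEltrdef
    set Eger := E'.filter (fun p => ¬ w p.1 < r) with hEgerdef
    set Glt : AddMonoidAlgebra ℤ (V × ℝ) := ∏ p ∈ Eltr, (1 - ee p) ^ n p with hGltdef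
    set Gge : AddMonoidAlgebra ℤ (V × ℝ) := ∏ p ∈ Eger, (1 - ee p) ^ n p with hGgedef
    have hGsplit : Gh = Glt * Gge := by
      rw [hGhdef, hGltdef, hGgedef, hEltrdef, hEgerdef, Finset.prod_filter_mul_prod_filter_not]
    obtain ⟨glt, hglteq, hglt⟩ := goodpos_prod w Eltr n
      (fun p hp => hE'pos p (Finset.mem_of_mem_filter p hp))
    obtain ⟨gge, hggeeq, hgge⟩ := slice_prod w r hr Eger n
      (fun p hp => not_lt.1 (Finset.mem_filter.1 hp).2)
    rw [← hGltdef] at hglteq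
    rw [← hGgedef] at hggeeq
    have hGltcoeff : ∀ q : V × ℝ, w q.1 ≤ 0 → Glt.coeff q = if q = 0 then 1 else 0 := by
      intro q hq
      rw [hglteq, AddMonoidAlgebra.coeff_add, Finsupp.add_apply]
      have h1 : (1 : AddMonoidAlgebra ℤ (V × ℝ)).coeff q = if q = 0 then 1 else 0 := by
        rw [AddMonoidAlgebra.one_def, AddMonoidAlgebra.coeff_single_apply]
        simp [eq_comm]
      have h2 : glt.coeff q = 0 := by
        rw [← Finsupp.notMem_support_iff]
        intro hc
        exact absurd (hglt q hc) (not_lt.2 hq)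
      rw [h1, h2, add_zero]
    have hmemiff : ∀ μ' : ℝ, (((v, μ') : V × ℝ) ∈ Eger) ↔ ((v, μ') ∈ E) := by
      intro μ'
      constructor
      · intro h
        exact Finset.mem_of_mem_erase (Finset.mem_of_mem_filter _ h)
      · intro h
        have hne : ((v, μ') : V × ℝ) ≠ ((0 : V), (1 : ℝ)) := by
          intro hc
          have hv0 : v = 0 := congrArg Prod.fst hc
          rw [hv0, map_zero] at hv
          linarith
        refine Finset.mem_filter.2 ⟨Finset.mem_erase.2 ⟨hne, h⟩, ?_⟩
        show ¬ w v < r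
        rw [hv]
        exact lt_irrefl r
    have EQ1 : ∀ μ' : ℝ, Gh.coeff (v, μ') = Glt.coeff (v, μ') - (NN E n (v, μ') : ℤ) := by
      intro μ'
      have hexp : Gh = Glt - Glt * (∑ p ∈ Eger, AddMonoidAlgebra.single p ((n p : ℤ)))
          + Glt * gge := by
        rw [hGsplit, hggeeq]
        ring
      rw [hexp, AddMonoidAlgebra.coeff_add, Finsupp.add_apply, AddMonoidAlgebra.coeff_sub, Finsupp.sub_apply]
      have hS : (Glt * (∑ p ∈ Eger, AddMonoidAlgebra.single p ((n p : ℤ)))).coeff (v, μ')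
          = (NN E n (v, μ') : ℤ) := by
        rw [Finset.mul_sum, AddMonoidAlgebra.coeff_sum, Finsupp.finset_sum_apply]
        have hterm : ∀ p ∈ Eger, (Glt * AddMonoidAlgebra.single p ((n p : ℤ))).coeff (v, μ')
            = if p = (v, μ') then (n p : ℤ) else 0 := by
          intro p hp
          rw [AddMonoidAlgebra.coeff_mul_single_apply, ← sub_eq_add_neg]
          have hwp : r ≤ w p.1 := not_lt.1 (Finset.mem_filter.1 hp).2
          have hwq : w (((v, μ') : V × ℝ) - p).1 ≤ 0 := by
            have he : (((v, μ') : V × ℝ) - p).1 = v - p.1 := rfl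
            rw [he, map_sub, hv]
            linarith
          rw [hGltcoeff _ hwq]
          by_cases hc : p = (v, μ')
          · rw [if_pos hc, if_pos (by rw [hc, sub_self]), one_mul]
          · rw [if_neg hc, if_neg (fun h0 => hc (sub_eq_zero.1 h0).symm), zero_mul]
        rw [Finset.sum_congr rfl hterm, Finset.sum_ite_eq' Eger ((v, μ') : V × ℝ)
          (fun p => (n p : ℤ))]
        by_cases hmem : ((v, μ') : V × ℝ) ∈ E
        · rw [if_pos ((hmemiff μ').2 hmem), NN_mem hmem]
        · rw [if_neg (fun hc => hmem ((hmemiff μ').1 hc)), NN_not_mem hmem]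
          simp
      have hgge0 : (Glt * gge).coeff (v, μ') = 0 := by
        rw [← Finsupp.notMem_support_iff]
        intro hc
        rcases Finset.mem_add.1 (AddMonoidAlgebra.support_coeff_mul_subset _ _ hc) with
          ⟨q₁, h₁, q₂, h₂, h12⟩
        have hw1 : 0 ≤ w q₁.1 := by
          rw [hglteq] at h₁
          rcases Finset.mem_union.1 (Finsupp.support_add h₁) with h | h
          · have h1q : q₁ ∈ ({(0 : V × ℝ)} : Finset (V × ℝ)) := by
              rw [AddMonoidAlgebra.one_def] at h
              exact Finsupp.support_single_subset h
            rw [Finset.mem_singleton] at h1q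
            rw [h1q]
            simp
          · exact le_of_lt (hglt q₁ h)
        have hw2 := hgge q₂ h₂
        have hsum : w v = w q₁.1 + w q₂.1 := by
          have : (((v, μ') : V × ℝ)).1 = (q₁ + q₂).1 := by rw [h12]
          have h2 : v = q₁.1 + q₂.1 := this
          rw [h2, map_add]
        rw [hv] at hsum
        linarith
      rw [hS, hgge0, add_zero]
    -- symmetry of Glt coefficients via the reflection τ
    have hτE : ∀ p ∈ Eltr, (τ p ∈ Eltr) ∧ n (τ p) = n p := by
      intro p hp
      obtain ⟨hpE', hpr⟩ := Finset.mem_filter.1 hp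
      have hp0 : 0 < w p.1 := hE'pos p hpE'
      have hpE : p ∈ E := Finset.mem_of_mem_erase hpE'
      have hIH := IH (w p.1) hp0 (Finset.mem_image.2 ⟨p, hpE', rfl⟩) hpr p.1 p.2 rfl
      have hNNp : NN E n (p.1, p.2) = n p := by
        rw [show ((p.1, p.2) : V × ℝ) = p from rfl]
        exact NN_mem hpE
      rw [hNNp] at hIH
      have hmem : ((p.1, -p.2) : V × ℝ) ∈ E := by
        by_contra hc
        rw [NN_not_mem hc] at hIH
        have := hn p hpE
        omega
      have hnτ : n ((p.1, -p.2) : V × ℝ) = n p := by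
        rw [NN_mem hmem] at hIH
        omega
      constructor
      · rw [hτapp]
        refine Finset.mem_filter.2 ⟨Finset.mem_erase.2 ⟨?_, hmem⟩, ?_⟩
        · intro hc
          have hp1 : p.1 = 0 := congrArg Prod.fst hc
          rw [hp1, map_zero] at hp0
          exact lt_irrefl 0 hp0
        · show w p.1 < r
          exact hpr
      · rw [hτapp]
        exact hnτ
    have hTGlt : AddMonoidAlgebra.mapDomain (τ : V × ℝ → V × ℝ) Glt = Glt := by
      have h1 : AddMonoidAlgebra.mapDomain (τ : V × ℝ → V × ℝ) Glt
          = (AddMonoidAlgebra.mapDomainRingHom ℤ τ.toAddMonoidHom) Glt := rfl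
      have h2 : ∀ p ∈ Eltr, (AddMonoidAlgebra.mapDomainRingHom ℤ τ.toAddMonoidHom)
          ((1 - ee p) ^ n p) = ((1 : AddMonoidAlgebra ℤ (V × ℝ)) - ee (τ p)) ^ n p := by
        intro p hp
        rw [map_pow, map_sub, map_one]
        have hsingle : (AddMonoidAlgebra.mapDomainRingHom ℤ τ.toAddMonoidHom) (ee p)
            = ee (τ p) := by
          show AddMonoidAlgebra.mapDomain (τ : V × ℝ → V × ℝ) (AddMonoidAlgebra.single p (1 : ℤ))
            = ee (τ p)
          rw [AddMonoidAlgebra.mapDomain_single]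
          rfl
        rw [hsingle]
      have hprod : (∏ p ∈ Eltr, ((1 : AddMonoidAlgebra ℤ (V × ℝ)) - ee (τ p)) ^ n p)
          = ∏ p ∈ Eltr, ((1 : AddMonoidAlgebra ℤ (V × ℝ)) - ee p) ^ n p := by
        apply Finset.prod_nbij' (fun p => τ p) (fun p => τ p)
        · intro p hp
          exact (hτE p hp).1
        · intro p hp
          exact (hτE p hp).1
        · intro p _
          rw [hτapp, hτapp]
          simp
        · intro p _
          rw [hτapp, hτapp]
          simp
        · intro p hp
          rw [(hτE p hp).2]
      rw [h1, hGltdef, map_prod, Finset.prod_congr rfl h2, hprod]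
    have hGltsym : ∀ μ' : ℝ, Glt.coeff (v, μ') = Glt.coeff (v, -μ') := by
      intro μ'
      have h1 : Glt.coeff (τ ((v, μ') : V × ℝ)) = Glt.coeff (v, μ') := by
        conv_lhs => rw [← hTGlt]
        rw [AddMonoidAlgebra.coeff_mapDomain]
        exact Finsupp.mapDomain_apply hτinj Glt.coeff _
      rw [← h1, hτapp]
    -- block symmetry of Gh-coefficients
    set h : ℝ → ℤ := fun μ' => Gh.coeff (v, μ') with hhdef
    have hfin : {μ' : ℝ | h μ' ≠ 0}.Finite := by
      have hsub : {μ' : ℝ | h μ' ≠ 0} ⊆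
          (fun μ' : ℝ => ((v, μ') : V × ℝ)) ⁻¹' (Gh.coeff.support : Set (V × ℝ)) := by
        intro μ' hμ'
        simp only [Set.mem_preimage, Finset.coe_sort_coe, Finset.mem_coe,
          Finsupp.mem_support_iff]
        exact hμ'
      apply Set.Finite.subset _ hsub
      apply Set.Finite.preimage
      · intro a _ b _ hab
        simpa [Prod.ext_iff] using hab
      · exact (Gh.coeff.support : Set (V × ℝ)).toFinite
    have hblkhyp : ∀ μ₁ μ₂ : ℝ, h μ₁ - h (μ₁ - 1) ≠ 0 → h μ₂ - h (μ₂ - 1) ≠ 0 →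
        μ₁ ≠ μ₂ → μ₁ + μ₂ = 1 := by
      intro μ₁ μ₂ h1 h2 hne
      have hF1 : ((v, μ₁) : V × ℝ) ∈ F.coeff.support := by
        rw [Finsupp.mem_support_iff, coeffF]
        exact h1
      have hF2 : ((v, μ₂) : V × ℝ) ∈ F.coeff.support := by
        rw [Finsupp.mem_support_iff, coeffF]
        exact h2
      have := hB v μ₁ μ₂ hF1 hF2 hne
      rw [hB1] at this
      exact this
    have hblk := block_symm h hfin hblkhyp
    have e1 := EQ1 μ
    have e2 := EQ1 (-μ)
    have e3 := hGltsym μ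
    have e4 := hblk μ
    have hfinal : (NN E n (v, μ) : ℤ) = (NN E n (v, -μ) : ℤ) := by
      have f1 : (NN E n (v, μ) : ℤ) = Glt.coeff (v, μ) - Gh.coeff (v, μ) := by
        rw [e1]; ring
      have f2 : (NN E n (v, -μ) : ℤ) = Glt.coeff (v, -μ) - Gh.coeff (v, -μ) := by
        rw [e2]; ring
      rw [f1, f2, ← e3]
      have : Gh.coeff (v, μ) = Gh.coeff (v, -μ) := e4
      rw [this]
    exact_mod_cast hfinal
  -- wrap up the induction on the number of lower levels
  have main : ∀ (k : ℕ) (r : ℝ), (L.filter (fun x => x < r)).card ≤ k → 0 < r →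
      ∀ (v : V) (μ : ℝ), w v = r → NN E n (v, μ) = NN E n (v, -μ) := by
    intro k
    induction k with
    | zero =>
      intro r hcard hr
      apply step r hr
      intro r' hr'0 hr'L hr'r
      exfalso
      have hmem : r' ∈ L.filter (fun x => x < r) := Finset.mem_filter.2 ⟨hr'L, hr'r⟩
      have := Finset.card_pos.2 ⟨r', hmem⟩
      omega
    | succ k ihk =>
      intro r hcard hr
      apply step r hr
      intro r' hr'0 hr'L hr'r
      apply ihk r' ?_ hr'0
      have hss : L.filter (fun x => x < r') ⊂ L.filter (fun x => x < r) := by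
        constructor
        · intro x hx
          obtain ⟨hx1, hx2⟩ := Finset.mem_filter.1 hx
          exact Finset.mem_filter.2 ⟨hx1, lt_trans hx2 hr'r⟩
        · intro hsub
          have hmem : r' ∈ L.filter (fun x => x < r') :=
            hsub (Finset.mem_filter.2 ⟨hr'L, hr'r⟩)
          exact lt_irrefl r' (Finset.mem_filter.1 hmem).2
      have := Finset.card_lt_card hss
      omega
  refine ⟨hclass, ?_⟩
  intro v μ hv
  exact main ((L.filter (fun x => x < w v)).card) (w v) le_rfl hv v μ rfl

end Stmt8Aux

open scoped RealInnerProductSpace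

namespace Stmt8AuxB

open AddMonoidAlgebra

/-- generic vector avoiding finitely many hyperplanes -/
lemma avoid {V : Type*} [NormedAddCommGroup V] [InnerProductSpace ℝ V]
    (U : Finset V) (hU : ∀ u ∈ U, u ≠ 0) :
    ∃ z : V, ∀ u ∈ U, ⟪z, u⟫ ≠ 0 := by
  classical
  induction U using Finset.induction_on with
  | empty => exact ⟨0, fun u hu => absurd hu (Finset.notMem_empty u)⟩
  | @insert u₀ U hu₀ ih =>
    obtain ⟨z, hz⟩ := ih (fun u hu => hU u (Finset.mem_insert_of_mem hu))
    have hu₀ne : u₀ ≠ 0 := hU u₀ (Finset.mem_insert_self _ _)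
    by_cases hc : ⟪z, u₀⟫ ≠ 0
    · refine ⟨z, fun u hu => ?_⟩
      rcases Finset.mem_insert.1 hu with h | h
      · rw [h]; exact hc
      · exact hz u h
    · push_neg at hc
      set bad : Finset ℝ := insert 0 ((U.filter (fun u => ⟪u₀, u⟫ ≠ 0)).image
        (fun u => -⟪z, u⟫ / ⟪u₀, u⟫)) with hbad
      obtain ⟨ε, hε⟩ := Infinite.exists_notMem_finset bad
      have hε0 : ε ≠ 0 := fun h => hε (by rw [h, hbad]; exact Finset.mem_insert_self _ _)
      refine ⟨z + ε • u₀, ?_⟩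
      intro u hu
      rcases Finset.mem_insert.1 hu with h | h
      · rw [h, inner_add_left, real_inner_smul_left, hc, zero_add]
        intro h0
        rcases mul_eq_zero.1 h0 with h1 | h1
        · exact hε0 h1
        · exact hu₀ne (inner_self_eq_zero.1 h1)
      · rw [inner_add_left, real_inner_smul_left]
        by_cases hcc : ⟪u₀, u⟫ = 0
        · rw [hcc, mul_zero, add_zero]; exact hz u h
        · intro h0
          apply hε
          rw [hbad]
          apply Finset.mem_insert_of_mem
          apply Finset.mem_image.2
          refine ⟨u, Finset.mem_filter.2 ⟨h, hcc⟩, ?_⟩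
          field_simp
          linarith

variable {V : Type*} [AddCommGroup V]

lemma prod_single_int {ι : Type*} (D : Finset ι) (c : ι → V) (σ : ι → ℤ) :
    (∏ s ∈ D, (AddMonoidAlgebra.single (c s) (σ s) : AddMonoidAlgebra ℤ V))
      = AddMonoidAlgebra.single (∑ s ∈ D, c s) (∏ s ∈ D, σ s) := by
  classical
  induction D using Finset.induction_on with
  | empty =>
    simp [AddMonoidAlgebra.one_def]
  | @insert s D hs ih =>
    rw [Finset.prod_insert hs, ih, AddMonoidAlgebra.single_mul_single,
      Finset.sum_insert hs, Finset.prod_insert hs]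

lemma flip_factor (s : V) (k : ℕ) :
    ((1 : AddMonoidAlgebra ℤ V) - AddMonoidAlgebra.single (-s) (1 : ℤ)) ^ k
      = AddMonoidAlgebra.single (-(k • s)) ((-1) ^ k)
        * ((1 : AddMonoidAlgebra ℤ V) - AddMonoidAlgebra.single s (1 : ℤ)) ^ k := by
  have h1 : (1 : AddMonoidAlgebra ℤ V) - AddMonoidAlgebra.single (-s) (1 : ℤ)
      = AddMonoidAlgebra.single (-s) (-1 : ℤ)
        * ((1 : AddMonoidAlgebra ℤ V) - AddMonoidAlgebra.single s (1 : ℤ)) := by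
    rw [mul_sub, mul_one, AddMonoidAlgebra.single_mul_single, neg_add_cancel]
    have e1 : AddMonoidAlgebra.single (-s) (-1 : ℤ)
        = -AddMonoidAlgebra.single (-s) (1 : ℤ) := by
      have := AddMonoidAlgebra.single_neg (-s) (1 : ℤ)
      simpa using this.symm ▸ rfl
    have e2 : AddMonoidAlgebra.single (0 : V) ((-1 : ℤ) * 1)
        = -(1 : AddMonoidAlgebra ℤ V) := by
      rw [AddMonoidAlgebra.one_def, mul_one]
      have := AddMonoidAlgebra.single_neg (0 : V) (1 : ℤ)
      simpa using this.symm ▸ rfl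
    rw [e1, e2]
    abel
  rw [h1, mul_pow, AddMonoidAlgebra.single_pow, smul_neg]

end Stmt8AuxB

open scoped RealInnerProductSpace

theorem stmt8 {V : Type*} [NormedAddCommGroup V] [InnerProductSpace ℝ V]
    [FiniteDimensional ℝ V]
    (m : V → ℕ) (h0 : m 0 = 0) (hfin : (Function.support m).Finite)
    (hne : (Function.support m).Nonempty)
    (hspan : Submodule.span ℝ (Function.support m) = ⊤)
    (hsphere : ∃ c : V, ∃ r : ℝ, 0 < r ∧ ∀ l ∈ (Fm m hfin).coeff.support, ‖l - c‖ = r) :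
    ∀ a ∈ Function.support m, ∀ b ∈ Function.support m,
      b - (2 * ⟪a, b⟫ / ‖a‖ ^ 2) • a ∈ Function.support m ∪ (-Function.support m) := by
  classical
  obtain ⟨c, r, hr, hsph⟩ := hsphere
  intro a ha b hb
  set D := hfin.toFinset with hDdef
  have hD : ∀ s : V, s ∈ D ↔ m s ≠ 0 := by
    intro s; rw [hDdef, Set.Finite.mem_toFinset]; rfl
  have haD : a ∈ D := (hD a).2 ha
  have hbD : b ∈ D := (hD b).2 hb
  have h0D : ∀ s ∈ D, s ≠ 0 := by
    intro s hs hs0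
    rw [hs0] at hs
    exact ((hD 0).1 hs) h0
  have ha0 : a ≠ 0 := h0D a haD
  have hna : ‖a‖ ^ 2 ≠ 0 := pow_ne_zero 2 (norm_ne_zero_iff.2 ha0)
  set μf : V → ℝ := fun v => ⟪a, v⟫ / ‖a‖ ^ 2 with hμdef
  set πf : V → V := fun v => v - μf v • a with hπdef
  have hrecon : ∀ v, πf v + μf v • a = v := by
    intro v
    show (v - μf v • a) + μf v • a = v
    abel
  have hμadd : ∀ x y, μf (x + y) = μf x + μf y := by
    intro x y
    show ⟪a, x + y⟫ / ‖a‖ ^ 2 = ⟪a, x⟫ / ‖a‖ ^ 2 + ⟪a, y⟫ / ‖a‖ ^ 2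
    rw [inner_add_right, add_div]
  have hμneg : ∀ x, μf (-x) = -μf x := by
    intro x
    show ⟪a, -x⟫ / ‖a‖ ^ 2 = -(⟪a, x⟫ / ‖a‖ ^ 2)
    rw [inner_neg_right, neg_div]
  have hπadd : ∀ x y, πf (x + y) = πf x + πf y := by
    intro x y
    show (x + y) - μf (x + y) • a = (x - μf x • a) + (y - μf y • a)
    rw [hμadd, add_smul]
    abel
  have hπneg : ∀ x, πf (-x) = -πf x := by
    intro x
    show -x - μf (-x) • a = -(x - μf x • a)
    rw [hμneg, neg_smul]
    abel
  have hμa : μf a = 1 := by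
    show ⟪a, a⟫ / ‖a‖ ^ 2 = 1
    rw [real_inner_self_eq_norm_sq]
    field_simp
  have hπa : πf a = 0 := by
    show a - μf a • a = 0
    rw [hμa, one_smul, sub_self]
  have hinner : ∀ v, ⟪a, v⟫ = μf v * ‖a‖ ^ 2 := by
    intro v
    show ⟪a, v⟫ = ⟪a, v⟫ / ‖a‖ ^ 2 * ‖a‖ ^ 2
    field_simp
  by_cases hπb : πf b = 0
  · -- b is parallel to a : the reflection is -b
    set tb := μf b with htb
    have hbeq : b = tb • a := by
      have h1 := hrecon b
      rw [hπb, zero_add] at h1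
      exact h1.symm
    have hscal : 2 * ⟪a, b⟫ / ‖a‖ ^ 2 = 2 * tb := by
      rw [htb]
      show 2 * ⟪a, b⟫ / ‖a‖ ^ 2 = 2 * (⟪a, b⟫ / ‖a‖ ^ 2)
      ring
    have hgoal : b - (2 * ⟪a, b⟫ / ‖a‖ ^ 2) • a = -b := by
      rw [hscal, hbeq, ← sub_smul]
      have he : tb - 2 * tb = -tb := by ring
      rw [he, neg_smul]
    rw [hgoal]
    right
    rw [Set.mem_neg, neg_neg]
    exact hb
  -- main case : b not parallel to a
  set U : Finset V := (D.image πf).erase 0 with hUdef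
  obtain ⟨z, hzU⟩ := Stmt8AuxB.avoid U (fun u hu => (Finset.mem_erase.1 hu).1)
  have hzD : ∀ s ∈ D, πf s ≠ 0 → ⟪z, πf s⟫ ≠ 0 := by
    intro s hs hπs
    exact hzU _ (Finset.mem_erase.2 ⟨hπs, Finset.mem_image_of_mem πf hs⟩)
  set fl : V → V := fun s => if ⟪z, πf s⟫ < 0 then -s else s with hfldef
  have hfla : fl a = a := by
    show (if ⟪z, πf a⟫ < 0 then -a else a) = a
    rw [hπa, inner_zero_right, if_neg (lt_irrefl 0)]
  have hflpm : ∀ s, fl s = s ∨ fl s = -s := by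
    intro s
    show ((if ⟪z, πf s⟫ < 0 then -s else s) = s) ∨ ((if ⟪z, πf s⟫ < 0 then -s else s) = -s)
    split_ifs
    · right; rfl
    · left; rfl
  have hwpos : ∀ s ∈ D, πf s ≠ 0 → 0 < ⟪z, πf (fl s)⟫ := by
    intro s hs hπs
    show 0 < ⟪z, πf (if ⟪z, πf s⟫ < 0 then -s else s)⟫
    split_ifs with hneg
    · rw [hπneg, inner_neg_right]
      linarith
    · push_neg at hneg
      exact lt_of_le_of_ne hneg (Ne.symm (hzD s hs hπs))
  set ζ : V → V × ℝ := fun v => (πf v, μf v) with hζdef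
  set w : V →+ ℝ := AddMonoidHom.mk' (fun v => ⟪z, v⟫) (fun x y => inner_add_right z x y)
    with hwdef
  have hwapp : ∀ v : V, w v = ⟪z, v⟫ := fun v => rfl
  set E : Finset (V × ℝ) := D.image (fun s => ζ (fl s)) with hEdef
  set n : V × ℝ → ℕ := fun q => ∑ s ∈ D.filter (fun s => ζ (fl s) = q), m s with hndef
  set F' : AddMonoidAlgebra ℤ V :=
    ∏ s ∈ D, ((1 : AddMonoidAlgebra ℤ V) - AddMonoidAlgebra.single (fl s) (1 : ℤ)) ^ m s
    with hF'def
  have hFm : Fm m hfin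
      = ∏ s ∈ D, ((1 : AddMonoidAlgebra ℤ V) - AddMonoidAlgebra.single s (1 : ℤ)) ^ m s := rfl
  -- unit relation between F' and Fm
  set cc : V → V := fun s => if ⟪z, πf s⟫ < 0 then -((m s) • s) else 0 with hccdef
  set sg : V → ℤ := fun s => if ⟪z, πf s⟫ < 0 then (-1) ^ (m s) else 1 with hsgdef
  have hfactor : ∀ s ∈ D,
      ((1 : AddMonoidAlgebra ℤ V) - AddMonoidAlgebra.single (fl s) (1 : ℤ)) ^ m s
        = AddMonoidAlgebra.single (cc s) (sg s)
          * ((1 : AddMonoidAlgebra ℤ V) - AddMonoidAlgebra.single s (1 : ℤ)) ^ m s := by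
    intro s _
    show ((1 : AddMonoidAlgebra ℤ V)
        - AddMonoidAlgebra.single (if ⟪z, πf s⟫ < 0 then -s else s) (1 : ℤ)) ^ m s
      = AddMonoidAlgebra.single (if ⟪z, πf s⟫ < 0 then -((m s) • s) else 0)
          (if ⟪z, πf s⟫ < 0 then (-1) ^ (m s) else 1) * _
    split_ifs with hcond
    · exact Stmt8AuxB.flip_factor s (m s)
    · rw [← AddMonoidAlgebra.one_def, one_mul]
  have hF'u : F' = AddMonoidAlgebra.single (∑ s ∈ D, cc s) (∏ s ∈ D, sg s) * Fm m hfin := by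
    rw [hF'def, Finset.prod_congr rfl hfactor, Finset.prod_mul_distrib,
      Stmt8AuxB.prod_single_int, hFm]
  set w₀ : V := ∑ s ∈ D, cc s with hw₀def
  set σ : ℤ := ∏ s ∈ D, sg s with hσdef
  have hσpm : σ = 1 ∨ σ = -1 := by
    rw [hσdef]
    apply Finset.prod_induction sg (fun x => x = 1 ∨ x = -1)
    · rintro x y (rfl | rfl) (rfl | rfl) <;> norm_num
    · left; rfl
    · intro s _
      show ((if ⟪z, πf s⟫ < 0 then ((-1 : ℤ)) ^ (m s) else 1) = 1)
        ∨ ((if ⟪z, πf s⟫ < 0 then ((-1 : ℤ)) ^ (m s) else 1) = -1)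
      split_ifs
      · exact neg_one_pow_eq_or ℤ (m s)
      · left; rfl
  have hσne : σ ≠ 0 := by rcases hσpm with h | h <;> rw [h] <;> norm_num
  have hsuppF' : ∀ l ∈ F'.coeff.support, ‖l - (c + w₀)‖ = r := by
    intro l hl
    have hco : F'.coeff l = σ * (Fm m hfin).coeff (l - w₀) := by
      rw [hF'u, AddMonoidAlgebra.coeff_single_mul_apply, sub_eq_neg_add]
    have hmem : (l - w₀) ∈ (Fm m hfin).coeff.support := by
      rw [Finsupp.mem_support_iff] at hl ⊢
      intro hcz
      rw [hco, hcz, mul_zero] at hl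
      exact hl rfl
    have he : l - (c + w₀) = l - w₀ - c := by abel
    rw [he]
    exact hsph _ hmem
  -- the pushed-forward product and the core hypotheses
  set Zhom : V →+ V × ℝ := AddMonoidHom.mk' ζ (fun x y => by
    show (πf (x + y), μf (x + y)) = (πf x + πf y, μf x + μf y)
    rw [hπadd, hμadd]) with hZdef
  have hZapp : ∀ v : V, Zhom v = (πf v, μf v) := fun v => rfl
  have hFhat : (∏ q ∈ E, (1 - Stmt8Aux.ee q) ^ n q : AddMonoidAlgebra ℤ (V × ℝ))
      = (AddMonoidAlgebra.mapDomainRingHom ℤ Zhom) F' := by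
    have hc1 : (∏ q ∈ E, (1 - Stmt8Aux.ee q) ^ n q : AddMonoidAlgebra ℤ (V × ℝ))
        = ∏ q ∈ E, ∏ s ∈ D.filter (fun s => ζ (fl s) = q), (1 - Stmt8Aux.ee (ζ (fl s))) ^ m s := by
      apply Finset.prod_congr rfl
      intro q hq
      rw [hndef, ← Finset.prod_pow_eq_pow_sum]
      apply Finset.prod_congr rfl
      intro s hs
      rw [(Finset.mem_filter.1 hs).2]
    have hc2 : (∏ q ∈ E, ∏ s ∈ D.filter (fun s => ζ (fl s) = q),
          (1 - Stmt8Aux.ee (ζ (fl s))) ^ m s : AddMonoidAlgebra ℤ (V × ℝ))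
        = ∏ s ∈ D, (1 - Stmt8Aux.ee (ζ (fl s))) ^ m s := by
      apply Finset.prod_fiberwise_of_maps_to
      intro s hs
      rw [hEdef]
      exact Finset.mem_image_of_mem _ hs
    rw [hc1, hc2, hF'def, map_prod]
    apply Finset.prod_congr rfl
    intro s _
    rw [map_pow, map_sub, map_one]
    have hsing : (AddMonoidAlgebra.mapDomainRingHom ℤ Zhom)
        (AddMonoidAlgebra.single (fl s) (1 : ℤ)) = Stmt8Aux.ee (ζ (fl s)) := by
      show AddMonoidAlgebra.mapDomain (Zhom : V → V × ℝ) (AddMonoidAlgebra.single (fl s) (1 : ℤ)) = _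
      rw [AddMonoidAlgebra.mapDomain_single]
      rfl
    rw [hsing]
  have hn' : ∀ q ∈ E, 1 ≤ n q := by
    intro q hq
    rw [hEdef] at hq
    obtain ⟨s₁, hs₁D, hs₁⟩ := Finset.mem_image.1 hq
    have hms₁ : 1 ≤ m s₁ := Nat.one_le_iff_ne_zero.2 ((hD s₁).1 hs₁D)
    have hmem : s₁ ∈ D.filter (fun s => ζ (fl s) = q) := Finset.mem_filter.2 ⟨hs₁D, hs₁⟩
    calc 1 ≤ m s₁ := hms₁
    _ ≤ n q := Finset.single_le_sum (fun i _ => Nat.zero_le _) hmem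
  have hbase' : ((0 : V), (1 : ℝ)) ∈ E := by
    rw [hEdef]
    refine Finset.mem_image.2 ⟨a, haD, ?_⟩
    rw [hfla]
    show (πf a, μf a) = ((0 : V), (1 : ℝ))
    rw [hπa, hμa]
  have hwt' : ∀ q ∈ E, 0 < w q.1 ∨ (q.1 = 0 ∧ q.2 ≠ 0) := by
    intro q hq
    rw [hEdef] at hq
    obtain ⟨s, hsD, hs⟩ := Finset.mem_image.1 hq
    by_cases hπs : πf s = 0
    · right
      have hflπ : πf (fl s) = 0 := by
        rcases hflpm s with h | h <;> rw [h]
        · exact hπs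
        · rw [hπneg, hπs, neg_zero]
      have hμs : μf s ≠ 0 := by
        intro hc
        have h1 := hrecon s
        rw [hπs, hc, zero_smul, add_zero] at h1
        exact h0D s hsD h1.symm
      have hflμ : μf (fl s) ≠ 0 := by
        rcases hflpm s with h | h <;> rw [h]
        · exact hμs
        · rw [hμneg]
          exact neg_ne_zero.2 hμs
      constructor
      · rw [← hs]
        exact hflπ
      · rw [← hs]
        exact hflμ
    · left
      rw [← hs]
      show 0 < w (πf (fl s))
      rw [hwapp]
      exact hwpos s hsD hπs
  have hsph' : ∃ B : ℝ, ∀ (v : V) (μ₁ μ₂ : ℝ),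
      (v, μ₁) ∈ (∏ q ∈ E, (1 - Stmt8Aux.ee q) ^ n q).coeff.support →
      (v, μ₂) ∈ (∏ q ∈ E, (1 - Stmt8Aux.ee q) ^ n q).coeff.support → μ₁ ≠ μ₂ → μ₁ + μ₂ = B := by
    refine ⟨2 * ⟪a, c + w₀⟫ / ‖a‖ ^ 2, ?_⟩
    intro v μ₁ μ₂ h1 h2 hnem
    rw [hFhat] at h1 h2
    obtain ⟨l₁, hl₁s, hl₁⟩ := Finset.mem_image.1 (Finsupp.mapDomain_support (f := (Zhom : V → V × ℝ)) (s := F'.coeff) h1)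
    obtain ⟨l₂, hl₂s, hl₂⟩ := Finset.mem_image.1 (Finsupp.mapDomain_support (f := (Zhom : V → V × ℝ)) (s := F'.coeff) h2)
    have hπ1 : πf l₁ = v := congrArg Prod.fst hl₁
    have hμ1 : μf l₁ = μ₁ := congrArg Prod.snd hl₁
    have hπ2 : πf l₂ = v := congrArg Prod.fst hl₂
    have hμ2 : μf l₂ = μ₂ := congrArg Prod.snd hl₂
    have hdiff : l₁ - l₂ = (μ₁ - μ₂) • a := by
      have e1 := hrecon l₁
      have e2 := hrecon l₂
      rw [hπ1, hμ1] at e1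
      rw [hπ2, hμ2] at e2
      rw [← e1, ← e2, sub_smul]
      abel
    have hs1 : ‖l₁ - (c + w₀)‖ = r := hsuppF' l₁ hl₁s
    have hs2 : ‖l₂ - (c + w₀)‖ = r := hsuppF' l₂ hl₂s
    set x := l₂ - (c + w₀) with hxdef
    have hl1x : l₁ - (c + w₀) = x + (μ₁ - μ₂) • a := by
      rw [hxdef, ← hdiff]
      abel
    have hsq : ‖x + (μ₁ - μ₂) • a‖ ^ 2 = ‖x‖ ^ 2 := by
      rw [← hl1x, hs1, hxdef, hs2]
    rw [norm_add_sq_real] at hsq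
    have hip : ⟪x, (μ₁ - μ₂) • a⟫ = (μ₁ - μ₂) * ⟪x, a⟫ := real_inner_smul_right x a (μ₁ - μ₂)
    have hnsm : ‖(μ₁ - μ₂) • a‖ ^ 2 = (μ₁ - μ₂) ^ 2 * ‖a‖ ^ 2 := by
      rw [norm_smul, Real.norm_eq_abs, mul_pow, sq_abs]
    rw [hip, hnsm] at hsq
    have hkey : 2 * ((μ₁ - μ₂) * ⟪x, a⟫) + (μ₁ - μ₂) ^ 2 * ‖a‖ ^ 2 = 0 := by linarith
    have hxa : ⟪x, a⟫ = μ₂ * ‖a‖ ^ 2 - ⟪a, c + w₀⟫ := by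
      rw [hxdef, inner_sub_left, real_inner_comm a l₂, real_inner_comm a (c + w₀),
        hinner l₂, hμ2]
    have hne2 : μ₁ - μ₂ ≠ 0 := sub_ne_zero.2 hnem
    have hkey2 : 2 * ⟪x, a⟫ + (μ₁ - μ₂) * ‖a‖ ^ 2 = 0 := by
      have hfac : (μ₁ - μ₂) * (2 * ⟪x, a⟫ + (μ₁ - μ₂) * ‖a‖ ^ 2) = 0 := by
        rw [← hkey]
        ring
      rcases mul_eq_zero.1 hfac with h | h
      · exact absurd h hne2
      · exact h
    rw [hxa] at hkey2
    have hfin2 : (μ₁ + μ₂) * ‖a‖ ^ 2 = 2 * ⟪a, c + w₀⟫ := by ring_nf; ring_nf at hkey2; linarith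
    field_simp
    linarith [hfin2]
  obtain ⟨hcls, hsym⟩ := Stmt8Aux.core w E n hn' hbase' hwt' hsph'
  -- extract the reflection partner of b
  set b' := fl b with hb'def
  have hπb' : πf b' ≠ 0 := by
    rw [hb'def]
    rcases hflpm b with h | h <;> rw [h]
    · exact hπb
    · rw [hπneg]
      exact neg_ne_zero.2 hπb
  have hwb' : 0 < w (πf b') := by
    rw [hwapp]
    exact hwpos b hbD hπb
  have hqbE : ζ b' ∈ E := by
    rw [hEdef]
    exact Finset.mem_image.2 ⟨b, hbD, by rw [hb'def]⟩
  have h1n : 1 ≤ Stmt8Aux.NN E n (ζ b') := by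
    rw [Stmt8Aux.NN_mem hqbE]
    exact hn' _ hqbE
  have hζb' : ζ b' = (πf b', μf b') := rfl
  have hsymb := hsym (πf b') (μf b') hwb'
  have h2n : 1 ≤ Stmt8Aux.NN E n (πf b', -μf b') := by
    rw [← hsymb, ← hζb']
    exact h1n
  have hmem2 : ((πf b', -μf b') : V × ℝ) ∈ E := by
    by_contra hcz
    rw [Stmt8Aux.NN_not_mem hcz] at h2n
    omega
  rw [hEdef] at hmem2
  obtain ⟨s₀, hs₀D, hs₀⟩ := Finset.mem_image.1 hmem2
  set t := fl s₀ with htdef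
  have hπt : πf t = πf b' := congrArg Prod.fst hs₀
  have hμt : μf t = -μf b' := congrArg Prod.snd hs₀
  have ht : t = πf b' - μf b' • a := by
    have h1 := hrecon t
    rw [hπt, hμt, neg_smul] at h1
    rw [← h1, sub_eq_add_neg]
  set gv := b - (2 * ⟪a, b⟫ / ‖a‖ ^ 2) • a with hgvdef
  have hscal : (2 : ℝ) * ⟪a, b⟫ / ‖a‖ ^ 2 = 2 * μf b := by
    show 2 * ⟪a, b⟫ / ‖a‖ ^ 2 = 2 * (⟪a, b⟫ / ‖a‖ ^ 2)
    ring
  have hgv2 : gv = πf b - μf b • a := by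
    rw [hgvdef, hscal]
    show b - (2 * μf b) • a = (b - μf b • a) - μf b • a
    rw [two_mul, add_smul]
    abel
  have hgvt : gv = t ∨ gv = -t := by
    rcases hflpm b with hfb | hfb
    · left
      rw [ht, hb'def, hfb, hgv2]
    · right
      rw [ht, hb'def, hfb, hπneg, hμneg, hgv2]
      rw [neg_smul, neg_sub]
      abel
  have hts : t = s₀ ∨ t = -s₀ := by
    rw [htdef]
    exact hflpm s₀
  have hgvs : gv = s₀ ∨ gv = -s₀ := by
    rcases hgvt with h1 | h1 <;> rcases hts with h2 | h2
    · left; rw [h1, h2]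
    · right; rw [h1, h2]
    · right; rw [h1, h2]
    · left; rw [h1, h2, neg_neg]
  rcases hgvs with h | h
  · left
    rw [h]
    exact (hD s₀).1 hs₀D
  · right
    rw [Set.mem_neg, h, neg_neg]
    exact (hD s₀).1 hs₀D
end

section
/- There exists a unique sequence (a_k)_{k≥1} of integers such that Π_{k=1}^∞ (1 − X^k)^{a_k} = 1 − 2X as formal power series over ℤ, and moreover each a_k is a positive integer, given explicitly by a_k = (1/k) Σ_{d | k} μ(k/d) 2^d, where μ is the Möbius function. -/
/-!
Applying `X · d/dX log` to `∏ (1 - X^k)^(a_k) = 1 - 2X` and comparing coefficients of `X^N` gives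
`∑_{d ∣ N} d a_d = 2^N` for every `N ≥ 1`. Möbius inversion solves this system, which yields
uniqueness and the formula; positivity follows because the term `2^N` dominates `∑_{d < N} 2^d`.
For existence the `a_k` are chosen one at a time: since `(1 - X^k)^m ≡ 1 - m X^k mod X^(k+1)`,
the exponent `a_k` can fix the coefficient of `X^k` without disturbing the lower ones.
-/

open PowerSeries

/-- The truncated form of the identity `∏_{k≥1} (1 - X^k)^{a k} = 1 - 2X` in `ℤ[[X]]`,
where negative exponents are moved to the other side. Here `a k` plays the role of
`a_{k+1}`. -/
def ProdEq (a : ℕ → ℤ) : Prop :=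
  ∀ n : ℕ, ∀ j ≤ n,
    PowerSeries.coeff j
        (∏ k ∈ Finset.range n,
          ((1 : PowerSeries ℤ) - (PowerSeries.X : PowerSeries ℤ) ^ (k + 1)) ^ (a k).toNat)
      = PowerSeries.coeff j
        (((1 : PowerSeries ℤ) - 2 * PowerSeries.X) *
          ∏ k ∈ Finset.range n,
            ((1 : PowerSeries ℤ) - (PowerSeries.X : PowerSeries ℤ) ^ (k + 1)) ^ (-(a k)).toNat)

open Finset

namespace PowerSeries

variable {R : Type*} [CommRing R]

noncomputable def xLogDeriv (u : R⟦X⟧ˣ) : R⟦X⟧ := X * d⁄dX R (u : R⟦X⟧) * (↑u⁻¹ : R⟦X⟧)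

theorem xLogDeriv_mul (u v : R⟦X⟧ˣ) : xLogDeriv (u * v) = xLogDeriv u + xLogDeriv v := by
  have hu : (u : R⟦X⟧) * (↑u⁻¹ : R⟦X⟧) = 1 := u.mul_inv
  have hv : (v : R⟦X⟧) * (↑v⁻¹ : R⟦X⟧) = 1 := v.mul_inv
  simp only [xLogDeriv, mul_inv_rev, Units.val_mul, Derivation.leibniz, smul_eq_mul]
  linear_combination (X * d⁄dX R (v : R⟦X⟧) * (↑v⁻¹ : R⟦X⟧)) * hu +
    (X * d⁄dX R (u : R⟦X⟧) * (↑u⁻¹ : R⟦X⟧)) * hv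

noncomputable def xLogDerivHom : R⟦X⟧ˣ →* Multiplicative R⟦X⟧ :=
  MonoidHom.mk' (fun u ↦ Multiplicative.ofAdd (xLogDeriv u)) xLogDeriv_mul

theorem xLogDeriv_zpow (u : R⟦X⟧ˣ) (m : ℤ) : xLogDeriv (u ^ m) = m • xLogDeriv u :=
  congrArg Multiplicative.toAdd (map_zpow xLogDerivHom u m)

theorem xLogDeriv_prod {ι : Type*} (s : Finset ι) (u : ι → R⟦X⟧ˣ) :
    xLogDeriv (∏ i ∈ s, u i) = ∑ i ∈ s, xLogDeriv (u i) :=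
  congrArg Multiplicative.toAdd (map_prod xLogDerivHom u s)

theorem X_pow_dvd_X_mul_derivative {n : ℕ} {f : R⟦X⟧} (h : X ^ n ∣ f) :
    X ^ n ∣ X * d⁄dX R f := by
  obtain ⟨g, rfl⟩ := h
  refine ⟨X * d⁄dX R g + (n : R⟦X⟧) * g, ?_⟩
  cases n with
  | zero => simp
  | succ n =>
    simp only [Derivation.leibniz, Derivation.leibniz_pow, derivative_X, smul_eq_mul,
      nsmul_eq_mul, Nat.add_sub_cancel, mul_one]
    push_cast
    ring

theorem X_pow_dvd_xLogDeriv_sub {n : ℕ} {u v : R⟦X⟧ˣ} (h : X ^ n ∣ (u : R⟦X⟧) - (v : R⟦X⟧)) :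
    X ^ n ∣ xLogDeriv u - xLogDeriv v := by
  have hu : (u : R⟦X⟧) * (↑u⁻¹ : R⟦X⟧) = 1 := u.mul_inv
  have hv : (v : R⟦X⟧) * (↑v⁻¹ : R⟦X⟧) = 1 := v.mul_inv
  have key : xLogDeriv u - xLogDeriv v =
      (X * d⁄dX R (u : R⟦X⟧) * ((v : R⟦X⟧) - (u : R⟦X⟧)) +
        X * d⁄dX R ((u : R⟦X⟧) - (v : R⟦X⟧)) * (u : R⟦X⟧)) *
        ((↑u⁻¹ : R⟦X⟧) * (↑v⁻¹ : R⟦X⟧)) := by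
    simp only [xLogDeriv, map_sub]
    linear_combination (-(X * d⁄dX R (u : R⟦X⟧) * (↑u⁻¹ : R⟦X⟧))) * hv +
      (X * d⁄dX R (v : R⟦X⟧) * (↑v⁻¹ : R⟦X⟧)) * hu
  rw [key, ← neg_sub (u : R⟦X⟧)]
  exact (dvd_add (h.neg_right.mul_left _) ((X_pow_dvd_X_mul_derivative h).mul_right _)).mul_right _

theorem one_sub_C_mul_X_pow_mul_mk (c : R) {s : ℕ} (hs : s ≠ 0) :
    (1 - C c * X ^ s) * mk (fun n ↦ if s ∣ n then c ^ (n / s) else 0) = 1 := by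
  ext n
  rw [sub_mul, one_mul, mul_assoc, map_sub, coeff_C_mul, coeff_X_pow_mul', coeff_mk, coeff_one]
  rcases le_or_gt s n with hsn | hns
  · obtain ⟨t, rfl⟩ := Nat.exists_eq_add_of_le' hsn
    have hpos : 0 < s := Nat.pos_of_ne_zero hs
    simp only [Nat.dvd_add_self_right, hsn, if_true, Nat.add_sub_cancel, coeff_mk,
      Nat.add_div_right t hpos, (Nat.add_pos_right t hpos).ne', if_false]
    split_ifs <;> ring
  · rcases eq_or_ne n 0 with rfl | hn
    · simp [hs]
    · simp [hns.not_ge, hn, Nat.not_dvd_of_pos_of_lt (Nat.pos_of_ne_zero hn) hns]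

/-- The unit `1 - c X^s` of `R⟦X⟧`, with inverse the geometric series `∑ₘ cᵐ X^(sm)`. -/
noncomputable def geomUnit (c : R) (s : ℕ) [NeZero s] : R⟦X⟧ˣ where
  val := 1 - C c * X ^ s
  inv := mk fun n ↦ if s ∣ n then c ^ (n / s) else 0
  val_inv := one_sub_C_mul_X_pow_mul_mk c (NeZero.ne s)
  inv_val := (mul_comm _ _).trans (one_sub_C_mul_X_pow_mul_mk c (NeZero.ne s))

variable (c : R) (s : ℕ) [NeZero s]

theorem coe_geomUnit : (geomUnit c s : R⟦X⟧) = 1 - C c * X ^ s := rfl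

theorem coeff_inv_geomUnit (n : ℕ) :
    coeff n (↑(geomUnit c s)⁻¹ : R⟦X⟧) = if s ∣ n then c ^ (n / s) else 0 := by
  simp [geomUnit]

theorem xLogDeriv_geomUnit :
    xLogDeriv (geomUnit c s) = s * (1 - (↑(geomUnit c s)⁻¹ : R⟦X⟧)) := by
  have hX : X * d⁄dX R (1 - C c * X ^ s) = -((s : R⟦X⟧) * (C c * X ^ s)) := by
    obtain ⟨t, rfl⟩ := Nat.exists_eq_add_one_of_ne_zero (NeZero.ne s)
    simp [Derivation.leibniz_pow]
    ring
  have hu := (geomUnit c s).mul_inv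
  rw [coe_geomUnit] at hu
  rw [xLogDeriv, coe_geomUnit, hX]
  linear_combination (s : R⟦X⟧) * hu

theorem coeff_xLogDeriv_geomUnit {n : ℕ} (hn : n ≠ 0) :
    coeff n (xLogDeriv (geomUnit c s)) = if s ∣ n then -(s * c ^ (n / s)) else 0 := by
  rw [xLogDeriv_geomUnit, ← map_natCast (C (R := R)), mul_sub, mul_one, map_sub, coeff_C_mul,
    coeff_inv_geomUnit, coeff_C, if_neg hn]
  split_ifs <;> ring

theorem X_pow_succ_dvd_geomUnit_zpow_sub (m : ℤ) :
    X ^ (s + 1) ∣ (↑(geomUnit c s ^ m) : R⟦X⟧) - (1 - C (m * c) * X ^ s) := by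
  have hs : s + 1 ≤ 2 * s := by have := NeZero.ne s; omega
  have step (m : ℤ) : X ^ (s + 1) ∣ (↑(geomUnit c s ^ m) : R⟦X⟧) - (1 - C (m * c) * X ^ s) ↔
      X ^ (s + 1) ∣ (↑(geomUnit c s ^ (m + 1)) : R⟦X⟧) - (1 - C ((m + 1 : ℤ) * c) * X ^ s) := by
    have key : (↑(geomUnit c s ^ (m + 1)) : R⟦X⟧) - (1 - C ((m + 1 : ℤ) * c) * X ^ s) =
        ((↑(geomUnit c s ^ m) : R⟦X⟧) - (1 - C (m * c) * X ^ s)) * (geomUnit c s : R⟦X⟧) +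
          C (m * c ^ 2) * X ^ (2 * s) := by
      rw [zpow_add_one, Units.val_mul, coe_geomUnit]
      simp only [Int.cast_add, Int.cast_one, add_mul, one_mul, map_add, map_mul, map_pow]
      ring
    rw [key, dvd_add_left ((pow_dvd_pow X hs).mul_left _), Units.dvd_mul_right]
  induction m using Int.induction_on with
  | zero => simp
  | succ i ih => exact (step i).mp ih
  | pred i ih => exact (step (-i - 1)).mpr (by simpa using ih)

theorem coe_prod_geomUnit_pow (e : ℕ → ℕ) (n : ℕ) :
    ((∏ k ∈ range n, geomUnit (1 : R) (k + 1) ^ e k : R⟦X⟧ˣ) : R⟦X⟧) =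
      ∏ k ∈ range n, (1 - X ^ (k + 1)) ^ e k := by
  simp [coe_geomUnit]

theorem coe_geomUnit_two_one : (geomUnit (2 : R) 1 : R⟦X⟧) = 1 - 2 * X := by
  rw [coe_geomUnit, pow_one, map_ofNat]

theorem X_pow_succ_dvd_mul_geomUnit_zpow_sub {P Q : ℤ⟦X⟧} {n : ℕ} (hQ : constantCoeff Q = 1)
    (h : X ^ (n + 1) ∣ P - Q) :
    X ^ (n + 2) ∣ P * (↑(geomUnit (1 : ℤ) (n + 1) ^ coeff (n + 1) (P - Q)) : ℤ⟦X⟧) - Q := by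
  obtain ⟨t, ht⟩ := h
  have hm : coeff (n + 1) (P - Q) = constantCoeff t := by
    rw [ht, coeff_X_pow_mul', if_pos le_rfl, Nat.sub_self, coeff_zero_eq_constantCoeff]
  rw [hm]
  set m := constantCoeff t
  have hP : X ∣ P - 1 := by
    have h0 := congrArg (constantCoeff (R := ℤ)) ht
    rw [map_sub, hQ, map_mul, map_pow, constantCoeff_X, zero_pow n.succ_ne_zero, zero_mul,
      sub_eq_zero] at h0
    rw [X_dvd_iff, map_sub, h0, map_one, sub_self]
  have ht' : X ∣ t - C m := by rw [X_dvd_iff, map_sub, constantCoeff_C, sub_self]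
  have hu := X_pow_succ_dvd_geomUnit_zpow_sub (1 : ℤ) (n + 1) m
  rw [mul_one] at hu
  have key : P * (↑(geomUnit (1 : ℤ) (n + 1) ^ m) : ℤ⟦X⟧) - Q =
      P * ((↑(geomUnit (1 : ℤ) (n + 1) ^ m) : ℤ⟦X⟧) - (1 - C m * X ^ (n + 1))) +
        X ^ (n + 1) * (t - C m) - C m * (X ^ (n + 1) * (P - 1)) := by
    linear_combination ht
  rw [key, pow_succ]
  exact dvd_sub (dvd_add (hu.mul_left P) (mul_dvd_mul_left _ ht'))
    ((mul_dvd_mul_left _ hP).mul_left _)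

end PowerSeries

theorem Nat.sum_divisors_eq_sum_range {M : Type*} [AddCommMonoid M] (f : ℕ → M) (N : ℕ) :
    ∑ d ∈ N.divisors, f d = ∑ k ∈ range N, if k + 1 ∣ N then f (k + 1) else 0 := by
  rw [Nat.divisors, sum_filter, range_eq_Ico, sum_Ico_add' (fun d ↦ if d ∣ N then f d else 0)]

theorem ArithmeticFunction.sum_divisors_moebius_mul_pow_pos {q : ℕ} (hq : 2 ≤ q) {n : ℕ}
    (hn : n ≠ 0) : 0 < ∑ d ∈ n.divisors, (moebius (n / d) : ℤ) * (q : ℤ) ^ d := by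
  rw [← Nat.cons_self_properDivisors hn, sum_cons, Nat.div_self (Nat.pos_of_ne_zero hn),
    moebius_apply_one, one_mul]
  have hlow : -∑ d ∈ n.properDivisors, (q : ℤ) ^ d ≤
      ∑ d ∈ n.properDivisors, (moebius (n / d) : ℤ) * (q : ℤ) ^ d := by
    rw [← sum_neg_distrib]
    refine sum_le_sum fun d _ ↦ ?_
    rw [← neg_one_mul]
    exact mul_le_mul_of_nonneg_right (neg_le_of_abs_le abs_moebius_le_one) (by positivity)
  have hgeom : ∑ d ∈ n.properDivisors, (q : ℤ) ^ d < (q : ℤ) ^ n := by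
    exact_mod_cast Nat.geomSum_lt hq fun d hd ↦ (Nat.mem_properDivisors.mp hd).2
  linarith

namespace ProdEq

noncomputable def partialProd (a : ℕ → ℤ) (n : ℕ) : ℤ⟦X⟧ˣ :=
  ∏ k ∈ range n, geomUnit 1 (k + 1) ^ a k

theorem partialProd_mul (a : ℕ → ℤ) (n : ℕ) :
    partialProd a n * ∏ k ∈ range n, geomUnit 1 (k + 1) ^ (-a k).toNat =
      ∏ k ∈ range n, geomUnit 1 (k + 1) ^ (a k).toNat := by
  rw [partialProd, ← prod_mul_distrib]
  refine prod_congr rfl fun k _ ↦ ?_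
  rw [← zpow_natCast, ← zpow_natCast, ← zpow_add]
  congr 1
  omega

theorem _root_.prodEq_iff (a : ℕ → ℤ) :
    ProdEq a ↔ ∀ n, X ^ (n + 1) ∣ (partialProd a n : ℤ⟦X⟧) - (1 - 2 * X) := by
  refine forall_congr' fun n ↦ ?_
  set W := ∏ k ∈ range n, geomUnit (1 : ℤ) (k + 1) ^ (-a k).toNat
  have h : (partialProd a n : ℤ⟦X⟧) - (1 - 2 * X) =
      (∏ k ∈ range n, (1 - X ^ (k + 1) : ℤ⟦X⟧) ^ (a k).toNat -
        (1 - 2 * X) * ∏ k ∈ range n, (1 - X ^ (k + 1) : ℤ⟦X⟧) ^ (-a k).toNat) *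
        (↑W⁻¹ : ℤ⟦X⟧) := by
    rw [← coe_prod_geomUnit_pow, ← coe_prod_geomUnit_pow, ← partialProd_mul, Units.val_mul]
    linear_combination (-(partialProd a n : ℤ⟦X⟧) + (1 - 2 * X)) * W.mul_inv
  rw [h, Units.dvd_mul_right, X_pow_dvd_iff]
  simp only [map_sub, sub_eq_zero, Nat.lt_succ_iff]

/-- Multiplying by `(1 - X^(n+1))^(solution n)` cancels the coefficient of `X^(n+1)` in
`partialProd solution n - (1 - 2X)`, by `X_pow_succ_dvd_mul_geomUnit_zpow_sub`. -/
noncomputable def solution (n : ℕ) : ℤ :=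
  coeff (n + 1)
    ((↑(∏ k ∈ (range n).attach, geomUnit (1 : ℤ) (k + 1) ^ solution k) : ℤ⟦X⟧) - (1 - 2 * X))
decreasing_by exact mem_range.mp k.2

theorem solution_eq (n : ℕ) :
    solution n = coeff (n + 1) ((partialProd solution n : ℤ⟦X⟧) - (1 - 2 * X)) := by
  rw [solution, prod_attach (range n) fun k ↦ geomUnit (1 : ℤ) (k + 1) ^ solution k]
  rfl

theorem _root_.prodEq_solution : ProdEq solution := by
  rw [prodEq_iff]
  intro n
  induction n with
  | zero => exact ⟨2, by simp [partialProd, mul_comm]⟩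
  | succ n ih =>
    rw [partialProd, prod_range_succ, ← partialProd, Units.val_mul, solution_eq]
    exact X_pow_succ_dvd_mul_geomUnit_zpow_sub (by simp) ih

variable {a : ℕ → ℤ}

theorem sum_divisors_mul_eq (h : ProdEq a) {N : ℕ} (hN : N ≠ 0) :
    ∑ d ∈ N.divisors, (d : ℤ) * a (d - 1) = 2 ^ N := by
  have hdvd := (prodEq_iff a).mp h N
  rw [← coe_geomUnit_two_one] at hdvd
  have hcoeff := X_pow_dvd_iff.mp (X_pow_dvd_xLogDeriv_sub hdvd) N N.lt_succ_self
  rw [map_sub, sub_eq_zero, partialProd, xLogDeriv_prod, map_sum] at hcoeff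
  simp only [xLogDeriv_zpow, map_zsmul, coeff_xLogDeriv_geomUnit _ _ hN, one_pow, mul_one,
    one_dvd, if_true, Nat.div_one, Nat.cast_one, one_mul, smul_eq_mul, mul_ite, mul_zero] at hcoeff
  rw [Nat.sum_divisors_eq_sum_range, ← neg_inj, ← hcoeff, ← sum_neg_distrib]
  refine sum_congr rfl fun k _ ↦ ?_
  split_ifs
  · push_cast
    ring
  · exact neg_zero

theorem mul_eq_sum_moebius (h : ProdEq a) (k : ℕ) :
    ((k : ℤ) + 1) * a k
      = ∑ d ∈ Nat.divisors (k + 1), ArithmeticFunction.moebius ((k + 1) / d) * 2 ^ d := by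
  have hinv := (ArithmeticFunction.sum_eq_iff_sum_mul_moebius_eq
      (f := fun d ↦ (d : ℤ) * a (d - 1)) (g := fun n ↦ (2 : ℤ) ^ n)).mp
      (fun _ hN ↦ h.sum_divisors_mul_eq hN.ne') (k + 1) k.succ_pos
  simp only [Int.cast_id, Nat.add_sub_cancel] at hinv
  rw [Nat.sum_divisorsAntidiagonal' fun i j ↦ ArithmeticFunction.moebius i * 2 ^ j] at hinv
  push_cast at hinv
  exact hinv.symm

end ProdEq

theorem stmt10 :
    (∃! a : ℕ → ℤ, ProdEq a) ∧
    ∀ a : ℕ → ℤ, ProdEq a → ∀ k : ℕ,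
      0 < a k ∧
      ((k : ℤ) + 1) * a k
        = ∑ d ∈ Nat.divisors (k + 1), ArithmeticFunction.moebius ((k + 1) / d) * 2 ^ d := by
  refine ⟨⟨ProdEq.solution, prodEq_solution, fun b hb ↦ funext fun k ↦ ?_⟩,
    fun a ha k ↦ ⟨?_, ha.mul_eq_sum_moebius k⟩⟩
  · exact mul_left_cancel₀ (by positivity)
      ((hb.mul_eq_sum_moebius k).trans (prodEq_solution.mul_eq_sum_moebius k).symm)
  · refine pos_of_mul_pos_right ?_ (by positivity : (0 : ℤ) ≤ k + 1)
    rw [ha.mul_eq_sum_moebius k]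
    exact_mod_cast ArithmeticFunction.sum_divisors_moebius_mul_pow_pos le_rfl k.succ_ne_zero
end

section
/- Let V = ℝ², a = (1, √3), b = (1, −√3). Then in the group ring ℤ[V], ((1 − e^{2a})(1 − e^{2b})(1 − e^{a+b})) / ((1 − e^a)(1 − e^b)) = 1 + e^a + e^b − e^{2a+b} − e^{a+2b} − e^{2a+2b}, and each of the six exponent vectors 0, a, b, 2a+b, a+2b, 2a+2b lies on the circle of center (2,0) and radius 2 in ℝ². -/
/-- `e^v` in the group ring `ℤ[ℝ²]`. -/
noncomputable def egr (v : EuclideanSpace ℝ (Fin 2)) :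
    AddMonoidAlgebra ℤ (EuclideanSpace ℝ (Fin 2)) :=
  AddMonoidAlgebra.single v 1

lemma egr_add (v w : EuclideanSpace ℝ (Fin 2)) : egr (v + w) = egr v * egr w := by
  simp [egr, AddMonoidAlgebra.single_mul_single]

lemma norm_aux (x y : ℝ) (h : x ^ 2 + y ^ 2 = 4) :
    ‖(EuclideanSpace.equiv (Fin 2) ℝ).symm ![x, y]‖ = 2 := by
  rw [EuclideanSpace.norm_eq]
  simp [Fin.sum_univ_two, ← sq, h]
  rw [show (4:ℝ) = 2 ^ 2 by norm_num, Real.sqrt_sq (by norm_num)]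

theorem stmt12
    (a b : EuclideanSpace ℝ (Fin 2))
    (ha : a = (EuclideanSpace.equiv (Fin 2) ℝ).symm ![1, Real.sqrt 3])
    (hb : b = (EuclideanSpace.equiv (Fin 2) ℝ).symm ![1, -Real.sqrt 3]) :
    (1 - egr (2 • a)) * (1 - egr (2 • b)) * (1 - egr (a + b))
      = (1 - egr a) * (1 - egr b) *
        (1 + egr a + egr b - egr (2 • a + b) - egr (a + 2 • b) - egr (2 • a + 2 • b)) ∧
    ∀ v ∈ ({0, a, b, 2 • a + b, a + 2 • b, 2 • a + 2 • b} :
        Set (EuclideanSpace ℝ (Fin 2))),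
      ‖v - (EuclideanSpace.equiv (Fin 2) ℝ).symm ![2, 0]‖ = 2 := by
  have h3 : Real.sqrt 3 ^ 2 = 3 := Real.sq_sqrt (by nlinarith)
  constructor
  · simp only [two_smul, egr_add]
    ring
  · intro v hv
    have key : ∀ p : EuclideanSpace ℝ (Fin 2), ∀ x y : ℝ,
        p = (EuclideanSpace.equiv (Fin 2) ℝ).symm ![x, y] → (x - 2) ^ 2 + y ^ 2 = 4 →
        ‖p - (EuclideanSpace.equiv (Fin 2) ℝ).symm ![2, 0]‖ = 2 := by
      intro p x y hp hxy
      have : p - (EuclideanSpace.equiv (Fin 2) ℝ).symm ![2, 0]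
          = (EuclideanSpace.equiv (Fin 2) ℝ).symm ![x - 2, y] := by
        subst hp
        ext i
        fin_cases i <;> simp
      rw [this]
      exact norm_aux _ _ hxy
    rcases hv with h | h | h | h | h | h <;> subst h
    · exact key _ 0 0 (by ext i; fin_cases i <;> simp) (by nlinarith)
    · exact key _ 1 (Real.sqrt 3) ha (by nlinarith [h3])
    · exact key _ 1 (-Real.sqrt 3) hb (by nlinarith [h3])
    · exact key _ 3 (Real.sqrt 3) (by subst ha hb; ext i; fin_cases i <;> simp <;> ring)
        (by nlinarith [h3])
    · exact key _ 3 (-Real.sqrt 3) (by subst ha hb; ext i; fin_cases i <;> simp <;> ring)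
        (by nlinarith [h3])
    · exact key _ 4 0 (by subst ha hb; ext i; fin_cases i <;> simp <;> ring)
        (by nlinarith)
end

section
/- If R̃ is an affine root system of rank N in Ṽ = ℝ ⊕ V, then p₂(R̃) ⊆ V is a finite root system of rank N; in particular p₂(R̃) is finite and min{ ‖p₂(α̃)‖ : α̃ ∈ R̃ } > 0. -/
open scoped RealInnerProductSpace

section
variable {V : Type*} [NormedAddCommGroup V] [InnerProductSpace ℝ V]

theorem aux_parallel14 (S : Set V) (hS0 : ∀ α ∈ S, α ≠ 0)
    (hS : ∀ α ∈ S, ∀ β ∈ S, ∃ k : ℤ, 2 * ⟪α, β⟫ = (k : ℝ) * ‖α‖ ^ 2)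
    {α β : V} (hα : α ∈ S) (hβ : β ∈ S)
    (h : ‖α‖⁻¹ • α = ‖β‖⁻¹ • β) :
    β = α ∨ β = (2:ℝ) • α ∨ β = (2:ℝ)⁻¹ • α := by
  have hα0 : ‖α‖ ≠ 0 := norm_ne_zero_iff.mpr (hS0 α hα)
  have hβ0 : ‖β‖ ≠ 0 := norm_ne_zero_iff.mpr (hS0 β hβ)
  set t : ℝ := ‖β‖ * ‖α‖⁻¹ with ht
  have htpos : 0 < t := by
    have : 0 < ‖β‖ := lt_of_le_of_ne (norm_nonneg _) (Ne.symm hβ0)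
    have h2 : 0 < ‖α‖ := lt_of_le_of_ne (norm_nonneg _) (Ne.symm hα0)
    positivity
  have hβα : β = t • α := by
    have h1 : ‖β‖ • (‖β‖⁻¹ • β) = ‖β‖ • (‖α‖⁻¹ • α) := by rw [h]
    rw [smul_smul, mul_inv_cancel₀ hβ0, one_smul, smul_smul] at h1
    exact h1
  have hip : ⟪α, β⟫ = t * ‖α‖ ^ 2 := by
    rw [hβα, real_inner_smul_right, real_inner_self_eq_norm_sq]
  obtain ⟨m, hm⟩ := hS α hα β hβ
  obtain ⟨n, hn⟩ := hS β hβ α hα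
  have hip' : ⟪β, α⟫ = t * ‖α‖ ^ 2 := by rw [real_inner_comm]; exact hip
  have hβsq : ‖β‖ ^ 2 = t ^ 2 * ‖α‖ ^ 2 := by
    rw [hβα, norm_smul, Real.norm_eq_abs, abs_of_pos htpos]; ring
  have hA : 2 * t = (m:ℝ) := by
    rw [hip] at hm
    have h2 : (2 * t) * ‖α‖^2 = (m:ℝ) * ‖α‖^2 := by linarith
    exact mul_right_cancel₀ (pow_ne_zero 2 hα0) h2
  have hB : 2 * t = (n:ℝ) * t ^ 2 := by
    rw [hip', hβsq] at hn
    have h2 : (2 * t) * ‖α‖^2 = ((n:ℝ) * t^2) * ‖α‖^2 := by linarith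
    exact mul_right_cancel₀ (pow_ne_zero 2 hα0) h2
  have ht0 : t ≠ 0 := ne_of_gt htpos
  have hnt : (n:ℝ) * t = 2 := by
    have h2 : (n * t) * t = 2 * t := by nlinarith [hB]
    exact mul_right_cancel₀ ht0 h2
  have hmn : (m:ℝ) * n = 4 := by nlinarith [hA, hnt]
  have hmpos : 0 < (m:ℝ) := by rw [← hA]; positivity
  have hmZ : 0 < m := by exact_mod_cast hmpos
  have hmnZ : m * n = 4 := by exact_mod_cast hmn
  have hnZ : 0 < n := by nlinarith [hmZ, hmnZ]
  have hm4 : m ≤ 4 := by nlinarith [hmZ, hnZ, hmnZ]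
  interval_cases m
  · -- m = 1, t = 1/2
    right; right
    have hn4 : n = 4 := by omega
    rw [hn4] at hnt; push_cast at hnt
    have : t = 2⁻¹ := by linarith
    rw [hβα, this]
  · -- m = 2
    left
    have : t = 1 := by push_cast at hA; linarith
    rw [hβα, this, one_smul]
  · omega
  · -- m = 4
    right; left
    have : t = 2 := by push_cast at hA; linarith
    rw [hβα, this]

end

section
variable {V : Type*} [NormedAddCommGroup V] [InnerProductSpace ℝ V]

theorem aux_angle14 (S : Set V) (hS0 : ∀ α ∈ S, α ≠ 0)
    (hS : ∀ α ∈ S, ∀ β ∈ S, ∃ k : ℤ, 2 * ⟪α, β⟫ = (k : ℝ) * ‖α‖ ^ 2)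
    {α β : V} (hα : α ∈ S) (hβ : β ∈ S)
    (h : (7:ℝ)/8 ≤ ⟪‖α‖⁻¹ • α, ‖β‖⁻¹ • β⟫) :
    ‖α‖⁻¹ • α = ‖β‖⁻¹ • β := by
  have hα0 : (0:ℝ) < ‖α‖ := norm_pos_iff.mpr (hS0 α hα)
  have hβ0 : (0:ℝ) < ‖β‖ := norm_pos_iff.mpr (hS0 β hβ)
  set u := ‖α‖⁻¹ • α with hu
  set v := ‖β‖⁻¹ • β with hv
  have hnu : ‖u‖ = 1 := by
    rw [hu, norm_smul, Real.norm_eq_abs, abs_of_pos (inv_pos.mpr hα0),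
      inv_mul_cancel₀ (ne_of_gt hα0)]
  have hnv : ‖v‖ = 1 := by
    rw [hv, norm_smul, Real.norm_eq_abs, abs_of_pos (inv_pos.mpr hβ0),
      inv_mul_cancel₀ (ne_of_gt hβ0)]
  set c : ℝ := ⟪u, v⟫ with hc
  have hc1 : c ≤ 1 := by
    have := real_inner_le_norm u v
    rw [hnu, hnv] at this; simpa using this
  by_cases hceq : c = 1
  · -- u = v
    have : ‖u - v‖ ^ 2 = 0 := by
      rw [norm_sub_sq_real, hnu, hnv, ← hc, hceq]; ring
    have h0 : u - v = 0 := by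
      have := pow_eq_zero_iff (n := 2) (by norm_num) |>.mp
        (by rw [← this])
      exact norm_eq_zero.mp this
    exact sub_eq_zero.mp h0
  · exfalso
    have hclt : c < 1 := lt_of_le_of_ne hc1 hceq
    have hcuv : ⟪α, β⟫ = ‖α‖ * ‖β‖ * c := by
      rw [hc, hu, hv, real_inner_smul_left, real_inner_smul_right]
      field_simp
    obtain ⟨m, hm⟩ := hS α hα β hβ
    obtain ⟨n, hn⟩ := hS β hβ α hα
    rw [real_inner_comm] at hn
    rw [hcuv] at hm hn
    have hmn : (m:ℝ) * n = 4 * c ^ 2 := by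
      have key0 : (2*(‖α‖*‖β‖*c)) * (2*(‖α‖*‖β‖*c))
          = ((m:ℝ)*‖α‖^2) * ((n:ℝ)*‖β‖^2) := congrArg₂ (· * ·) hm hn
      have key : ((m:ℝ) * n) * (‖α‖^2 * ‖β‖^2) = (4 * c^2) * (‖α‖^2 * ‖β‖^2) := by
        linear_combination -key0
      have hne : (‖α‖^2 * ‖β‖^2) ≠ 0 := by positivity
      exact mul_right_cancel₀ hne key
    have h3 : (3:ℝ) < (m:ℝ) * n := by nlinarith [h, hmn]
    have h4 : (m:ℝ) * n < 4 := by
      have hcpos : (0:ℝ) < c := by linarith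
      nlinarith [hmn, hclt, hcpos]
    have h3' : (3:ℤ) < m * n := by exact_mod_cast h3
    have h4' : m * n < 4 := by exact_mod_cast h4
    omega

end

section
variable {V : Type*} [NormedAddCommGroup V] [InnerProductSpace ℝ V]

theorem aux_parallel14' (S : Set V) (hS0 : ∀ α ∈ S, α ≠ 0)
    (hS : ∀ α ∈ S, ∀ β ∈ S, ∃ k : ℤ, 2 * ⟪α, β⟫ = (k : ℝ) * ‖α‖ ^ 2)
    {α β : V} (hα : α ∈ S) (hβ : β ∈ S)
    (h : ‖α‖⁻¹ • α = ‖β‖⁻¹ • β) :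
    β = α ∨ β = (2:ℝ) • α ∨ β = (2:ℝ)⁻¹ • α := aux_parallel14 S hS0 hS hα hβ h

theorem aux_angle14' (S : Set V) (hS0 : ∀ α ∈ S, α ≠ 0)
    (hS : ∀ α ∈ S, ∀ β ∈ S, ∃ k : ℤ, 2 * ⟪α, β⟫ = (k : ℝ) * ‖α‖ ^ 2)
    {α β : V} (hα : α ∈ S) (hβ : β ∈ S)
    (h : (7:ℝ)/8 ≤ ⟪‖α‖⁻¹ • α, ‖β‖⁻¹ • β⟫) :
    ‖α‖⁻¹ • α = ‖β‖⁻¹ • β := aux_angle14 S hS0 hS hα hβ h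

theorem aux_finite14 [FiniteDimensional ℝ V] (S : Set V)
    (hS0 : ∀ α ∈ S, α ≠ 0)
    (hS : ∀ α ∈ S, ∀ β ∈ S, ∃ k : ℤ, 2 * ⟪α, β⟫ = (k : ℝ) * ‖α‖ ^ 2) :
    S.Finite := by
  classical
  set g : V → V := fun x => ‖x‖⁻¹ • x with hg
  have hunit : ∀ α ∈ S, g α ∈ Metric.sphere (0:V) 1 := by
    intro α hα
    have hα0 : (0:ℝ) < ‖α‖ := norm_pos_iff.mpr (hS0 α hα)
    simp only [hg, mem_sphere_iff_norm, sub_zero, norm_smul, Real.norm_eq_abs,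
      abs_of_pos (inv_pos.mpr hα0)]
    exact inv_mul_cancel₀ (ne_of_gt hα0)
  -- image is finite
  have himg : (g '' S).Finite := by
    by_contra hinf
    obtain ⟨t, htf, htc⟩ := Metric.totallyBounded_iff.mp
      (isCompact_sphere (0:V) 1).totallyBounded 4⁻¹ (by norm_num)
    have hcover : g '' S ⊆ ⋃ y ∈ t, (g '' S ∩ Metric.ball y 4⁻¹) := by
      intro u hu
      obtain ⟨α, hα, rfl⟩ := hu
      have := htc (hunit α hα)
      simp only [Set.mem_iUnion] at this ⊢
      obtain ⟨y, hy, hb⟩ := this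
      exact ⟨y, hy, ⟨α, hα, rfl⟩, hb⟩
    have hex : ∃ y ∈ t, ¬ (g '' S ∩ Metric.ball y 4⁻¹).Finite := by
      by_contra hall
      push_neg at hall
      exact hinf ((htf.biUnion (fun y hy => not_not.mp (not_not_intro (hall y hy)))).subset hcover)
    obtain ⟨y, hy, hYinf⟩ := hex
    obtain ⟨u₁, hu₁, u₂, hu₂, hne⟩ := (Set.Infinite.nontrivial hYinf)
    obtain ⟨α, hα, rfl⟩ := hu₁.1
    obtain ⟨β, hβ, rfl⟩ := hu₂.1
    apply hne
    apply aux_angle14' S hS0 hS hα hβ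
    -- distance bound
    have hd : ‖g α - g β‖ < 2⁻¹ := by
      have h1 := hu₁.2
      have h2 := hu₂.2
      rw [Metric.mem_ball] at h1 h2
      calc ‖g α - g β‖ = dist (g α) (g β) := (dist_eq_norm _ _).symm
        _ ≤ dist (g α) y + dist y (g β) := dist_triangle _ _ _
        _ < 4⁻¹ + 4⁻¹ := by rw [dist_comm y (g β)]; linarith
        _ = 2⁻¹ := by norm_num
    have hn1 : ‖g α‖ = 1 := by simpa using hunit α hα
    have hn2 : ‖g β‖ = 1 := by simpa using hunit β hβ
    have hsq := norm_sub_sq_real (g α) (g β)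
    rw [hn1, hn2] at hsq
    have : ‖g α - g β‖ ^ 2 < 4⁻¹ := by nlinarith [norm_nonneg (g α - g β), hd]
    simp only [hg] at hsq this ⊢
    nlinarith [hsq, this]
  -- fibers are finite
  have hfib : ∀ u ∈ g '' S, ({γ ∈ S | g γ = u}).Finite := by
    intro u hu
    obtain ⟨α₀, hα₀, rfl⟩ := hu
    apply Set.Finite.subset
      (((Set.finite_singleton ((2:ℝ)⁻¹ • α₀)).insert ((2:ℝ) • α₀)).insert α₀)
    rintro γ ⟨hγS, hγg⟩
    have := aux_parallel14' S hS0 hS hα₀ hγS hγg.symm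
    simp only [Set.mem_insert_iff, Set.mem_singleton_iff]
    tauto
  have hsub : S ⊆ ⋃ u ∈ g '' S, {γ ∈ S | g γ = u} := by
    intro α hα
    simp only [Set.mem_iUnion]
    exact ⟨g α, ⟨α, hα, rfl⟩, hα, rfl⟩
  exact (himg.biUnion hfib).subset hsub

end

theorem stmt14 {V : Type*} [NormedAddCommGroup V] [InnerProductSpace ℝ V]
    [FiniteDimensional ℝ V]
    (R : Set (ℝ × V))
    (hpos : ∀ a ∈ R, a.2 ≠ 0)
    (hspan : Submodule.span ℝ R = ⊤)
    (hrefl : ∀ a ∈ R, ∀ b ∈ R, b - (2 * ⟪a.2, b.2⟫ / ‖a.2‖ ^ 2) • a ∈ R)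
    (hint : ∀ a ∈ R, ∀ b ∈ R, ∃ k : ℤ, 2 * ⟪a.2, b.2⟫ = (k : ℝ) * ‖a.2‖ ^ 2)
    (hproper : ∀ K₁ K₂ : Set V, IsCompact K₁ → IsCompact K₂ →
      {w : Equiv.Perm V |
        w ∈ Subgroup.closure
          {g : Equiv.Perm V | ∃ a ∈ R,
            ∀ x : V, g x = x - (2 * (⟪a.2, x⟫ + a.1) / ‖a.2‖ ^ 2) • a.2} ∧
        ((w '' K₁) ∩ K₂).Nonempty}.Finite) :
    (0 : V) ∉ Prod.snd '' R ∧
    Submodule.span ℝ (Prod.snd '' R) = ⊤ ∧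
    (∀ α ∈ Prod.snd '' R, ∀ β ∈ Prod.snd '' R,
      β - (2 * ⟪α, β⟫ / ‖α‖ ^ 2) • α ∈ Prod.snd '' R) ∧
    (∀ α ∈ Prod.snd '' R, ∀ β ∈ Prod.snd '' R,
      ∃ k : ℤ, 2 * ⟪α, β⟫ = (k : ℝ) * ‖α‖ ^ 2) ∧
    (Prod.snd '' R).Finite ∧
    ∃ ε : ℝ, 0 < ε ∧ (∀ a ∈ R, ε ≤ ‖a.2‖) ∧ ∃ a ∈ R, ‖a.2‖ = ε := by
  classical
  set S : Set V := Prod.snd '' R with hSdef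
  have hS0 : ∀ α ∈ S, α ≠ 0 := by
    rintro α ⟨a, ha, rfl⟩
    exact hpos a ha
  have hSnorm : ∀ α ∈ S, ∀ β ∈ S, ∃ k : ℤ, 2 * ⟪α, β⟫ = (k : ℝ) * ‖α‖ ^ 2 := by
    rintro α ⟨a, ha, rfl⟩ β ⟨b, hb, rfl⟩
    exact hint a ha b hb
  have hzero : (0 : V) ∉ S := fun h => hS0 0 h rfl
  have hspan' : Submodule.span ℝ S = ⊤ := by
    have : S = (LinearMap.snd ℝ ℝ V) '' R := rfl
    rw [this, ← Submodule.map_span, hspan, Submodule.map_top,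
      LinearMap.range_eq_top]
    exact fun v => ⟨(0, v), rfl⟩
  have hrefl' : ∀ α ∈ S, ∀ β ∈ S, β - (2 * ⟪α, β⟫ / ‖α‖ ^ 2) • α ∈ S := by
    rintro α ⟨a, ha, rfl⟩ β ⟨b, hb, rfl⟩
    refine ⟨b - (2 * ⟪a.2, b.2⟫ / ‖a.2‖ ^ 2) • a, hrefl a ha b hb, ?_⟩
    simp
  have hSfin : S.Finite := aux_finite14 S hS0 hSnorm
  have hRne : R.Nonempty := by
    by_contra hRe
    rw [Set.not_nonempty_iff_eq_empty] at hRe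
    rw [hRe, Submodule.span_empty] at hspan
    have : ((1:ℝ), (0:V)) ∈ (⊥ : Submodule ℝ (ℝ × V)) := by rw [hspan]; trivial
    rw [Submodule.mem_bot] at this
    exact one_ne_zero (congrArg Prod.fst this)
  refine ⟨hzero, hspan', hrefl', hSnorm, hSfin, ?_⟩
  -- minimum norm
  set F : Finset ℝ := hSfin.toFinset.image (fun α => ‖α‖) with hF
  have hFne : F.Nonempty := by
    obtain ⟨a, ha⟩ := hRne
    exact ⟨‖a.2‖, Finset.mem_image.mpr ⟨a.2, hSfin.mem_toFinset.mpr ⟨a, ha, rfl⟩, rfl⟩⟩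
  refine ⟨F.min' hFne, ?_, ?_, ?_⟩
  · obtain ⟨α, hα, hαe⟩ := Finset.mem_image.mp (F.min'_mem hFne)
    rw [← hαe]
    exact norm_pos_iff.mpr (hS0 α (hSfin.mem_toFinset.mp hα))
  · intro a ha
    exact F.min'_le _ (Finset.mem_image.mpr ⟨a.2, hSfin.mem_toFinset.mpr ⟨a, ha, rfl⟩, rfl⟩)
  · obtain ⟨α, hα, hαe⟩ := Finset.mem_image.mp (F.min'_mem hFne)
    obtain ⟨a, ha, rfl⟩ := hSfin.mem_toFinset.mp hα
    exact ⟨a, ha, hαe⟩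
end
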